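/- arXiv:math/0006174 — 6 statements merged into one kernel-verified Lean document; each statement's English description precedes it below -/
import Mathlib

section
/- For every simple root α ∈ Δ: d_1(α) + d_{h_α}(α) = 2g/g_α, where h_α is the coefficient of α in the highest root, g_α the coefficient of α∨ in the highest coroot, and g the dual Coxeter number. -/
open scoped RealInnerProductSpace

attribute [local instance] Classical.propDecidable

noncomputable section

/-- The coroot `α∨ = (2/⟨α,α⟩) • α` of a vector `α` in a real inner product space
(using the inner product to identify `V` with `V*`). -/
def coroot {V : Type*} [NormedAddCommGroup V] [InnerProductSpace ℝ V] (α : V) : V :=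
  (2 / ⟪α, α⟫) • α

/-- A finite, reduced, irreducible, crystallographic root system in the real inner
product space `V`.  (The Weyl group automatically acts by isometries, since the
reflections are defined via the inner product.) -/
structure IsRootSystem {V : Type*} [NormedAddCommGroup V] [InnerProductSpace ℝ V]
    (R : Finset V) : Prop where
  nonempty : R.Nonempty
  zero_not_mem : (0 : V) ∉ R
  span_eq_top : Submodule.span ℝ (R : Set V) = ⊤
  reduced : ∀ α ∈ R, ∀ t : ℝ, t • α ∈ R → t = 1 ∨ t = -1
  reflect_mem : ∀ α ∈ R, ∀ β ∈ R, β - ⟪β, coroot α⟫ • α ∈ R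
  crystallographic : ∀ α ∈ R, ∀ β ∈ R, ∃ n : ℤ, ⟪β, coroot α⟫ = (n : ℝ)
  irreducible : ∀ S : Set V, (∀ α ∈ R, ∀ β ∈ R, α ∈ S → ⟪α, β⟫ ≠ 0 → β ∈ S) →
    (∃ α ∈ R, α ∈ S) → ∀ β ∈ R, β ∈ S

/-- `Δ` is a base of simple roots for the root system `R`: it is a linearly
independent subset of `R` and every root is a nonnegative or nonpositive integral
combination of elements of `Δ`. -/
structure IsBase {V : Type*} [NormedAddCommGroup V] [InnerProductSpace ℝ V]
    (R Δ : Finset V) : Prop where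
  subset : Δ ⊆ R
  indep : LinearIndependent ℝ (fun β : Δ => (β : V))
  expand : ∀ β ∈ R, (∃ c : V → ℕ, β = ∑ δ ∈ Δ, (c δ : ℝ) • δ) ∨
    (∃ c : V → ℕ, β = -(∑ δ ∈ Δ, (c δ : ℝ) • δ))

namespace Aux11

open Finset

variable {V : Type*} [NormedAddCommGroup V] [InnerProductSpace ℝ V]
variable {R Δ : Finset V} {θ α ϖ ϖv : V}

lemma root_norm_pos (hR : IsRootSystem R) {β : V} (hβ : β ∈ R) : (0:ℝ) < ⟪β, β⟫ := by
  have h0 : β ≠ 0 := fun e => hR.zero_not_mem (e ▸ hβ)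
  have h1 : ⟪β, β⟫ ≠ 0 := fun e => h0 (inner_self_eq_zero.mp e)
  exact lt_of_le_of_ne real_inner_self_nonneg (Ne.symm h1)

lemma inner_coroot_right (γ x : V) : ⟪x, coroot γ⟫ = 2 / ⟪γ, γ⟫ * ⟪x, γ⟫ := by
  rw [coroot, real_inner_smul_right]

lemma inner_coroot_self {γ : V} (hγ : (0:ℝ) < ⟪γ, γ⟫) : ⟪γ, coroot γ⟫ = 2 := by
  rw [inner_coroot_right]; field_simp

lemma neg_mem (hR : IsRootSystem R) {β : V} (hβ : β ∈ R) : -β ∈ R := by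
  have h2 := hR.reflect_mem β hβ β hβ
  rw [inner_coroot_self (root_norm_pos hR hβ)] at h2
  have h3 : β - (2:ℝ) • β = -β := by rw [two_smul]; abel
  rwa [h3] at h2

lemma coeff_eq (hΔ : IsBase R Δ) {c d : V → ℝ}
    (hcd : ∑ δ ∈ Δ, c δ • δ = ∑ δ ∈ Δ, d δ • δ) {δ : V} (hδ : δ ∈ Δ) : c δ = d δ := by
  have h0 : ∑ δ ∈ Δ, (c δ - d δ) • δ = 0 := by
    simp only [sub_smul, Finset.sum_sub_distrib, hcd, sub_self]
  have h1 : ∑ i ∈ Δ.attach, (c i.1 - d i.1) • (i.1 : V) = 0 := by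
    rw [Finset.sum_attach Δ (fun x => (c x - d x) • x)]; exact h0
  have h2 := linearIndependent_iff'.mp hΔ.indep Δ.attach (fun i => c i.1 - d i.1) h1
    ⟨δ, hδ⟩ (Finset.mem_attach _ _)
  have : c δ - d δ = 0 := h2
  linarith

lemma smul_eq_ite_sum {δ0 : V} (hδ0 : δ0 ∈ Δ) (t : ℝ) :
    t • δ0 = ∑ δ ∈ Δ, (if δ = δ0 then t else 0) • δ := by
  have h1 : ∀ δ ∈ Δ, (if δ = δ0 then t else 0) • δ = if δ = δ0 then t • δ else 0 := by
    intro δ _; split <;> simp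
  rw [Finset.sum_congr rfl h1, Finset.sum_ite_eq' Δ δ0 (fun δ => t • δ), if_pos hδ0]

lemma inner_sum_left (c : V → ℝ) (y : V) :
    ⟪∑ δ ∈ Δ, c δ • δ, y⟫ = ∑ δ ∈ Δ, c δ * ⟪δ, y⟫ := by
  rw [sum_inner]
  exact Finset.sum_congr rfl (fun δ _ => real_inner_smul_left _ _ _)

lemma val_sum (hϖv : ∀ β ∈ Δ, ⟪β, ϖv⟫ = if β = α then 1 else 0) (hα : α ∈ Δ) (c : V → ℝ) :
    ⟪∑ δ ∈ Δ, c δ • δ, ϖv⟫ = c α := by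
  rw [inner_sum_left]
  have h1 : ∀ δ ∈ Δ, c δ * ⟪δ, ϖv⟫ = if δ = α then c δ else 0 := by
    intro δ hδ; rw [hϖv δ hδ]; split <;> ring
  rw [Finset.sum_congr rfl h1, Finset.sum_ite_eq' Δ α c, if_pos hα]

/-- The set of positive roots. -/
def Pos (R Δ : Finset V) : Finset V :=
  R.filter fun β => ∃ c : V → ℕ, β = ∑ δ ∈ Δ, (c δ : ℝ) • δ

lemma Pos_subset : Pos R Δ ⊆ R := Finset.filter_subset _ _

lemma mem_Pos_or (hR : IsRootSystem R) (hΔ : IsBase R Δ) {β : V} (hβ : β ∈ R) :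
    β ∈ Pos R Δ ∨ -β ∈ Pos R Δ := by
  rcases hΔ.expand β hβ with hc | ⟨c, hc⟩
  · exact Or.inl (Finset.mem_filter.mpr ⟨hβ, hc⟩)
  · exact Or.inr (Finset.mem_filter.mpr ⟨neg_mem hR hβ, ⟨c, by rw [hc, neg_neg]⟩⟩)

lemma not_both (hR : IsRootSystem R) (hΔ : IsBase R Δ) {β : V}
    (h1 : β ∈ Pos R Δ) (h2 : -β ∈ Pos R Δ) : False := by
  obtain ⟨hβR, c, hc⟩ := Finset.mem_filter.mp h1
  obtain ⟨_, d, hd⟩ := Finset.mem_filter.mp h2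
  have hsum : ∑ δ ∈ Δ, ((c δ : ℝ) + (d δ : ℝ)) • δ = ∑ δ ∈ Δ, (0:ℝ) • δ := by
    simp only [add_smul, Finset.sum_add_distrib, zero_smul, Finset.sum_const_zero]
    rw [← hc, ← hd]; abel
  have hzero : ∀ δ ∈ Δ, (c δ : ℝ) = 0 := by
    intro δ hδ
    have h3 : (c δ : ℝ) + (d δ : ℝ) = 0 := coeff_eq hΔ hsum hδ
    have h4 : (0:ℝ) ≤ (c δ : ℝ) := Nat.cast_nonneg _
    have h5 : (0:ℝ) ≤ (d δ : ℝ) := Nat.cast_nonneg _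
    linarith
  have hβ0 : β = 0 := by
    rw [hc]
    exact Finset.sum_eq_zero (fun δ hδ => by rw [hzero δ hδ, zero_smul])
  exact hR.zero_not_mem (hβ0 ▸ hβR)

lemma val_nat_of_Pos (hϖv : ∀ β ∈ Δ, ⟪β, ϖv⟫ = if β = α then 1 else 0) (hα : α ∈ Δ)
    {β : V} (hβ : β ∈ Pos R Δ) : ∃ n : ℕ, ⟪β, ϖv⟫ = (n : ℝ) := by
  obtain ⟨_, c, hc⟩ := Finset.mem_filter.mp hβ
  exact ⟨c α, by rw [hc, val_sum hϖv hα]⟩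

lemma val_nonneg_of_Pos (hϖv : ∀ β ∈ Δ, ⟪β, ϖv⟫ = if β = α then 1 else 0) (hα : α ∈ Δ)
    {β : V} (hβ : β ∈ Pos R Δ) : 0 ≤ ⟪β, ϖv⟫ := by
  obtain ⟨n, hn⟩ := val_nat_of_Pos hϖv hα hβ
  rw [hn]; exact Nat.cast_nonneg _

lemma mem_Pos_of_val_pos (hR : IsRootSystem R) (hΔ : IsBase R Δ)
    (hϖv : ∀ β ∈ Δ, ⟪β, ϖv⟫ = if β = α then 1 else 0) (hα : α ∈ Δ)
    {β : V} (hβ : β ∈ R) (hv : 0 < ⟪β, ϖv⟫) : β ∈ Pos R Δ := by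
  rcases mem_Pos_or hR hΔ hβ with hp | hp
  · exact hp
  · exfalso
    have := val_nonneg_of_Pos hϖv hα hp
    rw [inner_neg_left] at this
    linarith

lemma span_base (hR : IsRootSystem R) (hΔ : IsBase R Δ) :
    Submodule.span ℝ (Δ : Set V) = ⊤ := by
  refine top_unique ?_
  rw [← hR.span_eq_top]
  refine Submodule.span_le.mpr ?_
  intro β hβ
  rcases hΔ.expand β hβ with ⟨c, hc⟩ | ⟨c, hc⟩
  · rw [hc]
    exact Submodule.sum_mem _ (fun δ hδ => Submodule.smul_mem _ _ (Submodule.subset_span hδ))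
  · rw [hc]
    exact Submodule.neg_mem _ (Submodule.sum_mem _
      (fun δ hδ => Submodule.smul_mem _ _ (Submodule.subset_span hδ)))

lemma eq_zero_of_orth (hR : IsRootSystem R) (hΔ : IsBase R Δ) {x : V}
    (hx : ∀ δ ∈ Δ, ⟪x, δ⟫ = 0) : x = 0 := by
  let K : Submodule ℝ V :=
    { carrier := {y | ⟪x, y⟫ = 0}
      add_mem' := by
        intro a b ha hb
        simp only [Set.mem_setOf_eq, inner_add_right] at *
        rw [ha, hb]; ring
      zero_mem' := by simp
      smul_mem' := by
        intro c y hy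
        simp only [Set.mem_setOf_eq, real_inner_smul_right] at *
        rw [hy]; ring }
  have hK : Submodule.span ℝ (Δ : Set V) ≤ K := Submodule.span_le.mpr (fun δ hδ => hx δ hδ)
  have hxK : x ∈ K := by
    have : x ∈ Submodule.span ℝ (Δ : Set V) := by rw [span_base hR hΔ]; trivial
    exact hK this
  exact inner_self_eq_zero.mp hxK

lemma theta_dominant (hR : IsRootSystem R) (hΔ : IsBase R Δ) (hθR : θ ∈ R)
    (hθhigh : ∀ β ∈ R, ∃ c : V → ℕ, θ - β = ∑ δ ∈ Δ, (c δ : ℝ) • δ)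
    {δ : V} (hδ : δ ∈ Δ) : 0 ≤ ⟪θ, δ⟫ := by
  by_contra hlt
  push_neg at hlt
  have hδR := hΔ.subset hδ
  have hd : (0:ℝ) < ⟪δ, δ⟫ := root_norm_pos hR hδR
  have htneg : ⟪θ, coroot δ⟫ < 0 := by
    rw [inner_coroot_right]
    exact mul_neg_of_pos_of_neg (by positivity) hlt
  have hs : θ - ⟪θ, coroot δ⟫ • δ ∈ R := hR.reflect_mem δ hδR θ hθR
  obtain ⟨c, hc⟩ := hθhigh _ hs
  have hc' : θ - (θ - ⟪θ, coroot δ⟫ • δ) = ⟪θ, coroot δ⟫ • δ := by abel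
  rw [hc'] at hc
  rw [smul_eq_ite_sum hδ (⟪θ, coroot δ⟫)] at hc
  have h2 : (if δ = δ then ⟪θ, coroot δ⟫ else 0) = (c δ : ℝ) :=
    coeff_eq hΔ hc hδ
  rw [if_pos rfl] at h2
  have := Nat.cast_nonneg (α := ℝ) (c δ)
  linarith

lemma pos_dom (hR : IsRootSystem R) (hΔ : IsBase R Δ) (hθR : θ ∈ R)
    (hθhigh : ∀ β ∈ R, ∃ c : V → ℕ, θ - β = ∑ δ ∈ Δ, (c δ : ℝ) • δ)
    {β : V} (hβ : β ∈ Pos R Δ) : 0 ≤ ⟪β, θ⟫ := by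
  obtain ⟨hβR, c, hc⟩ := Finset.mem_filter.mp hβ
  rw [hc, inner_sum_left]
  refine Finset.sum_nonneg (fun δ hδ => mul_nonneg (Nat.cast_nonneg _) ?_)
  rw [real_inner_comm]
  exact theta_dominant hR hΔ hθR hθhigh hδ

lemma base_mem_Pos (hΔ : IsBase R Δ) {δ : V} (hδ : δ ∈ Δ) : δ ∈ Pos R Δ := by
  refine Finset.mem_filter.mpr ⟨hΔ.subset hδ, ⟨fun x => if x = δ then 1 else 0, ?_⟩⟩
  have h1 : ∑ x ∈ Δ, ((if x = δ then (1:ℕ) else 0 : ℕ) : ℝ) • x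
      = ∑ x ∈ Δ, (if x = δ then (1:ℝ) else 0) • x :=
    Finset.sum_congr rfl (fun x _ => by split <;> simp)
  rw [h1, ← smul_eq_ite_sum hδ (1:ℝ), one_smul]

lemma reflect_pos_mem (hR : IsRootSystem R) (hΔ : IsBase R Δ)
    {δ : V} (hδ : δ ∈ Δ) {β : V} (hβ : β ∈ Pos R Δ) (hne : β ≠ δ) :
    β - ⟪β, coroot δ⟫ • δ ∈ Pos R Δ ∧ β - ⟪β, coroot δ⟫ • δ ≠ δ := by
  obtain ⟨hβR, c, hc⟩ := Finset.mem_filter.mp hβ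
  have hδR := hΔ.subset hδ
  have hsR : β - ⟪β, coroot δ⟫ • δ ∈ R := hR.reflect_mem δ hδR β hβR
  -- β is not a nonnegative multiple of δ supported only at δ
  have hK : ¬ (∀ δ' ∈ Δ, δ' ≠ δ → (c δ' : ℝ) = 0) := by
    intro hall
    have hβδ : β = (c δ : ℝ) • δ := by
      rw [hc]
      rw [Finset.sum_eq_single δ]
      · intro δ' hδ' hne'
        rw [hall δ' hδ' hne', zero_smul]
      · intro habs; exact absurd hδ habs
    have := hR.reduced δ hδR (c δ : ℝ) (by rw [← hβδ]; exact hβR)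
    rcases this with h1 | h1
    · exact hne (by rw [hβδ, h1, one_smul])
    · have := Nat.cast_nonneg (α := ℝ) (c δ); linarith
  constructor
  · rcases mem_Pos_or hR hΔ hsR with hp | hp
    · exact hp
    · exfalso
      obtain ⟨_, d, hd⟩ := Finset.mem_filter.mp hp
      -- -(β - t•δ) = ∑ d, so β + ∑ d = t • δ
      have hsum : ∑ δ' ∈ Δ, ((c δ' : ℝ) + (d δ' : ℝ)) • δ'
          = ∑ δ' ∈ Δ, (if δ' = δ then ⟪β, coroot δ⟫ else 0) • δ' := by
        rw [← smul_eq_ite_sum hδ (⟪β, coroot δ⟫)]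
        simp only [add_smul, Finset.sum_add_distrib]
        rw [← hc, ← hd]
        abel
      apply hK
      intro δ' hδ' hne'
      have h3 := coeff_eq hΔ hsum hδ'
      rw [if_neg hne'] at h3
      have h4 := Nat.cast_nonneg (α := ℝ) (c δ')
      have h5 := Nat.cast_nonneg (α := ℝ) (d δ')
      linarith
  · intro heq
    -- β = (1+t) • δ
    have h6 : β = δ + ⟪β, coroot δ⟫ • δ := sub_eq_iff_eq_add.mp heq
    have hβδ : β = (1 + ⟪β, coroot δ⟫) • δ := by
      rw [add_smul, one_smul]; exact h6
    have := hR.reduced δ hδR (1 + ⟪β, coroot δ⟫) (by rw [← hβδ]; exact hβR)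
    rcases this with h1 | h1
    · have ht0 : ⟪β, coroot δ⟫ = 0 := by linarith
      apply hne
      rw [hβδ, ht0, add_zero, one_smul]
    · have ht2 : ⟪β, coroot δ⟫ = -2 := by linarith
      have hβnd : β = -δ := by rw [hβδ, ht2]; norm_num
      exact not_both hR hΔ hβ (by rw [hβnd, neg_neg]; exact base_mem_Pos hΔ hδ)

lemma refl_invol {γ : V} (hγ : (0:ℝ) < ⟪γ, γ⟫) (x : V) :
    (x - ⟪x, coroot γ⟫ • γ) - ⟪x - ⟪x, coroot γ⟫ • γ, coroot γ⟫ • γ = x := by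
  have h2 : ⟪γ, coroot γ⟫ = 2 := inner_coroot_self hγ
  rw [inner_sub_left, real_inner_smul_left, h2]
  have h3 : ⟪x, coroot γ⟫ - ⟪x, coroot γ⟫ * 2 = -⟪x, coroot γ⟫ := by ring
  rw [h3, neg_smul]
  abel

lemma sum_inner_eq_zero_of_invariant (hR : IsRootSystem R) {γ : V} (hγR : γ ∈ R)
    {C : Finset V} (hC : ∀ β ∈ C, β - ⟪β, coroot γ⟫ • γ ∈ C) :
    ⟪∑ β ∈ C, β, γ⟫ = 0 := by
  have hγp := root_norm_pos hR hγR
  have hγ0 : γ ≠ 0 := fun e => hR.zero_not_mem (e ▸ hγR)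
  have h1 : ∑ β ∈ C, (β - ⟪β, coroot γ⟫ • γ) = ∑ β ∈ C, β :=
    Finset.sum_nbij' (i := fun β => β - ⟪β, coroot γ⟫ • γ)
      (j := fun β => β - ⟪β, coroot γ⟫ • γ) hC hC
      (fun a _ => refl_invol hγp a) (fun a _ => refl_invol hγp a) (fun a _ => rfl)
  have h2 : (∑ β ∈ C, β) - (∑ β ∈ C, ⟪β, coroot γ⟫) • γ = ∑ β ∈ C, β := by
    rw [Finset.sum_smul, ← Finset.sum_sub_distrib]
    exact h1
  have h3 : (∑ β ∈ C, ⟪β, coroot γ⟫) • γ = 0 := by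
    have := sub_eq_self.mp h2
    exact this
  have h4 : ∑ β ∈ C, ⟪β, coroot γ⟫ = 0 := by
    rcases smul_eq_zero.mp h3 with h | h
    · exact h
    · exact absurd h hγ0
  have h5 : ⟪∑ β ∈ C, β, coroot γ⟫ = 0 := by rw [sum_inner]; exact h4
  rw [inner_coroot_right] at h5
  rcases mul_eq_zero.mp h5 with h | h
  · exfalso
    have : 2 / ⟪γ, γ⟫ ≠ 0 := by positivity
    exact this h
  · exact h

lemma eq_smul_coweight (hR : IsRootSystem R) (hΔ : IsBase R Δ)
    (hϖv : ∀ β ∈ Δ, ⟪β, ϖv⟫ = if β = α then 1 else 0) (hα : α ∈ Δ)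
    {x : V} (hx : ∀ δ ∈ Δ, δ ≠ α → ⟪x, δ⟫ = 0) : x = ⟪x, α⟫ • ϖv := by
  have key : x - ⟪x, α⟫ • ϖv = 0 := by
    apply eq_zero_of_orth hR hΔ
    intro δ hδ
    rw [inner_sub_left, real_inner_smul_left, real_inner_comm δ ϖv, hϖv δ hδ]
    by_cases hcase : δ = α
    · subst hcase; rw [if_pos rfl]; ring
    · rw [if_neg hcase, hx δ hδ hcase]; ring
  have := sub_eq_zero.mp key
  exact this

lemma P_inner_coroot (hR : IsRootSystem R) (hΔ : IsBase R Δ) {δ : V} (hδ : δ ∈ Δ) :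
    ⟪∑ β ∈ Pos R Δ, β, coroot δ⟫ = 2 := by
  have hδR := hΔ.subset hδ
  have hδp := root_norm_pos hR hδR
  have hδP : δ ∈ Pos R Δ := base_mem_Pos hΔ hδ
  have herase : ∀ β ∈ (Pos R Δ).erase δ, β - ⟪β, coroot δ⟫ • δ ∈ (Pos R Δ).erase δ := by
    intro β hβ
    obtain ⟨hne, hβP⟩ := Finset.mem_erase.mp hβ
    obtain ⟨h1, h2⟩ := reflect_pos_mem hR hΔ hδ hβP hne
    exact Finset.mem_erase.mpr ⟨h2, h1⟩
  have h0 : ⟪∑ β ∈ (Pos R Δ).erase δ, β, δ⟫ = 0 :=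
    sum_inner_eq_zero_of_invariant hR hδR herase
  have h1 : ⟪∑ β ∈ (Pos R Δ).erase δ, β, coroot δ⟫ = 0 := by
    rw [inner_coroot_right, h0]; ring
  have h2 : ∑ β ∈ Pos R Δ, β = δ + ∑ β ∈ (Pos R Δ).erase δ, β :=
    (Finset.add_sum_erase (Pos R Δ) (fun x => x) hδP).symm
  rw [h2, inner_add_left, h1, inner_coroot_self hδp, add_zero]

lemma theta_norm (hR : IsRootSystem R) (hΔ : IsBase R Δ)
    (hnorm : ∀ γ ∈ R, ⟪γ, γ⟫ ≤ 2) (hnorm' : ∃ γ ∈ R, ⟪γ, γ⟫ = 2)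
    (hθR : θ ∈ R) (hθhigh : ∀ β ∈ R, ∃ c : V → ℕ, θ - β = ∑ δ ∈ Δ, (c δ : ℝ) • δ) :
    ⟪θ, θ⟫ = 2 := by
  obtain ⟨γ0, hγ0R, hγ0n⟩ := hnorm'
  have hPδ : ∀ δ ∈ Δ, 0 < ⟪δ, ∑ β ∈ Pos R Δ, β⟫ := by
    intro δ hδ
    have h1 := P_inner_coroot hR hΔ hδ
    rw [inner_coroot_right] at h1
    have hδp := root_norm_pos hR (hΔ.subset hδ)
    have h2 : ⟪∑ β ∈ Pos R Δ, β, δ⟫ = ⟪δ, δ⟫ := by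
      field_simp at h1
      linarith
    rw [real_inner_comm δ (∑ β ∈ Pos R Δ, β)] at h2
    rw [h2]
    exact hδp
  have hFne : (R.filter (fun β => ⟪β, β⟫ = 2)).Nonempty :=
    ⟨γ0, Finset.mem_filter.mpr ⟨hγ0R, hγ0n⟩⟩
  obtain ⟨γ, hγF, hmax⟩ := Finset.exists_max_image (R.filter (fun β => ⟪β, β⟫ = 2))
    (fun β => ⟪β, ∑ β ∈ Pos R Δ, β⟫) hFne
  obtain ⟨hγR, hγn⟩ := Finset.mem_filter.mp hγF
  have hdom : ∀ δ ∈ Δ, 0 ≤ ⟪γ, δ⟫ := by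
    intro δ hδ
    by_contra hlt; push_neg at hlt
    have hδR := hΔ.subset hδ
    have hδp := root_norm_pos hR hδR
    have htneg : ⟪γ, coroot δ⟫ < 0 := by
      rw [inner_coroot_right]
      exact mul_neg_of_pos_of_neg (by positivity) hlt
    have hsR : γ - ⟪γ, coroot δ⟫ • δ ∈ R := hR.reflect_mem δ hδR γ hγR
    have ht' : ⟪γ, coroot δ⟫ * ⟪δ, δ⟫ = 2 * ⟪γ, δ⟫ := by
      rw [inner_coroot_right]; field_simp
    have hsn : ⟪γ - ⟪γ, coroot δ⟫ • δ, γ - ⟪γ, coroot δ⟫ • δ⟫ = 2 := by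
      rw [inner_sub_left, inner_sub_right, inner_sub_right, real_inner_smul_left,
        real_inner_smul_left, real_inner_smul_right, real_inner_smul_right,
        real_inner_comm γ δ]
      linear_combination hγn + ⟪γ, coroot δ⟫ * ht'
    have hsF : γ - ⟪γ, coroot δ⟫ • δ ∈ R.filter (fun β => ⟪β, β⟫ = 2) :=
      Finset.mem_filter.mpr ⟨hsR, hsn⟩
    have hle := hmax _ hsF
    have hexp : ⟪γ - ⟪γ, coroot δ⟫ • δ, ∑ β ∈ Pos R Δ, β⟫
        = ⟪γ, ∑ β ∈ Pos R Δ, β⟫ - ⟪γ, coroot δ⟫ * ⟪δ, ∑ β ∈ Pos R Δ, β⟫ := by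
      rw [inner_sub_left, real_inner_smul_left]
    have hPδpos := hPδ δ hδ
    rw [hexp] at hle
    nlinarith
  obtain ⟨c, hc⟩ := hθhigh γ hγR
  have h1 : 0 ≤ ⟪θ - γ, θ⟫ := by
    rw [hc, inner_sum_left]
    exact Finset.sum_nonneg (fun δ hδ => mul_nonneg (Nat.cast_nonneg _)
      (by rw [real_inner_comm]; exact theta_dominant hR hΔ hθR hθhigh hδ))
  have h2 : 0 ≤ ⟪θ - γ, γ⟫ := by
    rw [hc, inner_sum_left]
    exact Finset.sum_nonneg (fun δ hδ => mul_nonneg (Nat.cast_nonneg _)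
      (by rw [real_inner_comm]; exact hdom δ hδ))
  rw [inner_sub_left] at h1 h2
  rw [real_inner_comm γ θ] at h2
  have h4 := hnorm θ hθR
  linarith

lemma coroot_theta (hθn : ⟪θ, θ⟫ = 2) : coroot θ = θ := by
  rw [coroot, hθn]
  norm_num

lemma pairing_cases (hR : IsRootSystem R) (hΔ : IsBase R Δ)
    (hnorm : ∀ γ ∈ R, ⟪γ, γ⟫ ≤ 2) (hθR : θ ∈ R)
    (hθhigh : ∀ β ∈ R, ∃ c : V → ℕ, θ - β = ∑ δ ∈ Δ, (c δ : ℝ) • δ)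
    (hθn : ⟪θ, θ⟫ = 2) {β : V} (hβ : β ∈ Pos R Δ) :
    ⟪β, θ⟫ = 0 ∨ ⟪β, θ⟫ = 1 ∨ ⟪β, θ⟫ = 2 := by
  obtain ⟨n, hn⟩ := hR.crystallographic θ hθR β (Pos_subset hβ)
  rw [coroot_theta hθn] at hn
  have h0 : 0 ≤ ⟪β, θ⟫ := pos_dom hR hΔ hθR hθhigh hβ
  have hcs := real_inner_mul_inner_self_le β θ
  have hββ := hnorm β (Pos_subset hβ)
  have h2 : ⟪β, θ⟫ ≤ 2 := by nlinarith
  have hn0 : (0:ℤ) ≤ n := by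
    have : (0:ℝ) ≤ (n:ℝ) := hn ▸ h0
    exact_mod_cast this
  have hn2 : (n:ℤ) ≤ 2 := by
    have : ((n:ℤ):ℝ) ≤ 2 := hn ▸ h2
    exact_mod_cast this
  have hcase : n = 0 ∨ n = 1 ∨ n = 2 := by omega
  rcases hcase with hcc | hcc | hcc
  · left; rw [hn, hcc]; norm_num
  · right; left; rw [hn, hcc]; norm_num
  · right; right; rw [hn, hcc]; norm_num

lemma eq_theta_of_two (hnorm : ∀ γ ∈ R, ⟪γ, γ⟫ ≤ 2) (hθn : ⟪θ, θ⟫ = 2)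
    {β : V} (hβ : β ∈ R) (h2 : ⟪β, θ⟫ = 2) : β = θ := by
  have key : ⟪β - θ, β - θ⟫ ≤ 0 := by
    rw [inner_sub_left, inner_sub_right, inner_sub_right, real_inner_comm β θ]
    have := hnorm β hβ
    linarith
  have h3 : ⟪β - θ, β - θ⟫ = 0 := le_antisymm key real_inner_self_nonneg
  exact sub_eq_zero.mp (inner_self_eq_zero.mp h3)

lemma neg_card (hR : IsRootSystem R) (x : ℝ) :
    (R.filter fun β => ⟪β, ϖv⟫ = -x).card = (R.filter fun β => ⟪β, ϖv⟫ = x).card := by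
  refine Finset.card_nbij' (i := fun β => -β) (j := fun β => -β) ?_ ?_
    (fun a _ => neg_neg a) (fun a _ => neg_neg a)
  · intro β hβ
    obtain ⟨hβR, hv⟩ := Finset.mem_filter.mp hβ
    refine Finset.mem_filter.mpr ⟨neg_mem hR hβR, ?_⟩
    rw [inner_neg_left, hv, neg_neg]
  · intro β hβ
    obtain ⟨hβR, hv⟩ := Finset.mem_filter.mp hβ
    refine Finset.mem_filter.mpr ⟨neg_mem hR hβR, ?_⟩
    rw [inner_neg_left, hv]

lemma symmetry (hR : IsRootSystem R) (hΔ : IsBase R Δ)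
    (hnorm : ∀ γ ∈ R, ⟪γ, γ⟫ ≤ 2) (hθR : θ ∈ R)
    (hθhigh : ∀ β ∈ R, ∃ c : V → ℕ, θ - β = ∑ δ ∈ Δ, (c δ : ℝ) • δ)
    (hθn : ⟪θ, θ⟫ = 2)
    (hϖv : ∀ β ∈ Δ, ⟪β, ϖv⟫ = if β = α then 1 else 0) (hα : α ∈ Δ)
    {k j : ℕ} (hk : 1 ≤ k) (hj : 1 ≤ j) (hkj : (k:ℝ) + (j:ℝ) = ⟪θ, ϖv⟫) :
    (k:ℝ) * ((R.filter fun β => ⟪β, ϖv⟫ = (k:ℝ)).card : ℝ)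
      = (j:ℝ) * ((R.filter fun β => ⟪β, ϖv⟫ = (j:ℝ)).card : ℝ) := by
  set C := R.filter (fun β => ⟪β, ϖv⟫ = (k:ℝ) ∨ ⟪β, ϖv⟫ = -(j:ℝ)) with hC
  have hkpos : (0:ℝ) < (k:ℝ) := by exact_mod_cast hk
  have hjpos : (0:ℝ) < (j:ℝ) := by exact_mod_cast hj
  -- Invariance under the simple reflections away from α
  have hstepA : ∀ δ ∈ Δ, δ ≠ α → ⟪∑ β ∈ C, β, δ⟫ = 0 := by
    intro δ hδ hδα
    refine sum_inner_eq_zero_of_invariant hR (hΔ.subset hδ) ?_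
    intro β hβ
    obtain ⟨hβR, hv⟩ := Finset.mem_filter.mp hβ
    refine Finset.mem_filter.mpr ⟨hR.reflect_mem δ (hΔ.subset hδ) β hβR, ?_⟩
    have hδv : ⟪δ, ϖv⟫ = 0 := by rw [hϖv δ hδ, if_neg hδα]
    have hval : ⟪β - ⟪β, coroot δ⟫ • δ, ϖv⟫ = ⟪β, ϖv⟫ := by
      rw [inner_sub_left, real_inner_smul_left, hδv]; ring
    rw [hval]; exact hv
  -- Invariance under the reflection in θ
  have hstepB : ⟪∑ β ∈ C, β, θ⟫ = 0 := by
    refine sum_inner_eq_zero_of_invariant hR hθR ?_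
    intro β hβ
    obtain ⟨hβR, hv⟩ := Finset.mem_filter.mp hβ
    have hcor : coroot θ = θ := coroot_theta hθn
    have hsR : β - ⟪β, coroot θ⟫ • θ ∈ R := hR.reflect_mem θ hθR β hβR
    have hval : ⟪β - ⟪β, coroot θ⟫ • θ, ϖv⟫ = ⟪β, ϖv⟫ - ⟪β, θ⟫ * ⟪θ, ϖv⟫ := by
      rw [inner_sub_left, real_inner_smul_left, hcor]
    refine Finset.mem_filter.mpr ⟨hsR, ?_⟩
    rcases hv with hv | hv
    · -- value k : positive root
      have hβP : β ∈ Pos R Δ := mem_Pos_of_val_pos hR hΔ hϖv hα hβR (by rw [hv]; exact hkpos)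
      rcases pairing_cases hR hΔ hnorm hθR hθhigh hθn hβP with ht | ht | ht
      · left; rw [hval, hv, ht]; ring
      · right; rw [hval, hv, ht, ← hkj]; ring
      · exfalso
        have hβθ : β = θ := eq_theta_of_two hnorm hθn hβR ht
        rw [hβθ, ← hkj] at hv
        have : (j:ℝ) = 0 := by linarith
        rw [Nat.cast_eq_zero] at this
        omega
    · -- value -j : negative root
      have hnβP : -β ∈ Pos R Δ := mem_Pos_of_val_pos hR hΔ hϖv hα (neg_mem hR hβR)
        (by rw [inner_neg_left, hv, neg_neg]; exact hjpos)
      rcases pairing_cases hR hΔ hnorm hθR hθhigh hθn hnβP with ht | ht | ht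
      · rw [inner_neg_left] at ht
        right; rw [hval, hv]
        have : ⟪β, θ⟫ = 0 := by linarith
        rw [this]; ring
      · rw [inner_neg_left] at ht
        left
        have hβθ : ⟪β, θ⟫ = -1 := by linarith
        rw [hval, hv, hβθ, ← hkj]; ring
      · exfalso
        have hβθ : -β = θ := eq_theta_of_two hnorm hθn (neg_mem hR hβR) ht
        have : ⟪-β, ϖv⟫ = (j:ℝ) := by rw [inner_neg_left, hv, neg_neg]
        rw [hβθ, ← hkj] at this
        have : (k:ℝ) = 0 := by linarith
        rw [Nat.cast_eq_zero] at this
        omega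
  -- the sum is zero
  have hξ : ∑ β ∈ C, β = ⟪∑ β ∈ C, β, α⟫ • ϖv :=
    eq_smul_coweight hR hΔ hϖv hα (fun δ hδ hδα => hstepA δ hδ hδα)
  have hθm : 0 < ⟪θ, ϖv⟫ := by rw [← hkj]; positivity
  have hcoef : ⟪∑ β ∈ C, β, α⟫ = 0 := by
    have h1 : ⟪∑ β ∈ C, β, θ⟫ = ⟪∑ β ∈ C, β, α⟫ * ⟪ϖv, θ⟫ := by
      conv_lhs => rw [hξ]
      rw [real_inner_smul_left]
    rw [hstepB, real_inner_comm θ ϖv] at h1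
    rcases mul_eq_zero.mp h1.symm with hc | hc
    · exact hc
    · exact absurd hc (ne_of_gt hθm)
  have hξ0 : ∑ β ∈ C, β = 0 := by rw [hξ, hcoef, zero_smul]
  -- evaluate against ϖv
  have hval0 : ∑ β ∈ C, ⟪β, ϖv⟫ = 0 := by
    rw [← sum_inner, hξ0, inner_zero_left]
  -- split C into the two level sets
  have hsplit := Finset.sum_filter_add_sum_filter_not C (fun β => ⟪β, ϖv⟫ = (k:ℝ))
    (fun β => ⟪β, ϖv⟫)
  have hone : C.filter (fun β => ⟪β, ϖv⟫ = (k:ℝ)) = R.filter (fun β => ⟪β, ϖv⟫ = (k:ℝ)) := by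
    ext β
    simp only [hC, Finset.mem_filter]
    constructor
    · rintro ⟨⟨h1, _⟩, h3⟩; exact ⟨h1, h3⟩
    · rintro ⟨h1, h2⟩; exact ⟨⟨h1, Or.inl h2⟩, h2⟩
  have htwo : C.filter (fun β => ¬⟪β, ϖv⟫ = (k:ℝ)) = R.filter (fun β => ⟪β, ϖv⟫ = -(j:ℝ)) := by
    ext β
    simp only [hC, Finset.mem_filter]
    constructor
    · rintro ⟨⟨h1, h2⟩, h3⟩
      rcases h2 with h2 | h2
      · exact absurd h2 h3
      · exact ⟨h1, h2⟩
    · rintro ⟨h1, h2⟩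
      have : ¬⟪β, ϖv⟫ = (k:ℝ) := by rw [h2]; intro hcontr; linarith
      exact ⟨⟨h1, Or.inr h2⟩, this⟩
  have hsum1 : ∑ β ∈ C.filter (fun β => ⟪β, ϖv⟫ = (k:ℝ)), ⟪β, ϖv⟫
      = ((R.filter fun β => ⟪β, ϖv⟫ = (k:ℝ)).card : ℝ) * (k:ℝ) := by
    rw [hone, Finset.sum_congr rfl (fun β hβ => (Finset.mem_filter.mp hβ).2),
      Finset.sum_const, nsmul_eq_mul]
  have hsum2 : ∑ β ∈ C.filter (fun β => ¬⟪β, ϖv⟫ = (k:ℝ)), ⟪β, ϖv⟫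
      = ((R.filter fun β => ⟪β, ϖv⟫ = (j:ℝ)).card : ℝ) * (-(j:ℝ)) := by
    rw [htwo, Finset.sum_congr rfl (fun β hβ => (Finset.mem_filter.mp hβ).2),
      Finset.sum_const, nsmul_eq_mul, neg_card hR]
  rw [hsum1, hsum2, hval0] at hsplit
  have := hsplit
  nlinarith [this]

/-- Partition of a weighted sum over positive roots according to the pairing with θ. -/
lemma pos_pairing_sum (hR : IsRootSystem R) (hΔ : IsBase R Δ)
    (hnorm : ∀ γ ∈ R, ⟪γ, γ⟫ ≤ 2) (hθR : θ ∈ R)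
    (hθhigh : ∀ β ∈ R, ∃ c : V → ℕ, θ - β = ∑ δ ∈ Δ, (c δ : ℝ) • δ)
    (hθn : ⟪θ, θ⟫ = 2) (hθP : θ ∈ Pos R Δ) (w : V → ℝ) :
    ∑ β ∈ Pos R Δ, w β * ⟪β, θ⟫
      = (∑ β ∈ (Pos R Δ).filter (fun β => ⟪β, θ⟫ = 1), w β) + 2 * w θ := by
  have hsplit := Finset.sum_filter_add_sum_filter_not (Pos R Δ) (fun β => ⟪β, θ⟫ = 1)
    (fun β => w β * ⟪β, θ⟫)
  rw [← hsplit]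
  have e1 : ∑ β ∈ (Pos R Δ).filter (fun β => ⟪β, θ⟫ = 1), w β * ⟪β, θ⟫
      = ∑ β ∈ (Pos R Δ).filter (fun β => ⟪β, θ⟫ = 1), w β := by
    refine Finset.sum_congr rfl (fun β hβ => ?_)
    rw [(Finset.mem_filter.mp hβ).2, mul_one]
  have hsplit2 := Finset.sum_filter_add_sum_filter_not
    ((Pos R Δ).filter (fun β => ¬⟪β, θ⟫ = 1)) (fun β => ⟪β, θ⟫ = 2)
    (fun β => w β * ⟪β, θ⟫)
  have hset : ((Pos R Δ).filter (fun β => ¬⟪β, θ⟫ = 1)).filter (fun β => ⟪β, θ⟫ = 2)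
      = {θ} := by
    ext β
    simp only [Finset.mem_filter, Finset.mem_singleton]
    constructor
    · rintro ⟨⟨hβP, _⟩, h2⟩
      exact eq_theta_of_two hnorm hθn (Pos_subset hβP) h2
    · rintro rfl
      refine ⟨⟨hθP, ?_⟩, hθn⟩
      rw [hθn]; norm_num
  have e2 : ∑ β ∈ ((Pos R Δ).filter (fun β => ¬⟪β, θ⟫ = 1)).filter
      (fun β => ¬⟪β, θ⟫ = 2), w β * ⟪β, θ⟫ = 0 := by
    refine Finset.sum_eq_zero (fun β hβ => ?_)
    obtain ⟨hβ1, h2⟩ := Finset.mem_filter.mp hβ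
    obtain ⟨hβP, h1⟩ := Finset.mem_filter.mp hβ1
    rcases pairing_cases hR hΔ hnorm hθR hθhigh hθn hβP with ht | ht | ht
    · rw [ht, mul_zero]
    · exact absurd ht h1
    · exact absurd ht h2
  have e3 : ∑ β ∈ (Pos R Δ).filter (fun β => ¬⟪β, θ⟫ = 1), w β * ⟪β, θ⟫
      = 2 * w θ := by
    rw [← hsplit2, hset, e2, Finset.sum_singleton, hθn, add_zero]
    ring
  rw [e1, e3]

/-- The reflection in θ pairs up the positive roots with ⟪β,θ⟫ = 1. -/
lemma Q1_pairing (hR : IsRootSystem R) (hΔ : IsBase R Δ) (hθR : θ ∈ R)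
    (hθhigh : ∀ β ∈ R, ∃ c : V → ℕ, θ - β = ∑ δ ∈ Δ, (c δ : ℝ) • δ)
    (hθn : ⟪θ, θ⟫ = 2) :
    2 * ∑ β ∈ (Pos R Δ).filter (fun β => ⟪β, θ⟫ = 1), ⟪β, ϖv⟫
      = (((Pos R Δ).filter (fun β => ⟪β, θ⟫ = 1)).card : ℝ) * ⟪θ, ϖv⟫ := by
  have hι : ∀ β ∈ (Pos R Δ).filter (fun β => ⟪β, θ⟫ = 1),
      θ - β ∈ (Pos R Δ).filter (fun β => ⟪β, θ⟫ = 1) := by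
    intro β hβ
    obtain ⟨hβP, h1⟩ := Finset.mem_filter.mp hβ
    have hβR := Pos_subset hβP
    have hsub : β - θ ∈ R := by
      have := hR.reflect_mem θ hθR β hβR
      rwa [coroot_theta hθn, h1, one_smul] at this
    have hθβR : θ - β ∈ R := by
      have := neg_mem hR hsub
      rwa [neg_sub] at this
    have hθβP : θ - β ∈ Pos R Δ := by
      rcases mem_Pos_or hR hΔ hθβR with hp | hp
      · exact hp
      · exfalso
        rw [neg_sub] at hp
        have := pos_dom hR hΔ hθR hθhigh hp
        rw [inner_sub_left, h1, hθn] at this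
        linarith
    refine Finset.mem_filter.mpr ⟨hθβP, ?_⟩
    rw [inner_sub_left, h1, hθn]; ring
  have hsum : ∑ β ∈ (Pos R Δ).filter (fun β => ⟪β, θ⟫ = 1), ⟪θ - β, ϖv⟫
      = ∑ β ∈ (Pos R Δ).filter (fun β => ⟪β, θ⟫ = 1), ⟪β, ϖv⟫ :=
    Finset.sum_nbij' (i := fun β => θ - β) (j := fun β => θ - β) hι hι
      (fun a _ => sub_sub_cancel θ a) (fun a _ => sub_sub_cancel θ a) (fun a _ => rfl)
  have hexp : ∑ β ∈ (Pos R Δ).filter (fun β => ⟪β, θ⟫ = 1), ⟪θ - β, ϖv⟫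
      = (((Pos R Δ).filter (fun β => ⟪β, θ⟫ = 1)).card : ℝ) * ⟪θ, ϖv⟫
        - ∑ β ∈ (Pos R Δ).filter (fun β => ⟪β, θ⟫ = 1), ⟪β, ϖv⟫ := by
    have e : ∀ β ∈ (Pos R Δ).filter (fun β => ⟪β, θ⟫ = 1),
        ⟪θ - β, ϖv⟫ = ⟪θ, ϖv⟫ - ⟪β, ϖv⟫ := fun β _ => by rw [inner_sub_left]
    rw [Finset.sum_congr rfl e, Finset.sum_sub_distrib, Finset.sum_const, nsmul_eq_mul]
  rw [hexp] at hsum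
  linarith

/-- Schur-type identity : the ϖv-weighted sum of roots is proportional to ϖv,
with ratio the doubled dual Coxeter number. -/
lemma schur (hR : IsRootSystem R) (hΔ : IsBase R Δ)
    (hnorm : ∀ γ ∈ R, ⟪γ, γ⟫ ≤ 2) (hθR : θ ∈ R)
    (hθhigh : ∀ β ∈ R, ∃ c : V → ℕ, θ - β = ∑ δ ∈ Δ, (c δ : ℝ) • δ)
    (hθn : ⟪θ, θ⟫ = 2) (hθP : θ ∈ Pos R Δ)
    {g : V → ℕ} (hg : coroot θ = ∑ δ ∈ Δ, (g δ : ℝ) • coroot δ)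
    (hϖv : ∀ β ∈ Δ, ⟪β, ϖv⟫ = if β = α then 1 else 0) (hα : α ∈ Δ)
    (hθm : 0 < ⟪θ, ϖv⟫) :
    ∑ β ∈ R, ⟪β, ϖv⟫ ^ 2 = 2 * (1 + ∑ δ ∈ Δ, (g δ : ℝ)) * ⟪ϖv, ϖv⟫ := by
  classical
  -- the weighted sum of all roots
  set W := ∑ β ∈ R, ⟪β, ϖv⟫ • β with hW
  -- (a) W is orthogonal to all simple roots except α
  have hWδ : ∀ δ ∈ Δ, δ ≠ α → ⟪W, δ⟫ = 0 := by
    intro δ hδ hδα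
    have hδR := hΔ.subset hδ
    have hδp := root_norm_pos hR hδR
    have hδv : ⟪δ, ϖv⟫ = 0 := by rw [hϖv δ hδ, if_neg hδα]
    have hmap : ∀ β ∈ R, β - ⟪β, coroot δ⟫ • δ ∈ R :=
      fun β hβ => hR.reflect_mem δ hδR β hβ
    have hres : ∑ β ∈ R, ⟪β, ϖv⟫ • (β - ⟪β, coroot δ⟫ • δ) = ∑ β ∈ R, ⟪β, ϖv⟫ • β := by
      refine Finset.sum_nbij' (i := fun β => β - ⟪β, coroot δ⟫ • δ)
        (j := fun β => β - ⟪β, coroot δ⟫ • δ) hmap hmap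
        (fun a _ => refl_invol hδp a) (fun a _ => refl_invol hδp a) (fun a _ => ?_)
      have hval : ⟪a - ⟪a, coroot δ⟫ • δ, ϖv⟫ = ⟪a, ϖv⟫ := by
        rw [inner_sub_left, real_inner_smul_left, hδv]; ring
      rw [hval]
    have hres2 : ∑ β ∈ R, ⟪β, ϖv⟫ • (β - ⟪β, coroot δ⟫ • δ)
        = W - (∑ β ∈ R, ⟪β, ϖv⟫ * ⟪β, coroot δ⟫) • δ := by
      rw [Finset.sum_smul, ← Finset.sum_sub_distrib]
      refine Finset.sum_congr rfl (fun β _ => ?_)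
      rw [smul_sub, smul_smul]
    have h3 : (∑ β ∈ R, ⟪β, ϖv⟫ * ⟪β, coroot δ⟫) • δ = 0 := by
      have := hres2 ▸ hres
      exact sub_eq_self.mp this
    have h4 : ∑ β ∈ R, ⟪β, ϖv⟫ * ⟪β, coroot δ⟫ = 0 := by
      rcases smul_eq_zero.mp h3 with hz | hz
      · exact hz
      · exact absurd hz (fun e => hR.zero_not_mem (e ▸ hδR))
    have h5 : ⟪W, coroot δ⟫ = 0 := by
      rw [hW, sum_inner]
      rw [Finset.sum_congr rfl (fun β _ => real_inner_smul_left β (coroot δ) ⟪β, ϖv⟫)]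
      exact h4
    rw [inner_coroot_right] at h5
    rcases mul_eq_zero.mp h5 with hz | hz
    · exact absurd hz (by positivity)
    · exact hz
  -- (b) W is proportional to ϖv
  have hWprop : W = ⟪W, α⟫ • ϖv := eq_smul_coweight hR hΔ hϖv hα hWδ
  -- (c) pairing with θ
  have hWθ : ⟪W, θ⟫ = 2 * ⟪θ, ϖv⟫ * (1 + ∑ δ ∈ Δ, (g δ : ℝ)) := by
    have h1 : ⟪W, θ⟫ = ∑ β ∈ R, ⟪β, ϖv⟫ * ⟪β, θ⟫ := by
      rw [hW, sum_inner]
      exact Finset.sum_congr rfl (fun β _ => real_inner_smul_left β θ ⟪β, ϖv⟫)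
    -- reduce to positive roots
    have hsplit := Finset.sum_filter_add_sum_filter_not R
      (fun β => ∃ c : V → ℕ, β = ∑ δ ∈ Δ, (c δ : ℝ) • δ) (fun β => ⟪β, ϖv⟫ * ⟪β, θ⟫)
    have hneg : ∑ β ∈ R.filter (fun β => ¬∃ c : V → ℕ, β = ∑ δ ∈ Δ, (c δ : ℝ) • δ),
        ⟪β, ϖv⟫ * ⟪β, θ⟫ = ∑ β ∈ Pos R Δ, ⟪β, ϖv⟫ * ⟪β, θ⟫ := by
      refine Finset.sum_nbij' (i := fun β => -β) (j := fun β => -β) ?_ ?_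
        (fun a _ => neg_neg a) (fun a _ => neg_neg a) (fun a ha => ?_)
      · intro β hβ
        obtain ⟨hβR, hβn⟩ := Finset.mem_filter.mp hβ
        rcases mem_Pos_or hR hΔ hβR with hp | hp
        · exact absurd ((Finset.mem_filter.mp hp).2) hβn
        · exact hp
      · intro β hβ
        refine Finset.mem_filter.mpr ⟨neg_mem hR (Pos_subset hβ), ?_⟩
        intro hcontr
        exact not_both hR hΔ hβ (Finset.mem_filter.mpr ⟨neg_mem hR (Pos_subset hβ), hcontr⟩)
      · rw [inner_neg_left, inner_neg_left]; ring
    have h2 : ∑ β ∈ R, ⟪β, ϖv⟫ * ⟪β, θ⟫ = 2 * ∑ β ∈ Pos R Δ, ⟪β, ϖv⟫ * ⟪β, θ⟫ := by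
      rw [← hsplit, hneg]
      have : R.filter (fun β => ∃ c : V → ℕ, β = ∑ δ ∈ Δ, (c δ : ℝ) • δ) = Pos R Δ := rfl
      rw [this]; ring
    -- the positive-root sum via the partition
    have h3 := pos_pairing_sum hR hΔ hnorm hθR hθhigh hθn hθP (fun β => ⟪β, ϖv⟫)
    have h4 := pos_pairing_sum hR hΔ hnorm hθR hθhigh hθn hθP (fun _ => (1:ℝ))
    -- h4 : ∑ 1*⟪β,θ⟫ = card Q1 + 2
    have h4' : ∑ β ∈ Pos R Δ, ⟪β, θ⟫
        = (((Pos R Δ).filter (fun β => ⟪β, θ⟫ = 1)).card : ℝ) + 2 := by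
      have e : ∑ β ∈ Pos R Δ, (1:ℝ) * ⟪β, θ⟫ = ∑ β ∈ Pos R Δ, ⟪β, θ⟫ :=
        Finset.sum_congr rfl (fun β _ => one_mul _)
      rw [e] at h4
      rw [h4, Finset.sum_const, nsmul_eq_mul]
      ring
    -- total pairing with coroots: ∑_{β∈Pos} ⟪β,θ⟫ = 2 ∑ g
    have h5 : ∑ β ∈ Pos R Δ, ⟪β, θ⟫ = 2 * ∑ δ ∈ Δ, (g δ : ℝ) := by
      have e1 : ∑ β ∈ Pos R Δ, ⟪β, θ⟫ = ⟪∑ β ∈ Pos R Δ, β, θ⟫ := (sum_inner _ _ _).symm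
      have e2 : ⟪∑ β ∈ Pos R Δ, β, θ⟫ = ⟪∑ β ∈ Pos R Δ, β, coroot θ⟫ := by
        rw [coroot_theta hθn]
      have e3 : ⟪∑ β ∈ Pos R Δ, β, coroot θ⟫ = ∑ δ ∈ Δ, (g δ : ℝ) * 2 := by
        rw [hg, inner_sum]
        refine Finset.sum_congr rfl (fun δ hδ => ?_)
        rw [real_inner_smul_right, P_inner_coroot hR hΔ hδ]
      rw [e1, e2, e3, ← Finset.sum_mul]
      ring
    -- combine
    have hQ1card : (((Pos R Δ).filter (fun β => ⟪β, θ⟫ = 1)).card : ℝ)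
        = 2 * ∑ δ ∈ Δ, (g δ : ℝ) - 2 := by
      rw [h5] at h4'
      linarith
    have hQ1sum := Q1_pairing (ϖv := ϖv) hR hΔ hθR hθhigh hθn
    rw [hQ1card] at hQ1sum
    rw [h1, h2, h3]
    linear_combination hQ1sum
  -- (d) the proportionality coefficient
  have hWα : ⟪W, α⟫ = 2 * (1 + ∑ δ ∈ Δ, (g δ : ℝ)) := by
    have h1 : ⟪W, θ⟫ = ⟪W, α⟫ * ⟪ϖv, θ⟫ := by
      conv_lhs => rw [hWprop]
      rw [real_inner_smul_left]
    rw [hWθ, real_inner_comm θ ϖv] at h1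
    have hne : ⟪θ, ϖv⟫ ≠ 0 := ne_of_gt hθm
    have h2 : (⟪W, α⟫ - 2 * (1 + ∑ δ ∈ Δ, (g δ : ℝ))) * ⟪θ, ϖv⟫ = 0 := by
      linear_combination -h1
    rcases mul_eq_zero.mp h2 with hz | hz
    · linarith [sub_eq_zero.mp hz]
    · exact absurd hz hne
  -- (e) evaluate the norm identity
  have hfinal : ∑ β ∈ R, ⟪β, ϖv⟫ ^ 2 = ⟪W, ϖv⟫ := by
    rw [hW, sum_inner]
    refine Finset.sum_congr rfl (fun β _ => ?_)
    rw [real_inner_smul_left]; ring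
  rw [hfinal]
  conv_lhs => rw [hWprop]
  rw [real_inner_smul_left, hWα]

lemma val_le (hθhigh : ∀ β ∈ R, ∃ c : V → ℕ, θ - β = ∑ δ ∈ Δ, (c δ : ℝ) • δ)
    (hϖv : ∀ β ∈ Δ, ⟪β, ϖv⟫ = if β = α then 1 else 0) (hα : α ∈ Δ)
    {β : V} (hβ : β ∈ R) : ⟪β, ϖv⟫ ≤ ⟪θ, ϖv⟫ := by
  obtain ⟨c, hc⟩ := hθhigh β hβ
  have h1 : ⟪θ - β, ϖv⟫ = ((c α : ℕ) : ℝ) := by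
    rw [hc, val_sum hϖv hα]
  rw [inner_sub_left] at h1
  have h2 : (0:ℝ) ≤ ((c α : ℕ) : ℝ) := Nat.cast_nonneg _
  linarith

end Aux11

/-- `i(α,k) = k·c(α,k)/⟨ϖ_α,ϖ_α∨⟩`, where `c(α,k) = #S(α,k)` is the number of
roots whose coefficient at `α` equals `k`; here `ϖ`, `ϖv` are the fundamental
weight and coweight attached to `α`. -/
def iNum {V : Type*} [NormedAddCommGroup V] [InnerProductSpace ℝ V]
    (R : Finset V) (ϖ ϖv : V) (k : ℕ) : ℝ :=
  (k : ℝ) * ((R.filter fun β => ⟪β, ϖv⟫ = (k : ℝ)).card : ℝ) / ⟪ϖ, ϖv⟫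

/-- `d_k(α) = Σ_{x ≥ 1, k ∣ x} i(α,x)` (a finitely supported sum, since
`S(α,x) = ∅` for all large `x`). -/
def dSeq {V : Type*} [NormedAddCommGroup V] [InnerProductSpace ℝ V]
    (R : Finset V) (ϖ ϖv : V) (k : ℕ) : ℝ :=
  ∑' x : ℕ, if k ∣ x ∧ 1 ≤ x then iNum R ϖ ϖv x else 0

open Finset Aux11

/-- `d_1(α) + d_{h_α}(α) = 2g/g_α`, where `g` is the dual
Coxeter number. -/
theorem statement_11 {V : Type*} [NormedAddCommGroup V] [InnerProductSpace ℝ V]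
    [FiniteDimensional ℝ V]
    (R Δ : Finset V) (hR : IsRootSystem R) (hΔ : IsBase R Δ)
    -- normalization: long roots have squared length 2
    (hnorm : ∀ γ ∈ R, ⟪γ, γ⟫ ≤ 2) (hnorm' : ∃ γ ∈ R, ⟪γ, γ⟫ = 2)
    -- `θ = α̃` is the highest root
    (θ : V) (hθR : θ ∈ R)
    (hθhigh : ∀ β ∈ R, ∃ c : V → ℕ, θ - β = ∑ δ ∈ Δ, (c δ : ℝ) • δ)
    -- the coefficients `h_β` of the highest root and `g_β` of the highest coroot
    (h g : V → ℕ)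
    (hh : θ = ∑ δ ∈ Δ, (h δ : ℝ) • δ) (hhpos : ∀ δ ∈ Δ, 0 < h δ)
    (hg : coroot θ = ∑ δ ∈ Δ, (g δ : ℝ) • coroot δ) (hgpos : ∀ δ ∈ Δ, 0 < g δ)
    (α : V) (hα : α ∈ Δ)
    -- the fundamental weight `ϖ = ϖ_α` and fundamental coweight `ϖv = ϖ_α∨`
    (ϖ : V) (hϖ : ∀ β ∈ Δ, ⟪ϖ, coroot β⟫ = if β = α then 1 else 0)
    (ϖv : V) (hϖv : ∀ β ∈ Δ, ⟪β, ϖv⟫ = if β = α then 1 else 0) :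
    dSeq R ϖ ϖv 1 + dSeq R ϖ ϖv (h α) =
      2 * (1 + ∑ β ∈ Δ, (g β : ℝ)) / (g α : ℝ) := by
  classical
  set m : ℕ := h α with hm
  have hm1 : 1 ≤ m := hhpos α hα
  set N : ℕ → ℕ := fun x => (R.filter fun β => ⟪β, ϖv⟫ = (x:ℝ)).card with hN
  -- basic facts
  have hθn : ⟪θ, θ⟫ = 2 := theta_norm hR hΔ hnorm hnorm' hθR hθhigh
  have hθP : θ ∈ Pos R Δ := Finset.mem_filter.mpr ⟨hθR, ⟨h, hh⟩⟩
  have hmval : ⟪θ, ϖv⟫ = (m:ℝ) := by rw [hh]; exact val_sum hϖv hα _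
  have hθm : 0 < ⟪θ, ϖv⟫ := by
    rw [hmval]
    exact_mod_cast Nat.lt_of_lt_of_le Nat.zero_lt_one hm1
  have hαα : (0:ℝ) < ⟪α, α⟫ := root_norm_pos hR (hΔ.subset hα)
  have hvv : (0:ℝ) < ⟪ϖv, ϖv⟫ := by
    have hne : ϖv ≠ 0 := by
      intro e
      have := hϖv α hα
      rw [e, inner_zero_right, if_pos rfl] at this
      norm_num at this
    have h1 : ⟪ϖv, ϖv⟫ ≠ 0 := fun e => hne (inner_self_eq_zero.mp e)
    exact lt_of_le_of_ne real_inner_self_nonneg (Ne.symm h1)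
  -- vanishing above m
  have hNz : ∀ x : ℕ, m < x → N x = 0 := by
    intro x hx
    rw [hN]
    rw [Finset.card_eq_zero, Finset.filter_eq_empty_iff]
    intro β hβ
    have h1 := val_le hθhigh hϖv hα hβ
    rw [hmval] at h1
    have h2 : (m:ℝ) < (x:ℝ) := by exact_mod_cast hx
    intro hcontr
    rw [hcontr] at h1
    linarith
  -- the symmetry k N_k = (m-k) N_{m-k}
  have hsym : ∀ k j : ℕ, 1 ≤ k → 1 ≤ j → k + j = m →
      (k:ℝ) * (N k : ℝ) = (j:ℝ) * (N j : ℝ) := by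
    intro k j hk hj hkj
    have hkj' : (k:ℝ) + (j:ℝ) = ⟪θ, ϖv⟫ := by
      rw [hmval]; exact_mod_cast hkj
    exact symmetry hR hΔ hnorm hθR hθhigh hθn hϖv hα hk hj hkj'
  -- the Schur identity
  have hschur : ∑ β ∈ R, ⟪β, ϖv⟫ ^ 2 = 2 * (1 + ∑ δ ∈ Δ, (g δ : ℝ)) * ⟪ϖv, ϖv⟫ :=
    schur hR hΔ hnorm hθR hθhigh hθn hθP hg hϖv hα hθm
  -- level decomposition of the sum of squares
  have hlevels : ∑ β ∈ R, ⟪β, ϖv⟫ ^ 2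
      = 2 * ∑ x ∈ Finset.Icc 1 m, (x:ℝ)^2 * (N x : ℝ) := by
    have hsplit := Finset.sum_filter_add_sum_filter_not R
      (fun β => ∃ c : V → ℕ, β = ∑ δ ∈ Δ, (c δ : ℝ) • δ) (fun β => ⟪β, ϖv⟫ ^ 2)
    have hneg : ∑ β ∈ R.filter (fun β => ¬∃ c : V → ℕ, β = ∑ δ ∈ Δ, (c δ : ℝ) • δ),
        ⟪β, ϖv⟫ ^ 2 = ∑ β ∈ Pos R Δ, ⟪β, ϖv⟫ ^ 2 := by
      refine Finset.sum_nbij' (i := fun β => -β) (j := fun β => -β) ?_ ?_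
        (fun a _ => neg_neg a) (fun a _ => neg_neg a) (fun a ha => ?_)
      · intro β hβ
        obtain ⟨hβR, hβn⟩ := Finset.mem_filter.mp hβ
        rcases mem_Pos_or hR hΔ hβR with hp | hp
        · exact absurd ((Finset.mem_filter.mp hp).2) hβn
        · exact hp
      · intro β hβ
        refine Finset.mem_filter.mpr ⟨neg_mem hR (Pos_subset hβ), ?_⟩
        intro hcontr
        exact not_both hR hΔ hβ (Finset.mem_filter.mpr ⟨neg_mem hR (Pos_subset hβ), hcontr⟩)
      · rw [inner_neg_left]; ring
    have hP : R.filter (fun β => ∃ c : V → ℕ, β = ∑ δ ∈ Δ, (c δ : ℝ) • δ) = Pos R Δ := rfl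
    -- fiberwise decomposition over Pos
    have hmaps : ∀ β ∈ Pos R Δ, (Int.toNat ⌊⟪β, ϖv⟫⌋) ∈ Finset.range (m+1) := by
      intro β hβ
      obtain ⟨n, hn⟩ := val_nat_of_Pos hϖv hα hβ
      have h1 := val_le hθhigh hϖv hα (Pos_subset hβ)
      rw [hmval, hn] at h1
      have h2 : n ≤ m := by exact_mod_cast h1
      rw [hn, Int.floor_natCast, Int.toNat_natCast]
      exact Finset.mem_range.mpr (Nat.lt_succ_of_le h2)
    have hfib := Finset.sum_fiberwise_of_maps_to hmaps (fun β => ⟪β, ϖv⟫ ^ 2)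
    have hfibval : ∀ x ∈ Finset.range (m+1),
        ∑ β ∈ (Pos R Δ).filter (fun β => Int.toNat ⌊⟪β, ϖv⟫⌋ = x), ⟪β, ϖv⟫ ^ 2
          = (x:ℝ)^2 * (((Pos R Δ).filter (fun β => Int.toNat ⌊⟪β, ϖv⟫⌋ = x)).card : ℝ) := by
      intro x _
      have hval : ∀ β ∈ (Pos R Δ).filter (fun β => Int.toNat ⌊⟪β, ϖv⟫⌋ = x),
          ⟪β, ϖv⟫ ^ 2 = (x:ℝ)^2 := by
        intro β hβ
        obtain ⟨hβP, hfl⟩ := Finset.mem_filter.mp hβ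
        obtain ⟨n, hn⟩ := val_nat_of_Pos hϖv hα hβP
        rw [hn, Int.floor_natCast, Int.toNat_natCast] at hfl
        rw [hn, hfl]
      rw [Finset.sum_congr rfl hval, Finset.sum_const, nsmul_eq_mul]
      ring
    have hfibcard : ∀ x ∈ Finset.range (m+1), 1 ≤ x →
        (Pos R Δ).filter (fun β => Int.toNat ⌊⟪β, ϖv⟫⌋ = x)
          = R.filter (fun β => ⟪β, ϖv⟫ = (x:ℝ)) := by
      intro x _ hx1
      ext β
      simp only [Finset.mem_filter]
      constructor
      · rintro ⟨hβP, hfl⟩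
        obtain ⟨n, hn⟩ := val_nat_of_Pos hϖv hα hβP
        rw [hn, Int.floor_natCast, Int.toNat_natCast] at hfl
        exact ⟨Pos_subset hβP, by rw [hn, hfl]⟩
      · rintro ⟨hβR, hv⟩
        have hx0 : (0:ℝ) < (x:ℝ) := by exact_mod_cast hx1
        have hβP : β ∈ Pos R Δ := mem_Pos_of_val_pos hR hΔ hϖv hα hβR (by rw [hv]; exact hx0)
        refine ⟨hβP, ?_⟩
        rw [hv, Int.floor_natCast, Int.toNat_natCast]
    -- assemble
    have hposs : ∑ β ∈ Pos R Δ, ⟪β, ϖv⟫ ^ 2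
        = ∑ x ∈ Finset.Icc 1 m, (x:ℝ)^2 * (N x : ℝ) := by
      rw [← hfib, Finset.sum_congr rfl hfibval]
      have hr : Finset.range (m+1) = Finset.Icc 0 m := by
        rw [Finset.range_eq_Ico, ← Finset.Ico_add_one_right_eq_Icc]
      rw [hr, ← Finset.add_sum_erase _ _ (Finset.mem_Icc.mpr ⟨le_refl 0, Nat.zero_le m⟩)]
      have hzero : ((0:ℕ):ℝ)^2 *
          ((((Pos R Δ).filter (fun β => Int.toNat ⌊⟪β, ϖv⟫⌋ = 0)).card : ℕ) : ℝ) = 0 := by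
        norm_num
      rw [hzero, zero_add]
      have herase : (Finset.Icc 0 m).erase 0 = Finset.Icc 1 m := by
        rw [Finset.Icc_erase_left, ← Finset.Icc_add_one_left_eq_Ioc, zero_add]
      rw [herase]
      refine Finset.sum_congr rfl (fun x hx => ?_)
      have hx1 : 1 ≤ x := (Finset.mem_Icc.mp hx).1
      rw [hfibcard x (by
        rw [hr]
        exact Finset.mem_Icc.mpr ⟨Nat.zero_le x, (Finset.mem_Icc.mp hx).2⟩) hx1]
    rw [← hsplit, hneg, hP, hposs]
    ring
  -- the core combinatorial identity
  have hcore : (m:ℝ) * ((∑ x ∈ Finset.Icc 1 m, (x:ℝ) * (N x : ℝ)) + (m:ℝ) * (N m : ℝ))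
      = 2 * ∑ x ∈ Finset.Icc 1 m, (x:ℝ)^2 * (N x : ℝ) := by
    have hins : Finset.Icc 1 m = insert m (Finset.Ico 1 m) := by
      rw [Finset.Ico_insert_right hm1]
    have hnotmem : m ∉ Finset.Ico 1 m := by simp
    have key : (m:ℝ) * (∑ x ∈ Finset.Ico 1 m, (x:ℝ) * (N x : ℝ))
        = 2 * ∑ x ∈ Finset.Ico 1 m, (x:ℝ)^2 * (N x : ℝ) := by
      have step1 : ∑ x ∈ Finset.Ico 1 m, (x:ℝ)^2 * (N x : ℝ)
          = ∑ x ∈ Finset.Ico 1 m, (x:ℝ) * (((m - x : ℕ):ℝ) * (N (m - x) : ℝ)) := by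
        refine Finset.sum_congr rfl (fun x hx => ?_)
        obtain ⟨hx1, hx2⟩ := Finset.mem_Ico.mp hx
        have hs := hsym x (m - x) hx1 (by omega) (by omega)
        rw [← hs]; ring
      have hImap : ∀ x ∈ Finset.Ico 1 m, m - x ∈ Finset.Ico 1 m := by
        intro x hx
        rw [Finset.mem_Ico] at hx ⊢
        omega
      have hIinv : ∀ x ∈ Finset.Ico 1 m, m - (m - x) = x := by
        intro x hx
        rw [Finset.mem_Ico] at hx
        omega
      have step2 : ∑ x ∈ Finset.Ico 1 m, (x:ℝ) * (((m - x : ℕ):ℝ) * (N (m - x) : ℝ))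
          = ∑ x ∈ Finset.Ico 1 m, ((m - x : ℕ):ℝ) * ((x:ℝ) * (N x : ℝ)) :=
        Finset.sum_nbij' (i := fun x => m - x) (j := fun x => m - x) hImap hImap hIinv hIinv
          (fun x hx => by
            rw [hIinv x hx])
      have step3 : ∀ x ∈ Finset.Ico 1 m,
          (x:ℝ)^2 * (N x : ℝ) + ((m - x : ℕ):ℝ) * ((x:ℝ) * (N x : ℝ))
            = (m:ℝ) * ((x:ℝ) * (N x : ℝ)) := by
        intro x hx
        obtain ⟨hx1, hx2⟩ := Finset.mem_Ico.mp hx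
        have hc : ((m - x : ℕ):ℝ) = (m:ℝ) - (x:ℝ) := by
          rw [Nat.cast_sub (by omega)]
        rw [hc]; ring
      have combine : 2 * ∑ x ∈ Finset.Ico 1 m, (x:ℝ)^2 * (N x : ℝ)
          = ∑ x ∈ Finset.Ico 1 m, ((x:ℝ)^2 * (N x : ℝ)
            + ((m - x : ℕ):ℝ) * ((x:ℝ) * (N x : ℝ))) := by
        rw [Finset.sum_add_distrib]
        have : ∑ x ∈ Finset.Ico 1 m, ((m - x : ℕ):ℝ) * ((x:ℝ) * (N x : ℝ))
            = ∑ x ∈ Finset.Ico 1 m, (x:ℝ)^2 * (N x : ℝ) := by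
          rw [← step2, ← step1]
        rw [this]; ring
      rw [combine, Finset.sum_congr rfl step3, ← Finset.mul_sum]
    rw [hins, Finset.sum_insert hnotmem, Finset.sum_insert hnotmem]
    linear_combination key
  -- evaluate the two dSeq values
  have hiNum0 : ∀ b : ℕ, m < b → iNum R ϖ ϖv b = 0 := by
    intro b hb
    have hcard : (R.filter fun β => ⟪β, ϖv⟫ = (b:ℝ)).card = 0 := hNz b hb
    rw [iNum, hcard]
    norm_num
  have hd1 : dSeq R ϖ ϖv 1 = ∑ x ∈ Finset.Icc 1 m, iNum R ϖ ϖv x := by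
    rw [dSeq]
    rw [tsum_eq_sum (s := Finset.Icc 1 m) ?_]
    · refine Finset.sum_congr rfl (fun x hx => ?_)
      exact if_pos ⟨one_dvd x, (Finset.mem_Icc.mp hx).1⟩
    · intro b hb
      by_cases hcond : 1 ∣ b ∧ 1 ≤ b
      · rw [if_pos hcond]
        refine hiNum0 b ?_
        by_contra hbm
        push_neg at hbm
        exact hb (Finset.mem_Icc.mpr ⟨hcond.2, hbm⟩)
      · rw [if_neg hcond]
  have hdm : dSeq R ϖ ϖv m = iNum R ϖ ϖv m := by
    rw [dSeq]
    rw [tsum_eq_sum (s := Finset.Icc 1 m) ?_]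
    · rw [Finset.sum_eq_single_of_mem m (Finset.mem_Icc.mpr ⟨hm1, le_refl m⟩)]
      · exact if_pos ⟨dvd_refl m, hm1⟩
      · intro x hx hxm
        refine if_neg ?_
        rintro ⟨hdvd, hx1⟩
        obtain ⟨_, hx2⟩ := Finset.mem_Icc.mp hx
        exact hxm (le_antisymm hx2 (Nat.le_of_dvd (by omega) hdvd))
    · intro b hb
      by_cases hcond : m ∣ b ∧ 1 ≤ b
      · rw [if_pos hcond]
        refine hiNum0 b ?_
        by_contra hbm
        push_neg at hbm
        have := Nat.le_of_dvd (by omega) hcond.1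
        exact hb (Finset.mem_Icc.mpr ⟨hcond.2, hbm⟩)
      · rw [if_neg hcond]
  -- the inner product ⟪ϖ, ϖv⟫
  have hϖδ : ∀ δ ∈ Δ, δ ≠ α → ⟪ϖ, δ⟫ = 0 := by
    intro δ hδ hδα
    have h1 := hϖ δ hδ
    rw [if_neg hδα, inner_coroot_right] at h1
    have hδp := root_norm_pos hR (hΔ.subset hδ)
    rcases mul_eq_zero.mp h1 with hz | hz
    · exact absurd hz (by positivity)
    · exact hz
  have hϖprop : ϖ = ⟪ϖ, α⟫ • ϖv := eq_smul_coweight hR hΔ hϖv hα hϖδ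
  have hϖα : ⟪ϖ, α⟫ = ⟪α, α⟫ / 2 := by
    have h1 := hϖ α hα
    rw [if_pos rfl, inner_coroot_right] at h1
    field_simp at h1 ⊢
    linarith
  have hϖϖv : ⟪ϖ, ϖv⟫ = (⟪α, α⟫ / 2) * ⟪ϖv, ϖv⟫ := by
    conv_lhs => rw [hϖprop]
    rw [real_inner_smul_left, hϖα]
  -- the coefficient g α
  have hga : ((g α : ℕ):ℝ) = (m:ℝ) * ⟪α, α⟫ / 2 := by
    have hE1 : ⟪ϖ, coroot θ⟫ = ((g α : ℕ):ℝ) := by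
      rw [hg, inner_sum]
      have e : ∀ δ ∈ Δ, ⟪ϖ, (g δ : ℝ) • coroot δ⟫ = if δ = α then ((g δ : ℕ):ℝ) else 0 := by
        intro δ hδ
        rw [real_inner_smul_right, hϖ δ hδ]
        split <;> ring
      rw [Finset.sum_congr rfl e, Finset.sum_ite_eq' Δ α (fun δ => ((g δ : ℕ):ℝ)), if_pos hα]
    have hE2 : ⟪ϖ, coroot θ⟫ = (m:ℝ) * ⟪α, α⟫ / 2 := by
      rw [coroot_theta hθn]
      conv_lhs => rw [hϖprop]
      rw [real_inner_smul_left, hϖα, real_inner_comm θ ϖv, hmval]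
      ring
    rw [← hE1, hE2]
  -- final assembly
  rw [hd1, hdm]
  have hiNum : ∀ x : ℕ, iNum R ϖ ϖv x = (x:ℝ) * (N x : ℝ) / ⟪ϖ, ϖv⟫ := fun x => rfl
  have hsum : ∑ x ∈ Finset.Icc 1 m, iNum R ϖ ϖv x
      = (∑ x ∈ Finset.Icc 1 m, (x:ℝ) * (N x : ℝ)) / ⟪ϖ, ϖv⟫ := by
    rw [Finset.sum_div]
    exact Finset.sum_congr rfl (fun x _ => hiNum x)
  rw [hsum, hiNum m]
  have hS2 : ∑ x ∈ Finset.Icc 1 m, (x:ℝ)^2 * (N x : ℝ)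
      = (1 + ∑ δ ∈ Δ, (g δ : ℝ)) * ⟪ϖv, ϖv⟫ := by
    have := hschur
    rw [hlevels] at this
    linarith
  have hm0 : (m:ℝ) ≠ 0 := by
    have : (0:ℝ) < (m:ℝ) := by exact_mod_cast Nat.lt_of_lt_of_le Nat.zero_lt_one hm1
    exact ne_of_gt this
  have hS1 : (∑ x ∈ Finset.Icc 1 m, (x:ℝ) * (N x : ℝ)) + (m:ℝ) * (N m : ℝ)
      = 2 * (1 + ∑ δ ∈ Δ, (g δ : ℝ)) * ⟪ϖv, ϖv⟫ / (m:ℝ) := by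
    rw [eq_div_iff hm0]
    rw [hS2] at hcore
    linarith [hcore]
  have hganz : ((g α : ℕ):ℝ) ≠ 0 := by
    rw [hga]
    positivity
  rw [hϖϖv]
  rw [← add_div, hS1, hga]
  rw [div_div]
  rw [div_eq_div_iff (by positivity) (by positivity)]
  ring
end
end

section
/- For every simple root α ∈ Δ and every k ≥ 1: (a) i(α,k) = h_α·g·k·c(α,k) / (g_α·Σ_{β∈R⁺} ⟨β, ϖ_α∨⟩²); (b) d_1(α) = 2⟨ρ, ϖ_α∨⟩/⟨ϖ_α, ϖ_α∨⟩ = h_α·g·(Σ_{β∈R⁺} ⟨β, ϖ_α∨⟩) / (g_α·Σ_{β∈R⁺} ⟨β, ϖ_α∨⟩²); and (c) Σ_{k ≥ 1} φ(k)·d_k(α) = h_α·g/g_α, where φ is Euler's totient function. -/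
open scoped RealInnerProductSpace

attribute [local instance] Classical.propDecidable

noncomputable section

set_option linter.unusedSectionVars false
set_option maxHeartbeats 1000000

section Aux

variable {V : Type*} [NormedAddCommGroup V] [InnerProductSpace ℝ V] [FiniteDimensional ℝ V]
variable {R Δ : Finset V}

theorem root_ne_zero (hR : IsRootSystem R) {β : V} (hβ : β ∈ R) : β ≠ 0 :=
  fun h => hR.zero_not_mem (h ▸ hβ)

theorem root_inner_self_pos (hR : IsRootSystem R) {β : V} (hβ : β ∈ R) : 0 < ⟪β, β⟫ := by
  rcases lt_or_ge 0 ⟪β, β⟫ with h | h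
  · exact h
  · exact absurd (real_inner_self_nonpos.1 h) (root_ne_zero hR hβ)

theorem inner_self_coroot (hR : IsRootSystem R) {β : V} (hβ : β ∈ R) :
    ⟪β, coroot β⟫ = 2 := by
  rw [coroot, real_inner_smul_right, div_mul_cancel₀]
  exact (root_inner_self_pos hR hβ).ne'

theorem neg_root_mem (hR : IsRootSystem R) {β : V} (hβ : β ∈ R) : -β ∈ R := by
  have := hR.reflect_mem β hβ β hβ
  rwa [inner_self_coroot hR hβ, two_smul, sub_add_eq_sub_sub, sub_sub_cancel_left] at this

theorem span_base_eq_top (hR : IsRootSystem R) (hΔ : IsBase R Δ) :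
    Submodule.span ℝ (Δ : Set V) = ⊤ := by
  rw [← top_le_iff, ← hR.span_eq_top, Submodule.span_le]
  intro β hβ
  rcases hΔ.expand β hβ with ⟨c, hc⟩ | ⟨c, hc⟩
  · rw [hc]
    exact Submodule.sum_smul_mem _ _ fun δ hδ => Submodule.subset_span hδ
  · rw [hc]
    exact Submodule.neg_mem _ <| Submodule.sum_smul_mem _ _ fun δ hδ => Submodule.subset_span hδ

/-- The base as a basis of `V`. -/
def baseBasis (hR : IsRootSystem R) (hΔ : IsBase R Δ) : Module.Basis Δ ℝ V :=
  Module.Basis.mk hΔ.indep (by rw [← span_base_eq_top hR hΔ]; simp [Subtype.range_coe])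

theorem baseBasis_apply (hR : IsRootSystem R) (hΔ : IsBase R Δ) (δ : Δ) :
    baseBasis hR hΔ δ = (δ : V) := by simp [baseBasis]

theorem repr_sum (hR : IsRootSystem R) (hΔ : IsBase R Δ) (c : V → ℝ) (δ : Δ) :
    (baseBasis hR hΔ).repr (∑ γ ∈ Δ, c γ • γ) δ = c δ := by
  rw [← Finset.sum_coe_sort Δ (fun γ => c γ • γ)]
  have : ∑ γ : Δ, c γ • (γ : V) = ∑ γ : Δ, c γ • baseBasis hR hΔ γ := by
    simp [baseBasis_apply hR hΔ]
  rw [this]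
  simp [Finsupp.single_apply]

end Aux
section Aux2

variable {V : Type*} [NormedAddCommGroup V] [InnerProductSpace ℝ V] [FiniteDimensional ℝ V]
variable {R Δ : Finset V}

/-- The reflection in a root, as a linear map. -/
def sRef (γ : V) : V →ₗ[ℝ] V :=
  LinearMap.id - LinearMap.smulRight (innerSL ℝ (coroot γ)).toLinearMap γ

theorem sRef_apply (γ x : V) : sRef γ x = x - ⟪x, coroot γ⟫ • γ := by
  simp [sRef, real_inner_comm]

theorem sRef_mem (hR : IsRootSystem R) {γ β : V} (hγ : γ ∈ R) (hβ : β ∈ R) :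
    sRef γ β ∈ R := by
  rw [sRef_apply]; exact hR.reflect_mem γ hγ β hβ

theorem inner_sRef_sRef (hR : IsRootSystem R) {γ : V} (hγ : γ ∈ R) (x y : V) :
    ⟪sRef γ x, sRef γ y⟫ = ⟪x, y⟫ := by
  have hG : ⟪γ, γ⟫ ≠ 0 := (root_inner_self_pos hR hγ).ne'
  simp only [sRef_apply, coroot, real_inner_smul_right, inner_sub_left, inner_sub_right,
    real_inner_smul_left]
  rw [real_inner_comm γ x, real_inner_comm γ y]
  field_simp
  ring

theorem sRef_sRef (hR : IsRootSystem R) {γ : V} (hγ : γ ∈ R) (x : V) :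
    sRef γ (sRef γ x) = x := by
  have hG : ⟪γ, γ⟫ ≠ 0 := (root_inner_self_pos hR hγ).ne'
  simp only [sRef_apply, coroot, real_inner_smul_right, inner_sub_left, real_inner_smul_left]
  rw [real_inner_comm γ x]
  match_scalars
  · ring
  · field_simp
    ring

theorem inner_sRef_left (hR : IsRootSystem R) {γ : V} (hγ : γ ∈ R) (x y : V) :
    ⟪sRef γ x, y⟫ = ⟪x, sRef γ y⟫ := by
  simp only [sRef_apply, coroot, real_inner_smul_right, inner_sub_left, inner_sub_right,
    real_inner_smul_left]
  rw [real_inner_comm γ x, real_inner_comm y γ]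
  ring

theorem repr_nonneg_or_nonpos (hR : IsRootSystem R) (hΔ : IsBase R Δ) {β : V} (hβ : β ∈ R) :
    (∀ δ : Δ, 0 ≤ (baseBasis hR hΔ).repr β δ) ∨ (∀ δ : Δ, (baseBasis hR hΔ).repr β δ ≤ 0) := by
  rcases hΔ.expand β hβ with ⟨c, hc⟩ | ⟨c, hc⟩
  · left
    intro δ
    rw [hc, repr_sum hR hΔ]
    positivity
  · right
    intro δ
    rw [hc, map_neg, Finsupp.neg_apply, repr_sum hR hΔ]
    simp

theorem root_repr_ne_zero (hR : IsRootSystem R) (hΔ : IsBase R Δ) {β : V} (hβ : β ∈ R) :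
    ∃ δ : Δ, (baseBasis hR hΔ).repr β δ ≠ 0 := by
  by_contra h
  push_neg at h
  apply root_ne_zero hR hβ
  apply (baseBasis hR hΔ).repr.injective
  ext δ
  simp [h δ]

end Aux2
section Aux3

variable {V : Type*} [NormedAddCommGroup V] [InnerProductSpace ℝ V] [FiniteDimensional ℝ V]
variable {R Δ : Finset V} {Rp : Finset V}

theorem Rp_subset (hRp : ∀ β, β ∈ Rp ↔ β ∈ R ∧ ∃ c : V → ℕ, β = ∑ δ ∈ Δ, (c δ : ℝ) • δ) :
    Rp ⊆ R := fun β hβ => ((hRp β).1 hβ).1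

theorem repr_nonneg_of_mem_Rp (hR : IsRootSystem R) (hΔ : IsBase R Δ)
    (hRp : ∀ β, β ∈ Rp ↔ β ∈ R ∧ ∃ c : V → ℕ, β = ∑ δ ∈ Δ, (c δ : ℝ) • δ)
    {β : V} (hβ : β ∈ Rp) (δ : Δ) : 0 ≤ (baseBasis hR hΔ).repr β δ := by
  obtain ⟨-, c, hc⟩ := (hRp β).1 hβ
  rw [hc, repr_sum hR hΔ]
  positivity

theorem mem_Rp_of_pos_coeff (hR : IsRootSystem R) (hΔ : IsBase R Δ)
    (hRp : ∀ β, β ∈ Rp ↔ β ∈ R ∧ ∃ c : V → ℕ, β = ∑ δ ∈ Δ, (c δ : ℝ) • δ)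
    {β : V} (hβ : β ∈ R) (δ : Δ) (h : 0 < (baseBasis hR hΔ).repr β δ) : β ∈ Rp := by
  rcases hΔ.expand β hβ with ⟨c, hc⟩ | ⟨c, hc⟩
  · exact (hRp β).2 ⟨hβ, c, hc⟩
  · exfalso
    have : (baseBasis hR hΔ).repr β δ ≤ 0 := by
      rw [hc, map_neg, Finsupp.neg_apply, repr_sum hR hΔ]
      simp
    linarith

theorem mem_Rp_or_neg_mem_Rp (hR : IsRootSystem R) (hΔ : IsBase R Δ)
    (hRp : ∀ β, β ∈ Rp ↔ β ∈ R ∧ ∃ c : V → ℕ, β = ∑ δ ∈ Δ, (c δ : ℝ) • δ)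
    {β : V} (hβ : β ∈ R) : β ∈ Rp ∨ -β ∈ Rp := by
  rcases hΔ.expand β hβ with ⟨c, hc⟩ | ⟨c, hc⟩
  · exact Or.inl ((hRp β).2 ⟨hβ, c, hc⟩)
  · refine Or.inr ((hRp (-β)).2 ⟨neg_root_mem hR hβ, c, ?_⟩)
    rw [hc, neg_neg]

theorem not_neg_mem_Rp (hR : IsRootSystem R) (hΔ : IsBase R Δ)
    (hRp : ∀ β, β ∈ Rp ↔ β ∈ R ∧ ∃ c : V → ℕ, β = ∑ δ ∈ Δ, (c δ : ℝ) • δ)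
    {β : V} (hβ : β ∈ Rp) : -β ∉ Rp := by
  intro hβ'
  obtain ⟨δ, hδ⟩ := root_repr_ne_zero hR hΔ (Rp_subset hRp hβ)
  have h1 := repr_nonneg_of_mem_Rp hR hΔ hRp hβ δ
  have h2 := repr_nonneg_of_mem_Rp hR hΔ hRp hβ' δ
  rw [map_neg, Finsupp.neg_apply] at h2
  exact hδ (le_antisymm (by linarith) h1)

variable {α ϖv : V}

theorem inner_coweight (hR : IsRootSystem R) (hΔ : IsBase R Δ) (hα : α ∈ Δ)
    (hϖv : ∀ β ∈ Δ, ⟪β, ϖv⟫ = if β = α then 1 else 0) (v : V) :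
    ⟪v, ϖv⟫ = (baseBasis hR hΔ).repr v ⟨α, hα⟩ := by
  conv_lhs => rw [← Module.Basis.sum_repr (baseBasis hR hΔ) v]
  rw [sum_inner]
  have : ∀ δ : Δ, ⟪(baseBasis hR hΔ).repr v δ • baseBasis hR hΔ δ, ϖv⟫
      = (baseBasis hR hΔ).repr v δ * (if (δ : V) = α then 1 else 0) := by
    intro δ
    rw [real_inner_smul_left, baseBasis_apply, hϖv δ δ.2]
  rw [Finset.sum_congr rfl fun δ _ => this δ]
  rw [Fintype.sum_eq_single (⟨α, hα⟩ : Δ)]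
  · simp
  · intro δ hδ
    have : (δ : V) ≠ α := fun h => hδ (Subtype.ext h)
    simp [this]

theorem eq_zero_of_inner_base_eq_zero (hR : IsRootSystem R) (hΔ : IsBase R Δ)
    {x : V} (h : ∀ δ ∈ Δ, ⟪(δ : V), x⟫ = 0) : x = 0 := by
  have hx : x ∈ (Submodule.span ℝ (Δ : Set V))ᗮ := by
    rw [Submodule.mem_orthogonal]
    intro u hu
    induction hu using Submodule.span_induction with
    | mem y hy => exact h y hy
    | zero => simp
    | add y z _ _ hy hz => rw [inner_add_left, hy, hz, add_zero]
    | smul c y _ hy => rw [real_inner_smul_left, hy, mul_zero]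
  rw [span_base_eq_top hR hΔ, Submodule.top_orthogonal_eq_bot] at hx
  exact hx

end Aux3
section Aux4

variable {V : Type*} [NormedAddCommGroup V] [InnerProductSpace ℝ V] [FiniteDimensional ℝ V]
variable {R Δ Rp : Finset V}

theorem inner_coroot_right (x γ : V) : ⟪x, coroot γ⟫ = 2 / ⟪γ, γ⟫ * ⟪x, γ⟫ := by
  simp [coroot, real_inner_smul_right]

theorem repr_base (hR : IsRootSystem R) (hΔ : IsBase R Δ) (δ δ' : Δ) :
    (baseBasis hR hΔ).repr (δ : V) δ' = if δ' = δ then 1 else 0 := by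
  rw [← baseBasis_apply hR hΔ δ, Module.Basis.repr_self]
  simp [Finsupp.single_apply, eq_comm]

theorem simple_mem_Rp (hR : IsRootSystem R) (hΔ : IsBase R Δ)
    (hRp : ∀ β, β ∈ Rp ↔ β ∈ R ∧ ∃ c : V → ℕ, β = ∑ δ ∈ Δ, (c δ : ℝ) • δ)
    {δ : V} (hδ : δ ∈ Δ) : δ ∈ Rp := by
  refine (hRp δ).2 ⟨hΔ.subset hδ, fun v => if v = δ then 1 else 0, ?_⟩
  rw [Finset.sum_congr rfl (g := fun v => if v = δ then v else 0) (fun v _ => by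
    by_cases h : v = δ <;> simp [h])]
  simp [Finset.sum_ite_eq' Δ δ, hδ]

theorem neg_simple_not_mem_Rp (hR : IsRootSystem R) (hΔ : IsBase R Δ)
    (hRp : ∀ β, β ∈ Rp ↔ β ∈ R ∧ ∃ c : V → ℕ, β = ∑ δ ∈ Δ, (c δ : ℝ) • δ)
    {δ : V} (hδ : δ ∈ Δ) : -δ ∉ Rp := by
  intro hmem
  have h1 := repr_nonneg_of_mem_Rp hR hΔ hRp hmem ⟨δ, hδ⟩
  rw [map_neg, Finsupp.neg_apply] at h1
  have h2 : ((baseBasis hR hΔ).repr δ) ⟨δ, hδ⟩ = 1 := by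
    have := repr_base hR hΔ ⟨δ, hδ⟩ ⟨δ, hδ⟩
    simpa using this
  rw [h2] at h1
  linarith

/-- distinct positive roots: reflection in a simple root preserves `Rp \ {δ}`. -/
theorem sRef_simple_mem_Rp (hR : IsRootSystem R) (hΔ : IsBase R Δ)
    (hRp : ∀ β, β ∈ Rp ↔ β ∈ R ∧ ∃ c : V → ℕ, β = ∑ δ ∈ Δ, (c δ : ℝ) • δ)
    {δ β : V} (hδ : δ ∈ Δ) (hβ : β ∈ Rp) (hne : β ≠ δ) : sRef δ β ∈ Rp := by
  have hβR : β ∈ R := Rp_subset hRp hβ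
  have hδR : δ ∈ R := hΔ.subset hδ
  -- find a simple root other than δ where β has positive coefficient
  have : ∃ δ' : Δ, (δ' : V) ≠ δ ∧ 0 < (baseBasis hR hΔ).repr β δ' := by
    by_contra hcon
    push_neg at hcon
    -- then β is a multiple of δ
    have hrep : ∀ δ' : Δ, (δ' : V) ≠ δ → (baseBasis hR hΔ).repr β δ' = 0 := fun δ' h =>
      le_antisymm (hcon δ' h) (repr_nonneg_of_mem_Rp hR hΔ hRp hβ δ')
    set t := (baseBasis hR hΔ).repr β ⟨δ, hδ⟩ with ht
    have hβt : β = t • δ := by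
      conv_lhs => rw [← Module.Basis.sum_repr (baseBasis hR hΔ) β]
      rw [Fintype.sum_eq_single (⟨δ, hδ⟩ : Δ)]
      · rw [baseBasis_apply]
      · intro δ' hδ'
        rw [hrep δ' (fun h => hδ' (Subtype.ext h)), zero_smul]
    rcases hR.reduced δ hδR t (hβt ▸ hβR) with h1 | h1
    · exact hne (by rw [hβt, h1, one_smul])
    · rw [h1, neg_one_smul] at hβt
      exact neg_simple_not_mem_Rp hR hΔ hRp hδ (hβt ▸ hβ)
  obtain ⟨δ', hδ'ne, hδ'pos⟩ := this
  have hmem : sRef δ β ∈ R := sRef_mem hR hδR hβR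
  apply mem_Rp_of_pos_coeff hR hΔ hRp hmem δ'
  rw [sRef_apply, map_sub, Finsupp.sub_apply, map_smul, Finsupp.smul_apply,
    repr_base hR hΔ ⟨δ, hδ⟩ δ']
  rw [if_neg (fun h => hδ'ne (by rw [h]))]
  simpa using hδ'pos

theorem sRef_simple_self (hR : IsRootSystem R) (hΔ : IsBase R Δ)
    {δ : V} (hδ : δ ∈ R) : sRef δ δ = -δ := by
  rw [sRef_apply, inner_self_coroot hR hδ, two_smul]
  abel

theorem sum_Rp_pairing (hR : IsRootSystem R) (hΔ : IsBase R Δ)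
    (hRp : ∀ β, β ∈ Rp ↔ β ∈ R ∧ ∃ c : V → ℕ, β = ∑ δ ∈ Δ, (c δ : ℝ) • δ)
    {δ : V} (hδ : δ ∈ Δ) : ⟪∑ β ∈ Rp, β, coroot δ⟫ = 2 := by
  have hδR : δ ∈ R := hΔ.subset hδ
  have hδRp : δ ∈ Rp := simple_mem_Rp hR hΔ hRp hδ
  -- sum of reflections over Rp
  have herase : ∑ β ∈ Rp.erase δ, sRef δ β = ∑ β ∈ Rp.erase δ, β := by
    refine Finset.sum_nbij' (i := sRef δ) (j := sRef δ) ?_ ?_ ?_ ?_ ?_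
    · intro a ha
      rw [Finset.mem_erase] at ha ⊢
      refine ⟨?_, sRef_simple_mem_Rp hR hΔ hRp hδ ha.2 ha.1⟩
      intro hEq
      have : a = sRef δ δ := by rw [← sRef_sRef hR hδR a, hEq]
      rw [sRef_simple_self hR hΔ hδR] at this
      exact neg_simple_not_mem_Rp hR hΔ hRp hδ (this ▸ ha.2)
    · intro a ha
      rw [Finset.mem_erase] at ha ⊢
      refine ⟨?_, sRef_simple_mem_Rp hR hΔ hRp hδ ha.2 ha.1⟩
      intro hEq
      have : a = sRef δ δ := by rw [← sRef_sRef hR hδR a, hEq]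
      rw [sRef_simple_self hR hΔ hδR] at this
      exact neg_simple_not_mem_Rp hR hΔ hRp hδ (this ▸ ha.2)
    · intro a _; exact sRef_sRef hR hδR a
    · intro a _; exact sRef_sRef hR hδR a
    · intro a _; rfl
  have key : ∑ β ∈ Rp, sRef δ β = (∑ β ∈ Rp, β) - (2 : ℝ) • δ := by
    rw [← Finset.add_sum_erase _ _ hδRp, ← Finset.add_sum_erase _ (fun β => β) hδRp,
      herase, sRef_simple_self hR hΔ hδR]
    rw [show ((2:ℝ) • δ) = δ + δ by rw [two_smul]]
    abel
  have lin : ∑ β ∈ Rp, sRef δ β = (∑ β ∈ Rp, β) - ⟪∑ β ∈ Rp, β, coroot δ⟫ • δ := by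
    rw [← map_sum, sRef_apply]
  rw [lin, sub_right_inj] at key
  have hδ0 : δ ≠ 0 := root_ne_zero hR hδR
  have h2 : (⟪∑ β ∈ Rp, β, coroot δ⟫ - 2) • δ = 0 := by
    rw [sub_smul, key, sub_self]
  rcases smul_eq_zero.1 h2 with h | h
  · linarith [sub_eq_zero.1 h]
  · exact absurd h hδ0

end Aux4
section Aux5

variable {V : Type*} [NormedAddCommGroup V] [InnerProductSpace ℝ V] [FiniteDimensional ℝ V]
variable {R Δ Rp : Finset V} {θ : V}

theorem repr_base' (hR : IsRootSystem R) (hΔ : IsBase R Δ) {δ : V} (hδ : δ ∈ Δ) (δ' : Δ) :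
    (baseBasis hR hΔ).repr δ δ' = if δ' = ⟨δ, hδ⟩ then 1 else 0 := by
  have := repr_base hR hΔ ⟨δ, hδ⟩ δ'
  simpa using this

theorem nonneg_inner_of_coroot {x δ : V} (hG : 0 < ⟪δ, δ⟫) (h : 0 ≤ ⟪x, coroot δ⟫) :
    0 ≤ ⟪x, δ⟫ := by
  rw [inner_coroot_right] at h
  by_contra habs
  push_neg at habs
  have h2 : 0 < 2 / ⟪δ, δ⟫ := by positivity
  nlinarith

theorem theta_dominant (hR : IsRootSystem R) (hΔ : IsBase R Δ) (hθR : θ ∈ R)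
    (hθhigh : ∀ β ∈ R, ∃ c : V → ℕ, θ - β = ∑ δ ∈ Δ, (c δ : ℝ) • δ)
    {δ : V} (hδ : δ ∈ Δ) : 0 ≤ ⟪θ, coroot δ⟫ := by
  have hδR : δ ∈ R := hΔ.subset hδ
  by_contra hneg
  push_neg at hneg
  obtain ⟨c, hc⟩ := hθhigh (sRef δ θ) (sRef_mem hR hδR hθR)
  have hsub : θ - sRef δ θ = ⟪θ, coroot δ⟫ • δ := by
    rw [sRef_apply]; abel
  rw [hsub] at hc
  have := congrArg (fun v => (baseBasis hR hΔ).repr v ⟨δ, hδ⟩) hc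
  simp only [map_smul, Finsupp.smul_apply] at this
  rw [repr_sum hR hΔ] at this
  rw [repr_base' hR hΔ hδ, if_pos rfl, smul_eq_mul, mul_one] at this
  have : (0:ℝ) ≤ ⟪θ, coroot δ⟫ := this ▸ Nat.cast_nonneg _
  linarith

theorem theta_dominant' (hR : IsRootSystem R) (hΔ : IsBase R Δ) (hθR : θ ∈ R)
    (hθhigh : ∀ β ∈ R, ∃ c : V → ℕ, θ - β = ∑ δ ∈ Δ, (c δ : ℝ) • δ)
    {δ : V} (hδ : δ ∈ Δ) : 0 ≤ ⟪θ, δ⟫ :=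
  nonneg_inner_of_coroot (root_inner_self_pos hR (hΔ.subset hδ))
    (theta_dominant hR hΔ hθR hθhigh hδ)

theorem theta_long (hR : IsRootSystem R) (hΔ : IsBase R Δ)
    (hRp : ∀ β, β ∈ Rp ↔ β ∈ R ∧ ∃ c : V → ℕ, β = ∑ δ ∈ Δ, (c δ : ℝ) • δ)
    (hθR : θ ∈ R)
    (hθhigh : ∀ β ∈ R, ∃ c : V → ℕ, θ - β = ∑ δ ∈ Δ, (c δ : ℝ) • δ)
    (hnorm : ∀ γ ∈ R, ⟪γ, γ⟫ ≤ 2) (hnorm' : ∃ γ ∈ R, ⟪γ, γ⟫ = 2) :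
    ⟪θ, θ⟫ = 2 := by
  classical
  -- the set of long positive roots
  set L := Rp.filter (fun β => ⟪β, β⟫ = 2) with hL
  have hLne : L.Nonempty := by
    obtain ⟨γ, hγR, hγ2⟩ := hnorm'
    rcases mem_Rp_or_neg_mem_Rp hR hΔ hRp hγR with h | h
    · exact ⟨γ, Finset.mem_filter.2 ⟨h, hγ2⟩⟩
    · exact ⟨-γ, Finset.mem_filter.2 ⟨h, by rwa [inner_neg_neg]⟩⟩
  set ht : V → ℝ := fun v => ∑ δ' : Δ, (baseBasis hR hΔ).repr v δ' with hht
  obtain ⟨γ, hγL, hγmax⟩ := Finset.exists_max_image L ht hLne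
  have hγRp : γ ∈ Rp := (Finset.mem_filter.1 hγL).1
  have hγ2 : ⟪γ, γ⟫ = 2 := (Finset.mem_filter.1 hγL).2
  have hγR : γ ∈ R := Rp_subset hRp hγRp
  -- γ is dominant
  have hdom : ∀ δ ∈ Δ, 0 ≤ ⟪γ, coroot δ⟫ := by
    intro δ hδ
    have hδR : δ ∈ R := hΔ.subset hδ
    by_contra hneg
    push_neg at hneg
    have hne : γ ≠ δ := by
      intro hEq
      rw [hEq, inner_self_coroot hR hδR] at hneg
      linarith
    have hβRp : sRef δ γ ∈ Rp := sRef_simple_mem_Rp hR hΔ hRp hδ hγRp hne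
    have hβL : sRef δ γ ∈ L := Finset.mem_filter.2 ⟨hβRp, by
      rw [inner_sRef_sRef hR hδR, hγ2]⟩
    have hsum1 : ∑ x : Δ, ((baseBasis hR hΔ).repr δ) x = 1 := by
      simp [repr_base' hR hΔ hδ]
    have hhtβ : ht (sRef δ γ) = ht γ - ⟪γ, coroot δ⟫ := by
      rw [hht]
      simp only [sRef_apply, map_sub, map_smul, Finsupp.sub_apply, Finsupp.smul_apply,
        smul_eq_mul, Finset.sum_sub_distrib, ← Finset.mul_sum, hsum1, mul_one]
    have := hγmax _ hβL
    rw [hhtβ] at this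
    linarith
  -- compare with θ
  obtain ⟨c, hc⟩ := hθhigh γ hγR
  have h1 : 0 ≤ ⟪θ, θ - γ⟫ := by
    rw [hc, inner_sum]
    apply Finset.sum_nonneg
    intro δ hδ
    rw [real_inner_smul_right]
    exact mul_nonneg (Nat.cast_nonneg _) (theta_dominant' hR hΔ hθR hθhigh hδ)
  have h2 : 0 ≤ ⟪θ - γ, γ⟫ := by
    rw [hc, sum_inner]
    apply Finset.sum_nonneg
    intro δ hδ
    rw [real_inner_smul_left]
    refine mul_nonneg (Nat.cast_nonneg _) ?_
    rw [real_inner_comm]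
    exact nonneg_inner_of_coroot (root_inner_self_pos hR (hΔ.subset hδ)) (hdom δ hδ)
  have e1 : ⟪θ, θ⟫ = ⟪θ, γ⟫ + ⟪θ, θ - γ⟫ := by rw [inner_sub_right]; ring
  have e2 : ⟪θ, γ⟫ = ⟪γ, γ⟫ + ⟪θ - γ, γ⟫ := by rw [inner_sub_left]; ring
  have := hnorm θ hθR
  linarith [e1, e2, h1, h2, hγ2.ge]

theorem rho_pairing (hR : IsRootSystem R) (hΔ : IsBase R Δ)
    (hRp : ∀ β, β ∈ Rp ↔ β ∈ R ∧ ∃ c : V → ℕ, β = ∑ δ ∈ Δ, (c δ : ℝ) • δ)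
    {ρ : V} (hρ : ρ = (2⁻¹ : ℝ) • ∑ β ∈ Rp, β) {δ : V} (hδ : δ ∈ Δ) :
    ⟪ρ, coroot δ⟫ = 1 := by
  rw [hρ, real_inner_smul_left, sum_Rp_pairing hR hΔ hRp hδ]
  norm_num

end Aux5
section Aux6

variable {V : Type*} [NormedAddCommGroup V] [InnerProductSpace ℝ V] [FiniteDimensional ℝ V]
variable {R Δ Rp : Finset V}

/-- The "Killing form" operator `x ↦ ∑ β ∈ R, ⟪β, x⟫ • β`. -/
def TT (R : Finset V) : V →ₗ[ℝ] V :=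
  ∑ β ∈ R, LinearMap.smulRight (innerSL ℝ β).toLinearMap β

theorem TT_apply (R : Finset V) (x : V) : TT R x = ∑ β ∈ R, ⟪β, x⟫ • β := by
  simp [TT, LinearMap.sum_apply]

theorem inner_TT (R : Finset V) (x y : V) : ⟪TT R x, y⟫ = ∑ β ∈ R, ⟪β, x⟫ * ⟪β, y⟫ := by
  rw [TT_apply, sum_inner]
  simp [real_inner_smul_left]

theorem TT_symmetric (R : Finset V) : (TT R).IsSymmetric := by
  intro x y
  rw [inner_TT]
  rw [show ⟪x, TT R y⟫ = ⟪TT R y, x⟫ from real_inner_comm _ _, inner_TT]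
  exact Finset.sum_congr rfl fun β _ => mul_comm _ _

theorem TT_comm_sRef (hR : IsRootSystem R) {γ : V} (hγ : γ ∈ R) (x : V) :
    TT R (sRef γ x) = sRef γ (TT R x) := by
  rw [TT_apply, TT_apply, map_sum]
  have h1 : ∀ β ∈ R, ⟪β, sRef γ x⟫ • β = ⟪sRef γ β, x⟫ • β := by
    intro β _
    rw [← inner_sRef_left hR hγ]
  rw [Finset.sum_congr rfl h1]
  have h2 : ∀ β ∈ R, sRef γ (⟪β, x⟫ • β) = ⟪β, x⟫ • sRef γ β := fun β _ => map_smul _ _ _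
  rw [Finset.sum_congr rfl h2]
  refine Finset.sum_nbij' (i := sRef γ) (j := sRef γ) ?_ ?_ ?_ ?_ ?_
  · intro a ha; exact sRef_mem hR hγ ha
  · intro a ha; exact sRef_mem hR hγ ha
  · intro a _; exact sRef_sRef hR hγ a
  · intro a _; exact sRef_sRef hR hγ a
  · intro a _
    rw [sRef_sRef hR hγ a]

theorem TT_smul_id (hR : IsRootSystem R) : ∃ μ : ℝ, ∀ x, TT R x = μ • x := by
  classical
  obtain ⟨β₀, hβ₀⟩ := hR.nonempty
  haveI : Nontrivial V := nontrivial_of_ne β₀ 0 (root_ne_zero hR hβ₀)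
  obtain ⟨μ, hμ⟩ : ∃ μ : ℝ, Module.End.HasEigenvalue (TT R) μ :=
    ⟨_, (TT_symmetric R).hasEigenvalue_iSup_of_finiteDimensional⟩
  set E := Module.End.eigenspace (TT R) μ with hE
  have hEne : E ≠ ⊥ := hμ
  refine ⟨μ, ?_⟩
  -- E is invariant under reflections
  have hEinv : ∀ γ ∈ R, ∀ x ∈ E, sRef γ x ∈ E := by
    intro γ hγ x hx
    rw [Module.End.mem_eigenspace_iff] at hx ⊢
    rw [TT_comm_sRef hR hγ, hx, map_smul]
  -- every root is in E or orthogonal to E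
  have hdich : ∀ β ∈ R, β ∈ E ∨ β ∈ Eᗮ := by
    intro β hβ
    set u : V := (E.orthogonalProjection β : V) with hu
    have huE : u ∈ E := (E.orthogonalProjection β).2
    have hvE : β - u ∈ Eᗮ := E.sub_starProjection_mem_orthogonal β
    have hup : ⟪u, β⟫ = ⟪u, u⟫ := by
      have : ⟪u, β - u⟫ = 0 := (Submodule.mem_orthogonal E (β - u)).1 hvE u huE
      rw [inner_sub_right] at this
      linarith
    set c : ℝ := ⟪u, coroot β⟫ with hc
    have hsu : sRef β u ∈ E := hEinv β hβ u huE
    have hmem1 : sRef β u - u + c • u ∈ E := by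
      exact Submodule.add_mem E (Submodule.sub_mem E hsu huE) (Submodule.smul_mem E c huE)
    have heq : sRef β u - u + c • u = -(c • (β - u)) := by
      rw [sRef_apply, ← hc]
      rw [smul_sub]
      abel
    have hmem2 : c • (β - u) ∈ Eᗮ := Submodule.smul_mem _ c hvE
    have hzero : c • (β - u) = 0 := by
      have h1 : c • (β - u) ∈ E := by
        have := Submodule.neg_mem E (heq ▸ hmem1)
        rwa [neg_neg] at this
      have : c • (β - u) ∈ E ⊓ Eᗮ := ⟨h1, hmem2⟩
      rwa [Submodule.inf_orthogonal_eq_bot, Submodule.mem_bot] at this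
    rcases smul_eq_zero.1 hzero with h | h
    · -- c = 0, so u = 0, so β ∈ Eᗮ
      right
      have hG := root_inner_self_pos hR hβ
      have hc0 : (2 / ⟪β, β⟫) * ⟪u, u⟫ = 0 := by
        rw [← hup, ← inner_coroot_right, ← hc, h]
      have h2G : (2 : ℝ) / ⟪β, β⟫ ≠ 0 := by positivity
      have hu0 : u = 0 := real_inner_self_nonpos.1
        (le_of_eq ((mul_eq_zero.1 hc0).resolve_left h2G))
      rwa [hu0, sub_zero] at hvE
    · left
      have : β = u := by rwa [sub_eq_zero] at h
      rw [this]; exact huE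
  -- irreducibility forces E = ⊤
  have hSclosed : ∀ a ∈ R, ∀ b ∈ R, a ∈ (E : Set V) → ⟪a, b⟫ ≠ 0 → b ∈ (E : Set V) := by
    intro a ha b hb haE hab
    rcases hdich b hb with h | h
    · exact h
    · exact absurd ((Submodule.mem_orthogonal E b).1 h a haE) hab
  have hSex : ∃ a ∈ R, a ∈ (E : Set V) := by
    by_contra hcon
    push_neg at hcon
    obtain ⟨e, heE, hene⟩ := Submodule.exists_mem_ne_zero_of_ne_bot hEne
    have hle : Submodule.span ℝ (R : Set V) ≤ Eᗮ := Submodule.span_le.2 fun β hβ => by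
      rcases hdich β hβ with h | h
      · exact absurd h (hcon β hβ)
      · exact h
    rw [hR.span_eq_top, top_le_iff] at hle
    have heO : e ∈ Eᗮ := by rw [hle]; trivial
    have : ⟪e, e⟫ = 0 := (Submodule.mem_orthogonal E e).1 heO e heE
    exact hene (real_inner_self_nonpos.1 (le_of_eq this))
  have hall : ∀ β ∈ R, β ∈ (E : Set V) := hR.irreducible _ hSclosed hSex
  have hEtop : E = ⊤ := by
    rw [← top_le_iff, ← hR.span_eq_top]
    exact Submodule.span_le.2 hall
  intro x
  have hx : x ∈ E := hEtop ▸ Submodule.mem_top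
  exact Module.End.mem_eigenspace_iff.1 hx

end Aux6
section Aux7

variable {V : Type*} [NormedAddCommGroup V] [InnerProductSpace ℝ V] [FiniteDimensional ℝ V]
variable {R Δ Rp : Finset V} {θ : V}

theorem sum_R_eq_two_mul (hR : IsRootSystem R) (hΔ : IsBase R Δ)
    (hRp : ∀ β, β ∈ Rp ↔ β ∈ R ∧ ∃ c : V → ℕ, β = ∑ δ ∈ Δ, (c δ : ℝ) • δ)
    (f : V → ℝ) (hf : ∀ β, f (-β) = f β) :
    ∑ β ∈ R, f β = 2 * ∑ β ∈ Rp, f β := by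
  classical
  have hun : R = Rp ∪ Rp.image Neg.neg := by
    ext β
    constructor
    · intro hβ
      rcases mem_Rp_or_neg_mem_Rp hR hΔ hRp hβ with h | h
      · exact Finset.mem_union_left _ h
      · exact Finset.mem_union_right _ (Finset.mem_image.2 ⟨-β, h, neg_neg β⟩)
    · intro hβ
      rcases Finset.mem_union.1 hβ with h | h
      · exact Rp_subset hRp h
      · obtain ⟨b, hb, rfl⟩ := Finset.mem_image.1 h
        exact neg_root_mem hR (Rp_subset hRp hb)
  have hdisj : Disjoint Rp (Rp.image Neg.neg) := by
    rw [Finset.disjoint_left]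
    intro β hβ hβ'
    obtain ⟨b, hb, hbe⟩ := Finset.mem_image.1 hβ'
    have : -β ∈ Rp := by rw [← hbe, neg_neg]; exact hb
    exact not_neg_mem_Rp hR hΔ hRp hβ this
  rw [hun, Finset.sum_union hdisj, Finset.sum_image (fun a _ b _ h => neg_injective h)]
  rw [Finset.sum_congr rfl fun β _ => hf β]
  ring

theorem rho_theta (hR : IsRootSystem R) (hΔ : IsBase R Δ)
    (hRp : ∀ β, β ∈ Rp ↔ β ∈ R ∧ ∃ c : V → ℕ, β = ∑ δ ∈ Δ, (c δ : ℝ) • δ)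
    {ρ : V} (hρ : ρ = (2⁻¹ : ℝ) • ∑ β ∈ Rp, β)
    {g : V → ℕ} (hg : coroot θ = ∑ δ ∈ Δ, (g δ : ℝ) • coroot δ)
    {gtot : ℝ} (hgtot : gtot = 1 + ∑ β ∈ Δ, (g β : ℝ)) :
    ⟪ρ, coroot θ⟫ = gtot - 1 := by
  rw [hg, inner_sum]
  rw [Finset.sum_congr rfl fun δ hδ => by
    rw [real_inner_smul_right, rho_pairing hR hΔ hRp hρ hδ, mul_one]]
  rw [hgtot]; ring

theorem theta_coroot_self (hθ2 : ⟪θ, θ⟫ = 2) : coroot θ = θ := by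
  rw [coroot, hθ2]
  norm_num

/-- the pairing of a positive root with the highest root. -/
theorem pairing_theta (hR : IsRootSystem R) (hΔ : IsBase R Δ)
    (hRp : ∀ β, β ∈ Rp ↔ β ∈ R ∧ ∃ c : V → ℕ, β = ∑ δ ∈ Δ, (c δ : ℝ) • δ)
    (hθR : θ ∈ R)
    (hθhigh : ∀ β ∈ R, ∃ c : V → ℕ, θ - β = ∑ δ ∈ Δ, (c δ : ℝ) • δ)
    (hnorm : ∀ γ ∈ R, ⟪γ, γ⟫ ≤ 2) (hθ2 : ⟪θ, θ⟫ = 2)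
    {β : V} (hβ : β ∈ Rp) :
    ∃ n : ℕ, ⟪β, θ⟫ = (n : ℝ) ∧ n ≤ 2 ∧ (n = 2 → β = θ) := by
  have hβR : β ∈ R := Rp_subset hRp hβ
  obtain ⟨m, hm⟩ := hR.crystallographic θ hθR β hβR
  rw [theta_coroot_self hθ2] at hm
  have hnn : 0 ≤ ⟪β, θ⟫ := by
    obtain ⟨-, c, hc⟩ := (hRp β).1 hβ
    rw [hc, sum_inner]
    apply Finset.sum_nonneg
    intro δ hδ
    rw [real_inner_smul_left]
    refine mul_nonneg (Nat.cast_nonneg _) ?_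
    rw [real_inner_comm]
    exact theta_dominant' hR hΔ hθR hθhigh hδ
  have heq2 : (2:ℝ) ≤ ⟪β, θ⟫ → β = θ := by
    intro h2
    have hββ := hnorm β hβR
    have hs : ⟪β - θ, β - θ⟫ ≤ 0 := by
      rw [inner_sub_sub_self, hθ2]
      have hc := real_inner_comm β θ
      linarith
    have := real_inner_self_nonpos.1 hs
    rwa [sub_eq_zero] at this
  have hm0 : 0 ≤ m := by exact_mod_cast hm ▸ hnn
  set n := m.toNat with hn
  have hmn : (m : ℝ) = (n : ℝ) := by
    rw [hn]; exact_mod_cast (Int.toNat_of_nonneg hm0).symm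
  refine ⟨n, by rw [hm, hmn], ?_, ?_⟩
  · by_contra hgt
    push_neg at hgt
    have h3 : (2:ℝ) < ⟪β, θ⟫ := by
      rw [hm, hmn]; exact_mod_cast hgt
    have hβθ := heq2 h3.le
    rw [hβθ, hθ2, hmn] at hm
    have h4 : n = 2 := by exact_mod_cast hm.symm
    omega
  · intro h2
    apply heq2
    rw [hm, hmn, h2]; norm_num

end Aux7
section Aux8

variable {V : Type*} [NormedAddCommGroup V] [InnerProductSpace ℝ V] [FiniteDimensional ℝ V]
variable {R Δ Rp : Finset V} {θ : V}

theorem sum_sq_theta (hR : IsRootSystem R) (hΔ : IsBase R Δ)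
    (hRp : ∀ β, β ∈ Rp ↔ β ∈ R ∧ ∃ c : V → ℕ, β = ∑ δ ∈ Δ, (c δ : ℝ) • δ)
    (hθR : θ ∈ R)
    (hθhigh : ∀ β ∈ R, ∃ c : V → ℕ, θ - β = ∑ δ ∈ Δ, (c δ : ℝ) • δ)
    (hnorm : ∀ γ ∈ R, ⟪γ, γ⟫ ≤ 2) (hθ2 : ⟪θ, θ⟫ = 2)
    {ρ : V} (hρ : ρ = (2⁻¹ : ℝ) • ∑ β ∈ Rp, β)
    {h g : V → ℕ} (hh : θ = ∑ δ ∈ Δ, (h δ : ℝ) • δ)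
    (hg : coroot θ = ∑ δ ∈ Δ, (g δ : ℝ) • coroot δ)
    {gtot : ℝ} (hgtot : gtot = 1 + ∑ β ∈ Δ, (g β : ℝ)) :
    ∑ β ∈ Rp, ⟪β, θ⟫ ^ 2 = 2 * gtot := by
  classical
  have hθRp : θ ∈ Rp := (hRp θ).2 ⟨hθR, h, hh⟩
  have hsplit : ∀ β ∈ Rp, ⟪β, θ⟫ ^ 2 = ⟪β, θ⟫ + (if β = θ then 2 else 0) := by
    intro β hβ
    obtain ⟨n, hn, hn2, hneq⟩ := pairing_theta hR hΔ hRp hθR hθhigh hnorm hθ2 hβ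
    by_cases hcase : β = θ
    · rw [if_pos hcase, hcase, hθ2]; norm_num
    · rw [if_neg hcase]
      have hne2 : n ≠ 2 := fun hc => hcase (hneq hc)
      have hn1 : n ≤ 1 := by omega
      interval_cases n <;> rw [hn] <;> norm_num
  rw [Finset.sum_congr rfl hsplit, Finset.sum_add_distrib]
  have h1 : ∑ β ∈ Rp, ⟪β, θ⟫ = 2 * (gtot - 1) := by
    rw [← sum_inner]
    have : ∑ β ∈ Rp, β = (2:ℝ) • ρ := by rw [hρ, smul_smul]; norm_num
    rw [this, real_inner_smul_left]
    rw [show ⟪ρ, θ⟫ = ⟪ρ, coroot θ⟫ by rw [theta_coroot_self hθ2]]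
    rw [rho_theta hR hΔ hRp hρ hg hgtot]
  have h2 : (∑ β ∈ Rp, if β = θ then (2:ℝ) else 0) = 2 := by
    rw [Finset.sum_ite_eq' Rp θ fun _ => (2:ℝ), if_pos hθRp]
  rw [h1, h2]; ring

theorem mu_eq (hR : IsRootSystem R) (hΔ : IsBase R Δ)
    (hRp : ∀ β, β ∈ Rp ↔ β ∈ R ∧ ∃ c : V → ℕ, β = ∑ δ ∈ Δ, (c δ : ℝ) • δ)
    (hθR : θ ∈ R)
    (hθhigh : ∀ β ∈ R, ∃ c : V → ℕ, θ - β = ∑ δ ∈ Δ, (c δ : ℝ) • δ)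
    (hnorm : ∀ γ ∈ R, ⟪γ, γ⟫ ≤ 2) (hθ2 : ⟪θ, θ⟫ = 2)
    {ρ : V} (hρ : ρ = (2⁻¹ : ℝ) • ∑ β ∈ Rp, β)
    {h g : V → ℕ} (hh : θ = ∑ δ ∈ Δ, (h δ : ℝ) • δ)
    (hg : coroot θ = ∑ δ ∈ Δ, (g δ : ℝ) • coroot δ)
    {gtot : ℝ} (hgtot : gtot = 1 + ∑ β ∈ Δ, (g β : ℝ))
    {μ : ℝ} (hμ : ∀ x, TT R x = μ • x) : μ = 2 * gtot := by
  have hTθ : ⟪TT R θ, θ⟫ = μ * 2 := by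
    rw [hμ θ, real_inner_smul_left, hθ2]
  have hTθ' : ⟪TT R θ, θ⟫ = 2 * (2 * gtot) := by
    rw [inner_TT]
    have : ∀ β : V, (fun b => ⟪b, θ⟫ * ⟪b, θ⟫) (-β) = (fun b => ⟪b, θ⟫ * ⟪b, θ⟫) β := by
      intro β; simp [inner_neg_left]
    rw [show (∑ β ∈ R, ⟪β, θ⟫ * ⟪β, θ⟫) = 2 * ∑ β ∈ Rp, ⟪β, θ⟫ * ⟪β, θ⟫ from
      sum_R_eq_two_mul hR hΔ hRp _ this]
    rw [Finset.sum_congr rfl fun β _ => (sq ⟪β, θ⟫).symm]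
    rw [sum_sq_theta hR hΔ hRp hθR hθhigh hnorm hθ2 hρ hh hg hgtot]
  linarith

theorem Q_eq (hR : IsRootSystem R) (hΔ : IsBase R Δ)
    (hRp : ∀ β, β ∈ Rp ↔ β ∈ R ∧ ∃ c : V → ℕ, β = ∑ δ ∈ Δ, (c δ : ℝ) • δ)
    {gtot μ : ℝ} (hμ : ∀ x, TT R x = μ • x) (hμval : μ = 2 * gtot) (ϖv : V) :
    ∑ β ∈ Rp, ⟪β, ϖv⟫ ^ 2 = gtot * ⟪ϖv, ϖv⟫ := by
  have h1 : ⟪TT R ϖv, ϖv⟫ = 2 * gtot * ⟪ϖv, ϖv⟫ := by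
    rw [hμ ϖv, real_inner_smul_left, hμval]
  rw [inner_TT] at h1
  have heven : ∀ β : V, (fun b => ⟪b, ϖv⟫ * ⟪b, ϖv⟫) (-β) = (fun b => ⟪b, ϖv⟫ * ⟪b, ϖv⟫) β := by
    intro β; simp [inner_neg_left]
  rw [sum_R_eq_two_mul hR hΔ hRp _ heven] at h1
  rw [Finset.sum_congr rfl fun β (_ : β ∈ Rp) => (sq ⟪β, ϖv⟫).symm] at h1
  linarith

theorem weight_eq_smul_coweight (hR : IsRootSystem R) (hΔ : IsBase R Δ)
    {α ϖ ϖv : V} (hα : α ∈ Δ)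
    (hϖ : ∀ β ∈ Δ, ⟪ϖ, coroot β⟫ = if β = α then 1 else 0)
    (hϖv : ∀ β ∈ Δ, ⟪β, ϖv⟫ = if β = α then 1 else 0) :
    ϖ = (⟪α, α⟫ / 2) • ϖv := by
  have key : ∀ δ ∈ Δ, ⟪(δ : V), ϖ - (⟪α, α⟫ / 2) • ϖv⟫ = 0 := by
    intro δ hδ
    have hG := root_inner_self_pos hR (hΔ.subset hδ)
    have h1 := hϖ δ hδ
    rw [inner_coroot_right] at h1
    rw [inner_sub_right, real_inner_smul_right, hϖv δ hδ]
    by_cases hcase : δ = α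
    · rw [if_pos hcase] at h1 ⊢
      rw [real_inner_comm]
      subst hcase
      field_simp at h1 ⊢
      linarith
    · rw [if_neg hcase] at h1 ⊢
      rw [real_inner_comm]
      have h2G : (2:ℝ) / ⟪δ, δ⟫ ≠ 0 := by positivity
      have : ⟪ϖ, δ⟫ = 0 := by
        rcases mul_eq_zero.1 h1 with hcc | hcc
        · exact absurd hcc h2G
        · exact hcc
      rw [this]; ring
  have := eq_zero_of_inner_base_eq_zero hR hΔ key
  rwa [sub_eq_zero] at this

theorem g_alpha_eq (hR : IsRootSystem R) (hΔ : IsBase R Δ)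
    (hθ2 : ⟪θ, θ⟫ = 2) {α : V} (hα : α ∈ Δ)
    {h g : V → ℕ} (hh : θ = ∑ δ ∈ Δ, (h δ : ℝ) • δ)
    (hg : coroot θ = ∑ δ ∈ Δ, (g δ : ℝ) • coroot δ) :
    (g α : ℝ) = (h α : ℝ) * ⟪α, α⟫ / 2 := by
  have hGα := root_inner_self_pos hR (hΔ.subset hα)
  have hθeq : ∑ δ ∈ Δ, (h δ : ℝ) • δ = ∑ δ ∈ Δ, ((g δ : ℝ) * (2 / ⟪δ, δ⟫)) • δ := by
    rw [← hh, ← theta_coroot_self hθ2, hg]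
    refine Finset.sum_congr rfl fun δ hδ => ?_
    rw [coroot, smul_smul]
  have := congrArg (fun v => (baseBasis hR hΔ).repr v ⟨α, hα⟩) hθeq
  rw [repr_sum hR hΔ, repr_sum hR hΔ] at this
  rw [this]
  field_simp

end Aux8

/-- Formulas for `i(α,k)`, `d_1(α)` and `Σ_k φ(k) d_k(α)`. -/
theorem statement_12 {V : Type*} [NormedAddCommGroup V] [InnerProductSpace ℝ V]
    [FiniteDimensional ℝ V]
    (R Δ : Finset V) (hR : IsRootSystem R) (hΔ : IsBase R Δ)
    -- normalization: long roots have squared length 2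
    (hnorm : ∀ γ ∈ R, ⟪γ, γ⟫ ≤ 2) (hnorm' : ∃ γ ∈ R, ⟪γ, γ⟫ = 2)
    -- `Rp = R⁺` is the set of positive roots
    (Rp : Finset V)
    (hRp : ∀ β, β ∈ Rp ↔ β ∈ R ∧ ∃ c : V → ℕ, β = ∑ δ ∈ Δ, (c δ : ℝ) • δ)
    -- `ρ` is half the sum of the positive roots
    (ρ : V) (hρ : ρ = (2⁻¹ : ℝ) • ∑ β ∈ Rp, β)
    -- `θ = α̃` is the highest root
    (θ : V) (hθR : θ ∈ R)
    (hθhigh : ∀ β ∈ R, ∃ c : V → ℕ, θ - β = ∑ δ ∈ Δ, (c δ : ℝ) • δ)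
    -- the coefficients `h_β` of the highest root and `g_β` of the highest coroot
    (h g : V → ℕ)
    (hh : θ = ∑ δ ∈ Δ, (h δ : ℝ) • δ) (hhpos : ∀ δ ∈ Δ, 0 < h δ)
    (hg : coroot θ = ∑ δ ∈ Δ, (g δ : ℝ) • coroot δ) (hgpos : ∀ δ ∈ Δ, 0 < g δ)
    -- `gtot = g` is the dual Coxeter number
    (gtot : ℝ) (hgtot : gtot = 1 + ∑ β ∈ Δ, (g β : ℝ))
    (α : V) (hα : α ∈ Δ)
    -- the fundamental weight `ϖ = ϖ_α` and fundamental coweight `ϖv = ϖ_α∨`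
    (ϖ : V) (hϖ : ∀ β ∈ Δ, ⟪ϖ, coroot β⟫ = if β = α then 1 else 0)
    (ϖv : V) (hϖv : ∀ β ∈ Δ, ⟪β, ϖv⟫ = if β = α then 1 else 0) :
    -- (a)
    (∀ k : ℕ, 1 ≤ k →
      iNum R ϖ ϖv k =
        (h α : ℝ) * gtot * (k : ℝ) *
            ((R.filter fun β => ⟪β, ϖv⟫ = (k : ℝ)).card : ℝ) /
          ((g α : ℝ) * ∑ β ∈ Rp, ⟪β, ϖv⟫ ^ 2)) ∧
    -- (b)
    (dSeq R ϖ ϖv 1 = 2 * ⟪ρ, ϖv⟫ / ⟪ϖ, ϖv⟫ ∧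
      dSeq R ϖ ϖv 1 =
        (h α : ℝ) * gtot * (∑ β ∈ Rp, ⟪β, ϖv⟫) /
          ((g α : ℝ) * ∑ β ∈ Rp, ⟪β, ϖv⟫ ^ 2)) ∧
    -- (c)
    (∑' k : ℕ, (if 1 ≤ k then (k.totient : ℝ) * dSeq R ϖ ϖv k else 0)) =
      (h α : ℝ) * gtot / (g α : ℝ) := by
  
  classical
  have hw : ϖ = (⟪α, α⟫ / 2) • ϖv := weight_eq_smul_coweight hR hΔ hα hϖ hϖv
  have hθ2 : ⟪θ, θ⟫ = 2 := theta_long hR hΔ hRp hθR hθhigh hnorm hnorm'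
  obtain ⟨μ, hμ⟩ := TT_smul_id hR
  have hμval : μ = 2 * gtot := mu_eq hR hΔ hRp hθR hθhigh hnorm hθ2 hρ hh hg hgtot hμ
  have hQ : ∑ β ∈ Rp, ⟪β, ϖv⟫ ^ 2 = gtot * ⟪ϖv, ϖv⟫ := Q_eq hR hΔ hRp hμ hμval ϖv
  have hga : (g α : ℝ) = (h α : ℝ) * ⟪α, α⟫ / 2 := g_alpha_eq hR hΔ hθ2 hα hh hg
  have hGα : 0 < ⟪α, α⟫ := root_inner_self_pos hR (hΔ.subset hα)
  have hϖv0 : ϖv ≠ 0 := by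
    intro h0
    have := hϖv α hα
    rw [h0, inner_zero_right, if_pos rfl] at this
    norm_num at this
  have hϖvsq : 0 < ⟪ϖv, ϖv⟫ :=
    lt_of_le_of_ne real_inner_self_nonneg fun hEq => hϖv0 (real_inner_self_nonpos.1 hEq.ge)
  have hw0 : 0 < ⟪ϖ, ϖv⟫ := by rw [hw, real_inner_smul_left]; positivity
  have hwne : ⟪ϖ, ϖv⟫ ≠ 0 := hw0.ne'
  have hgtot0 : 0 < gtot := by
    rw [hgtot]
    have : (0:ℝ) ≤ ∑ β ∈ Δ, (g β : ℝ) := Finset.sum_nonneg fun β _ => Nat.cast_nonneg _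
    linarith
  have hha : (0:ℝ) < (h α : ℝ) := by exact_mod_cast hhpos α hα
  have hga0 : (0:ℝ) < (g α : ℝ) := by exact_mod_cast hgpos α hα
  have hKEY : (g α : ℝ) * ∑ β ∈ Rp, ⟪β, ϖv⟫ ^ 2 = (h α : ℝ) * gtot * ⟪ϖ, ϖv⟫ := by
    rw [hQ, hga, hw, real_inner_smul_left]; ring
  -- part (a)
  have parta : ∀ k : ℕ, 1 ≤ k →
      iNum R ϖ ϖv k =
        (h α : ℝ) * gtot * (k : ℝ) * ((R.filter fun β => ⟪β, ϖv⟫ = (k : ℝ)).card : ℝ) /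
          ((g α : ℝ) * ∑ β ∈ Rp, ⟪β, ϖv⟫ ^ 2) := by
    intro k _
    have hhg : (h α : ℝ) * gtot ≠ 0 := by positivity
    rw [iNum, hKEY]
    field_simp
  -- basic values of the pairing with the coweight
  have hθwv : ⟪θ, ϖv⟫ = (h α : ℝ) := by
    rw [inner_coweight hR hΔ hα hϖv θ, hh, repr_sum hR hΔ]
  have hbound : ∀ β ∈ R, ⟪β, ϖv⟫ ≤ (h α : ℝ) := by
    intro β hβ
    obtain ⟨c, hc⟩ := hθhigh β hβ
    have h1 : 0 ≤ ⟪θ - β, ϖv⟫ := by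
      rw [hc, sum_inner]
      apply Finset.sum_nonneg
      intro δ hδ
      rw [real_inner_smul_left, hϖv δ hδ]
      refine mul_nonneg (Nat.cast_nonneg _) ?_
      split <;> norm_num
    rw [inner_sub_left, hθwv] at h1
    linarith
  have hval : ∀ β ∈ Rp, ∃ n : ℕ, ⟪β, ϖv⟫ = (n : ℝ) := by
    intro β hβ
    obtain ⟨-, c, hc⟩ := (hRp β).1 hβ
    exact ⟨c α, by rw [hc, inner_coweight hR hΔ hα hϖv, repr_sum hR hΔ]⟩
  have hfilter : ∀ k : ℕ, 1 ≤ k →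
      (R.filter fun β => ⟪β, ϖv⟫ = (k : ℝ)) = Rp.filter fun β => ⟪β, ϖv⟫ = (k : ℝ) := by
    intro k hk
    ext β
    simp only [Finset.mem_filter]
    constructor
    · rintro ⟨hβ, hv⟩
      refine ⟨mem_Rp_of_pos_coeff hR hΔ hRp hβ ⟨α, hα⟩ ?_, hv⟩
      rw [← inner_coweight hR hΔ hα hϖv, hv]
      exact_mod_cast hk
    · rintro ⟨hβ, hv⟩
      exact ⟨Rp_subset hRp hβ, hv⟩
  -- fiber decomposition of sums over Rp
  have hmap : ∀ β ∈ Rp, ⌊⟪β, ϖv⟫⌋₊ ∈ Finset.range (h α + 1) := by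
    intro β hβ
    obtain ⟨n, hn⟩ := hval β hβ
    rw [hn, Nat.floor_natCast, Finset.mem_range]
    have h2 : (n : ℝ) ≤ ((h α : ℕ) : ℝ) := hn ▸ hbound β (Rp_subset hRp hβ)
    exact Nat.lt_succ_of_le (by exact_mod_cast h2)
  have hfib : ∀ x : ℕ, (Rp.filter fun β => ⌊⟪β, ϖv⟫⌋₊ = x) =
      Rp.filter fun β => ⟪β, ϖv⟫ = (x : ℝ) := by
    intro x
    apply Finset.filter_congr
    intro β hβ
    obtain ⟨n, hn⟩ := hval β hβ
    rw [hn, Nat.floor_natCast]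
    exact_mod_cast Iff.rfl
  have hsumv : ∑ β ∈ Rp, ⟪β, ϖv⟫ =
      ∑ x ∈ Finset.range (h α + 1),
        (x : ℝ) * ((Rp.filter fun β => ⟪β, ϖv⟫ = (x : ℝ)).card : ℝ) := by
    rw [← Finset.sum_fiberwise_of_maps_to hmap fun β => ⟪β, ϖv⟫]
    refine Finset.sum_congr rfl fun x _ => ?_
    rw [hfib x, Finset.sum_congr rfl fun β hβ => (Finset.mem_filter.1 hβ).2,
      Finset.sum_const, nsmul_eq_mul, mul_comm]
  have hsumv2 : ∑ β ∈ Rp, ⟪β, ϖv⟫ ^ 2 =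
      ∑ x ∈ Finset.range (h α + 1),
        (x : ℝ) ^ 2 * ((Rp.filter fun β => ⟪β, ϖv⟫ = (x : ℝ)).card : ℝ) := by
    rw [← Finset.sum_fiberwise_of_maps_to hmap fun β => ⟪β, ϖv⟫ ^ 2]
    refine Finset.sum_congr rfl fun x _ => ?_
    rw [hfib x, Finset.sum_congr rfl fun β hβ => by rw [(Finset.mem_filter.1 hβ).2],
      Finset.sum_const, nsmul_eq_mul, mul_comm]
  have hSv : ∑ β ∈ Rp, ⟪β, ϖv⟫ = 2 * ⟪ρ, ϖv⟫ := by
    rw [hρ, real_inner_smul_left, ← sum_inner]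
    ring
  -- replace Rp-filters by R-filters
  have hcards : ∀ x ∈ Finset.range (h α + 1),
      (x : ℝ) * ((Rp.filter fun β => ⟪β, ϖv⟫ = (x : ℝ)).card : ℝ) =
      (x : ℝ) * ((R.filter fun β => ⟪β, ϖv⟫ = (x : ℝ)).card : ℝ) := by
    intro x _
    rcases Nat.eq_zero_or_pos x with h0 | h1
    · subst h0; norm_num
    · rw [hfilter x h1]
  have hcards2 : ∀ x ∈ Finset.range (h α + 1),
      (x : ℝ) ^ 2 * ((Rp.filter fun β => ⟪β, ϖv⟫ = (x : ℝ)).card : ℝ) =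
      (x : ℝ) ^ 2 * ((R.filter fun β => ⟪β, ϖv⟫ = (x : ℝ)).card : ℝ) := by
    intro x _
    rcases Nat.eq_zero_or_pos x with h0 | h1
    · subst h0; norm_num
    · rw [hfilter x h1]
  have hval_total : ∑ x ∈ Finset.range (h α + 1),
      (x : ℝ) * ((R.filter fun β => ⟪β, ϖv⟫ = (x : ℝ)).card : ℝ) = 2 * ⟪ρ, ϖv⟫ := by
    rw [← Finset.sum_congr rfl hcards, ← hsumv, hSv]
  have hsq_total : ∑ x ∈ Finset.range (h α + 1),
      (x : ℝ) ^ 2 * ((R.filter fun β => ⟪β, ϖv⟫ = (x : ℝ)).card : ℝ) =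
      ∑ β ∈ Rp, ⟪β, ϖv⟫ ^ 2 := by
    rw [← Finset.sum_congr rfl hcards2, ← hsumv2]
  -- vanishing of iNum
  have hiNum0 : ∀ x : ℕ, h α < x → iNum R ϖ ϖv x = 0 := by
    intro x hx
    rw [iNum]
    have : (R.filter fun β => ⟪β, ϖv⟫ = (x : ℝ)) = ∅ := by
      rw [Finset.filter_eq_empty_iff]
      intro β hβ
      intro hEq
      have h1 := hbound β hβ
      rw [hEq] at h1
      have : x ≤ h α := by exact_mod_cast h1
      omega
    rw [this]
    norm_num
  have hiNum00 : iNum R ϖ ϖv 0 = 0 := by rw [iNum]; norm_num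
  have hdSeq : ∀ k, dSeq R ϖ ϖv k =
      ∑ x ∈ Finset.range (h α + 1), if k ∣ x ∧ 1 ≤ x then iNum R ϖ ϖv x else 0 := by
    intro k
    rw [dSeq]
    apply tsum_eq_sum
    intro x hx
    rw [Finset.mem_range, not_lt] at hx
    split
    · exact hiNum0 x (by omega)
    · rfl
  -- part (b1)
  have hb1 : dSeq R ϖ ϖv 1 = 2 * ⟪ρ, ϖv⟫ / ⟪ϖ, ϖv⟫ := by
    rw [hdSeq 1]
    have hcong : ∀ x ∈ Finset.range (h α + 1),
        (if 1 ∣ x ∧ 1 ≤ x then iNum R ϖ ϖv x else 0) = iNum R ϖ ϖv x := by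
      intro x _
      rcases Nat.eq_zero_or_pos x with h0 | h1
      · subst h0
        rw [if_neg (by omega), hiNum00]
      · rw [if_pos ⟨one_dvd x, h1⟩]
    rw [Finset.sum_congr rfl hcong]
    have : ∀ x ∈ Finset.range (h α + 1), iNum R ϖ ϖv x =
        (x : ℝ) * ((R.filter fun β => ⟪β, ϖv⟫ = (x : ℝ)).card : ℝ) / ⟪ϖ, ϖv⟫ := by
      intro x _; rw [iNum]
    rw [Finset.sum_congr rfl this, ← Finset.sum_div, hval_total]
  refine ⟨parta, ⟨hb1, ?_⟩, ?_⟩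
  · -- part (b2)
    have hQpos : 0 < ∑ β ∈ Rp, ⟪β, ϖv⟫ ^ 2 := by rw [hQ]; positivity
    rw [hb1, ← hSv, div_eq_div_iff hwne (mul_pos hga0 hQpos).ne', hSv, hKEY]
    ring
  · -- part (c)
    have hdk0 : ∀ k, h α < k → dSeq R ϖ ϖv k = 0 := by
      intro k hk
      rw [hdSeq k]
      apply Finset.sum_eq_zero
      intro x hx
      rw [Finset.mem_range] at hx
      rw [if_neg]
      rintro ⟨hdvd, hx1⟩
      have := Nat.le_of_dvd (by omega) hdvd
      omega
    rw [tsum_eq_sum (s := Finset.range (h α + 1)) (fun k hk => by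
      rw [Finset.mem_range, not_lt] at hk
      split
      · rw [hdk0 k (by omega), mul_zero]
      · rfl)]
    have hstep1 : ∀ k ∈ Finset.range (h α + 1),
        (if 1 ≤ k then (k.totient : ℝ) * dSeq R ϖ ϖv k else 0) =
        ∑ x ∈ Finset.range (h α + 1),
          if 1 ≤ k ∧ k ∣ x ∧ 1 ≤ x then (k.totient : ℝ) * iNum R ϖ ϖv x else 0 := by
      intro k _
      by_cases hk : 1 ≤ k
      · rw [if_pos hk, hdSeq k, Finset.mul_sum]
        refine Finset.sum_congr rfl fun x _ => ?_
        by_cases hx : k ∣ x ∧ 1 ≤ x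
        · rw [if_pos hx, if_pos ⟨hk, hx⟩]
        · rw [if_neg hx, if_neg (fun hc => hx hc.2), mul_zero]
      · rw [if_neg hk]
        refine (Finset.sum_eq_zero fun x _ => ?_).symm
        rw [if_neg (fun hc => hk hc.1)]
    rw [Finset.sum_congr rfl hstep1, Finset.sum_comm]
    have hstep2 : ∀ x ∈ Finset.range (h α + 1),
        (∑ k ∈ Finset.range (h α + 1),
          if 1 ≤ k ∧ k ∣ x ∧ 1 ≤ x then (k.totient : ℝ) * iNum R ϖ ϖv x else 0) =
        (x : ℝ) * iNum R ϖ ϖv x := by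
      intro x hx
      rw [Finset.mem_range] at hx
      rcases Nat.eq_zero_or_pos x with h0 | h1
      · subst h0
        rw [Finset.sum_eq_zero fun k _ => if_neg (fun hc => by omega), hiNum00]
        norm_num
      · have hdivs : (Finset.range (h α + 1)).filter (fun k => 1 ≤ k ∧ k ∣ x ∧ 1 ≤ x) =
            x.divisors := by
          ext k
          rw [Finset.mem_filter, Finset.mem_range, Nat.mem_divisors]
          constructor
          · rintro ⟨-, -, hdvd, -⟩
            exact ⟨hdvd, by omega⟩
          · rintro ⟨hdvd, hx0⟩
            have hk1 : 1 ≤ k := by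
              rcases Nat.eq_zero_or_pos k with h0 | h1'
              · subst h0; rw [Nat.zero_dvd] at hdvd; omega
              · exact h1'
            have := Nat.le_of_dvd (by omega) hdvd
            exact ⟨by omega, hk1, hdvd, h1⟩
        rw [← Finset.sum_filter, hdivs, ← Finset.sum_mul]
        congr 1
        rw [← Nat.cast_sum]
        norm_cast
        exact Nat.sum_totient x
    rw [Finset.sum_congr rfl hstep2]
    have : ∀ x ∈ Finset.range (h α + 1), (x:ℝ) * iNum R ϖ ϖv x =
        (x : ℝ) ^ 2 * ((R.filter fun β => ⟪β, ϖv⟫ = (x : ℝ)).card : ℝ) / ⟪ϖ, ϖv⟫ := by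
      intro x _
      rw [iNum]
      ring
    rw [Finset.sum_congr rfl this, ← Finset.sum_div, hsq_total]
    rw [div_eq_div_iff hwne hga0.ne']
    linear_combination hKEY
end
end

section
/- Suppose d_1, …, d_N and d_1', …, d_N' are two sequences of positive integers which both satisfy the circular symmetry property with respect to N and M. If d_1 = d_1', then d_x = d_x' for all x with 1 ≤ x ≤ N. -/
/-!
The relation `d x + d y = 2M/(xy)` determines `d x` from `d y` along every pair of Farey
neighbours `r/x < s/y` in `F_N`, so it suffices to connect every denominator to `1` through
neighbouring pairs. The fractions `1/N`, `1/(N-1)`, …, `1/⌈N/2⌉` are consecutive in `F_N` and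
`0/1` precedes `1/N`, which reaches all `x ≥ N/2` from `x = 1`. For `2 ≤ x < N/2`, the right
neighbour of `1/x` is `q/(qx - 1)` with `q = ⌊(N+1)/x⌋`, and its denominator exceeds
`N - x > N/2`.
-/

/-- A sequence `d_1, …, d_N` of positive integers (given as a function `d : ℕ → ℕ`)
has the *circular symmetry property* with respect to `N` and `M` if
`d_x + d_y = 2M/(x·y)` whenever `r/x` and `s/y` are consecutive terms of the Farey
sequence `F_N`; the fractions `r/x < s/y` (in lowest terms, with `s/y ≤ 1` and
denominators at most `N`) are consecutive in `F_N` precisely when `s·x − r·y = 1`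
and `x + y > N`. -/
def CircularSymmetry (N : ℕ) (M : ℚ) (d : ℕ → ℕ) : Prop :=
  ∀ r s x y : ℕ, 1 ≤ x → x ≤ N → 1 ≤ y → y ≤ N →
    Nat.gcd r x = 1 → Nat.gcd s y = 1 →
    (r : ℚ) / (x : ℚ) < (s : ℚ) / (y : ℚ) → (s : ℚ) / (y : ℚ) ≤ 1 →
    (s : ℤ) * (x : ℤ) - (r : ℤ) * (y : ℤ) = 1 → N < x + y →
    (d x : ℚ) + (d y : ℚ) = 2 * M / ((x : ℚ) * (y : ℚ))

namespace CircularSymmetry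

variable {N : ℕ} {M : ℚ} {d d' : ℕ → ℕ}

/-- A determinant-one pair `r/x < s/y ≤ 1` with `x + y > N` is automatically in lowest terms. -/
theorem add_eq_of_det (hcs : CircularSymmetry N M d) {r s x y : ℕ}
    (hx : 1 ≤ x) (hxN : x ≤ N) (hy : 1 ≤ y) (hyN : y ≤ N) (hsy : s ≤ y)
    (hdet : (s : ℤ) * x - r * y = 1) (hN : N < x + y) :
    (d x : ℚ) + d y = 2 * M / (x * y) := by
  have hr : Nat.gcd r x = 1 :=
    Nat.isCoprime_iff_coprime.mp ⟨-y, s, by linear_combination hdet⟩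
  have hs : Nat.gcd s y = 1 :=
    Nat.isCoprime_iff_coprime.mp ⟨x, -r, by linear_combination hdet⟩
  have hx' : (0 : ℚ) < x := by exact_mod_cast hx
  have hy' : (0 : ℚ) < y := by exact_mod_cast hy
  have hdetℚ : (s : ℚ) * x - r * y = 1 := by exact_mod_cast hdet
  have hlt : (r : ℚ) / x < s / y := by
    rw [div_lt_div_iff₀ hx' hy']
    linarith
  have hle : (s : ℚ) / y ≤ 1 := (div_le_one hy').mpr (by exact_mod_cast hsy)
  exact hcs r s x y hx hxN hy hyN hr hs hlt hle hdet hN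

theorem add_eq_add_of_det (hcs : CircularSymmetry N M d) (hcs' : CircularSymmetry N M d')
    {r s x y : ℕ} (hx : 1 ≤ x) (hxN : x ≤ N) (hy : 1 ≤ y) (hyN : y ≤ N) (hsy : s ≤ y)
    (hdet : (s : ℤ) * x - r * y = 1) (hN : N < x + y) :
    d x + d y = d' x + d' y := by
  have h := (hcs.add_eq_of_det hx hxN hy hyN hsy hdet hN).trans
    (hcs'.add_eq_of_det hx hxN hy hyN hsy hdet hN).symm
  exact_mod_cast h

theorem eq_of_le_two_mul (hcs : CircularSymmetry N M d) (hcs' : CircularSymmetry N M d')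
    (h1 : d 1 = d' 1) {k : ℕ} (hk : 1 ≤ k) (hkN : k ≤ N) (hNk : N ≤ 2 * k) :
    d k = d' k := by
  induction hkN using Nat.decreasingInduction with
  | self =>
    have hsum := hcs.add_eq_add_of_det hcs' (r := 0) (s := 1) le_rfl hk hk le_rfl hk
      (by push_cast; ring) (by omega)
    omega
  | of_succ k hkN ih =>
    have hsum := hcs.add_eq_add_of_det hcs' (r := 1) (s := 1) (x := k + 1) (y := k) (by omega)
      hkN hk hkN.le hk (by push_cast; ring) (by omega)
    have hsucc := ih (by omega) (by omega)
    omega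

end CircularSymmetry

/-- The witness is `q = ⌊(N+1)/x⌋`: then `q/y` is the right neighbour of `1/x` in `F_N`. -/
theorem exists_mul_eq_add_one_of_le {N x : ℕ} (hx : 2 ≤ x) (hxN : x ≤ N) :
    ∃ q y, 1 ≤ y ∧ y ≤ N ∧ q ≤ y ∧ q * x = y + 1 ∧ N < x + y := by
  have hq : 1 ≤ (N + 1) / x := (Nat.le_div_iff_mul_le (by omega)).mpr (by omega)
  have hdm := Nat.div_add_mod (N + 1) x
  have hmod := Nat.mod_lt (N + 1) (show 0 < x by omega)
  generalize (N + 1) / x = q at hq hdm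
  generalize (N + 1) % x = m at hdm hmod
  obtain ⟨y, hy⟩ := Nat.exists_eq_add_one_of_ne_zero (show q * x ≠ 0 by positivity)
  exact ⟨q, y, by nlinarith, by nlinarith, by nlinarith, hy, by nlinarith⟩

theorem statement_13_general (N : ℕ) (M : ℚ) (d d' : ℕ → ℕ)
    (hcs : CircularSymmetry N M d) (hcs' : CircularSymmetry N M d')
    (h1 : d 1 = d' 1) :
    ∀ x, 1 ≤ x → x ≤ N → d x = d' x := by
  intro x hx hxN
  obtain rfl | hx2 : x = 1 ∨ 2 ≤ x := by omega
  · exact h1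
  by_cases hNx : N ≤ 2 * x
  · exact hcs.eq_of_le_two_mul hcs' h1 hx hxN hNx
  obtain ⟨q, y, hy, hyN, hqy, hqxy, hN⟩ := exists_mul_eq_add_one_of_le hx2 hxN
  have hdet : (q : ℤ) * x - (1 : ℕ) * y = 1 := by
    have hqxyℤ : (q : ℤ) * x = y + 1 := by exact_mod_cast hqxy
    push_cast
    linear_combination hqxyℤ
  have hsum := hcs.add_eq_add_of_det hcs' hx hxN hy hyN hqy hdet hN
  have hdy := hcs.eq_of_le_two_mul hcs' h1 hy hyN (by omega)
  omega

/-- Two sequences of positive integers which both satisfy the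
circular symmetry property with respect to `N` and `M`, and which agree at `1`,
agree at every `x` with `1 ≤ x ≤ N`. -/
theorem statement_13 (N : ℕ) (M : ℚ) (d d' : ℕ → ℕ)
    (hd : ∀ x, 1 ≤ x → x ≤ N → 0 < d x) (hd' : ∀ x, 1 ≤ x → x ≤ N → 0 < d' x)
    (hcs : CircularSymmetry N M d) (hcs' : CircularSymmetry N M d')
    (h1 : d 1 = d' 1) :
    ∀ x, 1 ≤ x → x ≤ N → d x = d' x :=
  statement_13_general N M d d' hcs hcs' h1
end

section
/- Let Δ̃ be a nonempty finite set, σ a permutation of Δ̃, and g : Δ̃ → ℤ_{>0} a function constant on σ-orbits. Let Λ̃ be the free abelian group on Δ̃ with the induced σ-action, v = Σ_{β∈Δ̃} g(β)·β ∈ Λ̃ (a σ-invariant element), and Λ = Λ̃/⟨v⟩ with the induced σ-action. For each σ-orbit ō let n_ō = #ō, ō∨ = Σ_{β∈ō} β ∈ Λ̃, g(ō) the common value of g on ō, and g_ō = n_ō·g(ō). Then: (a) the group of σ-invariants Λ^σ is generated by the images of the elements ō∨ subject to the single relation Σ_ō g(ō)·ō∨ = 0, i.e. Λ^σ ≅ (⊕_ō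 ℤ·ō∨)/⟨Σ_ō g(ō)·ō∨⟩; (b) if ō₀ is an orbit with g(ō₀) = 1, then the images of {ō∨ : ō ≠ ō₀} form a ℤ-basis of Λ^σ; (c) the group of coinvariants Λ_σ = Λ/(im(id − σ)) is isomorphic to (⊕_ō ℤ·e_ō)/⟨Σ_ō g_ō·e_ō⟩, where e_ō maps to the class of any chosen β ∈ ō; consequently (d) the torsion subgroup of Λ_σ is cyclic of order n₀ = gcd_ō g_ō, and Λ_σ modulo its torsion is isomorphic to (⊕_ō ℤ·e_ō)/⟨Σ_ō (g_ō/n₀)·e_ō⟩. -/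
attribute [local instance] Classical.propDecidable

noncomputable section


set_option linter.unusedSectionVars false


namespace St16

variable {Δ : Type*} [Fintype Δ]

lemma inv_const (σ : Equiv.Perm Δ) {M : Type*} (c : Δ → M)
    (h : ∀ β, c (σ β) = c β) {β γ : Δ} (hbg : σ.SameCycle β γ) : c β = c γ := by
  obtain ⟨k, hk⟩ := hbg
  subst hk
  induction k using Int.induction_on with
  | zero => simp
  | succ n ih =>
      have : (σ ^ ((n : ℤ) + 1)) β = σ ((σ ^ (n : ℤ)) β) := by
        rw [add_comm, zpow_add, zpow_one, Equiv.Perm.mul_apply]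
      rw [this, h]; exact ih
  | pred n ih =>
      have h2 : (σ ^ (-(n : ℤ))) β = σ ((σ ^ (-(n : ℤ) - 1)) β) := by
        have : (σ ^ (-(n : ℤ))) = σ * σ ^ (-(n : ℤ) - 1) := by
          rw [← zpow_one_add]; norm_num
        rw [this, Equiv.Perm.mul_apply]
      rw [ih, h2, h]

/-- orbit sum -/
def S (σ : Equiv.Perm Δ) (f : Δ → ℤ) (β : Δ) : ℤ :=
  ∑ γ ∈ Finset.univ.filter (fun γ => σ.SameCycle β γ), f γ

lemma S_add (σ : Equiv.Perm Δ) (f f' : Δ → ℤ) (β : Δ) :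
    S σ (f + f') β = S σ f β + S σ f' β := by
  simp [S, Finset.sum_add_distrib]

lemma S_apply_sigma (σ : Equiv.Perm Δ) (f : Δ → ℤ) (β : Δ) :
    S σ f (σ β) = S σ f β := by
  unfold S
  congr 1
  ext γ
  simp [Equiv.Perm.sameCycle_apply_left]

lemma S_comp_symm (σ : Equiv.Perm Δ) (f : Δ → ℤ) (β : Δ) :
    S σ (f ∘ σ.symm) β = S σ f β := by
  unfold S
  refine Finset.sum_equiv σ.symm ?_ ?_
  · intro γ
    simp only [Finset.mem_filter, Finset.mem_univ, true_and]
    show σ.SameCycle β γ ↔ σ.SameCycle β (σ⁻¹ γ)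
    simp [Equiv.Perm.sameCycle_symm_apply_right]
  · intro γ _
    rfl

lemma S_const (σ : Equiv.Perm Δ) {β γ : Δ} (h : σ.SameCycle β γ) (f : Δ → ℤ) :
    S σ f β = S σ f γ := by
  obtain ⟨k, hk⟩ := h
  subst hk
  induction k using Int.induction_on with
  | zero => simp
  | succ n ih =>
      have : (σ ^ ((n : ℤ) + 1)) β = σ ((σ ^ (n : ℤ)) β) := by
        rw [add_comm, zpow_add, zpow_one, Equiv.Perm.mul_apply]
      rw [this, S_apply_sigma]; exact ih
  | pred n ih =>
      have h2 : (σ ^ (-(n : ℤ))) β = σ ((σ ^ (-(n : ℤ) - 1)) β) := by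
        have : (σ ^ (-(n : ℤ))) = σ * σ ^ (-(n : ℤ) - 1) := by
          rw [← zpow_one_add]; norm_num
        rw [this, Equiv.Perm.mul_apply]
      rw [ih, h2, S_apply_sigma]

lemma S_single (σ : Equiv.Perm Δ) (δ : Δ) (β : Δ) :
    S σ (Pi.single δ (1:ℤ)) β = if σ.SameCycle β δ then 1 else 0 := by
  unfold S
  by_cases h : σ.SameCycle β δ
  · rw [if_pos h, Finset.sum_eq_single_of_mem δ (by simp [h])]
    · simp
    · intro γ _ hne; exact Pi.single_eq_of_ne hne 1
  · rw [if_neg h]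
    apply Finset.sum_eq_zero
    intro γ hγ
    simp only [Finset.mem_filter] at hγ
    have : γ ≠ δ := fun e => h (by rw [← e]; exact hγ.2)
    exact Pi.single_eq_of_ne this 1

lemma S_sub (σ : Equiv.Perm Δ) (f f' : Δ → ℤ) (β : Δ) :
    S σ (f - f') β = S σ f β - S σ f' β := by
  simp [S, Finset.sum_sub_distrib]

lemma S_smul (σ : Equiv.Perm Δ) (z : ℤ) (f : Δ → ℤ) (β : Δ) :
    S σ (z • f) β = z * S σ f β := by
  simp [S, Finset.mul_sum]

end St16

open St16

/-- Invariants and coinvariants of the free abelian group on a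
finite set `Δ` (realized as `Δ → ℤ`), modulo the invariant vector
`v = Σ_β g(β)·β`, under a permutation `σ` of `Δ` on whose orbits `g` is constant.
Here `Λ = (Δ → ℤ)/⟨v⟩` (presented by the surjection `π` with kernel `ℤ·v`),
`σΛ` is the induced automorphism, `Λσ = Λ/im(id − σΛ)` is the group of
coinvariants (presented by `q`), and `TorΛσ` is the torsion subgroup of `Λσ`.
Functions `c : Δ → ℤ` constant on orbits correspond to elements `Σ_ō c_ō·ō∨` of
the free abelian group on the set of orbits, and `fun β => if rep β = β then c β else 0`
corresponds to `Σ_ō c_ō·e_ō` for the chosen orbit representatives `rep`. -/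
theorem statement_16 {Δ : Type*} [Fintype Δ] [Nonempty Δ]
    (σ : Equiv.Perm Δ) (g : Δ → ℕ) (hgpos : ∀ β, 0 < g β)
    (hgconst : ∀ β, g (σ β) = g β)
    (v : Δ → ℤ) (hv : v = fun β => (g β : ℤ))
    -- `Λ = Λ̃/⟨v⟩` with its induced automorphism `σΛ`
    (Λ : Type*) [AddCommGroup Λ]
    (π : (Δ → ℤ) →+ Λ) (hπsurj : Function.Surjective π)
    (hπker : ∀ f : Δ → ℤ, π f = 0 ↔ ∃ m : ℤ, f = m • v)
    (σΛ : Λ →+ Λ) (hσΛ : ∀ f : Δ → ℤ, σΛ (π f) = π (f ∘ σ.symm))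
    -- orbit data: orbit cardinalities `nOrb`, `n₀ = gcd_ō g_ō` and a choice of
    -- representative `rep β` in the orbit of each `β`
    (nOrb : Δ → ℕ)
    (hnOrb : ∀ β, nOrb β = (Finset.univ.filter fun γ => σ.SameCycle β γ).card)
    (n₀ : ℕ) (hn₀ : n₀ = Finset.univ.gcd fun β : Δ => nOrb β * g β)
    (rep : Δ → Δ) (hrep : ∀ β, σ.SameCycle β (rep β))
    (hrep' : ∀ β γ, σ.SameCycle β γ → rep β = rep γ)
    -- the coinvariants `Λσ = Λ/im(id − σΛ)`
    (Λσ : Type*) [AddCommGroup Λσ]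
    (q : Λ →+ Λσ) (hqsurj : Function.Surjective q)
    (hqker : ∀ x : Λ, q x = 0 ↔ ∃ y : Λ, x = y - σΛ y)
    -- the torsion subgroup of `Λσ`
    (TorΛσ : AddSubgroup Λσ)
    (hTor : ∀ z : Λσ, z ∈ TorΛσ ↔ ∃ n : ℕ, 0 < n ∧ n • z = 0) :
    -- (a) `Λ^σ` is generated by the images of the `ō∨`, subject to the single
    -- relation `Σ_ō g(ō)·ō∨ = 0`
    ((∀ c : Δ → ℤ, c ∘ σ = c → σΛ (π c) = π c) ∧
     (∀ x : Λ, σΛ x = x → ∃ c : Δ → ℤ, c ∘ σ = c ∧ π c = x) ∧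
     (∀ c : Δ → ℤ, c ∘ σ = c → (π c = 0 ↔ ∃ m : ℤ, c = m • v))) ∧
    -- (b) if `ō₀` is an orbit with `g(ō₀) = 1` then `{ō∨ : ō ≠ ō₀}` is a basis
    (∀ β₀ : Δ, g β₀ = 1 →
      ∀ x : Λ, σΛ x = x →
        ∃! c : Δ → ℤ, c ∘ σ = c ∧ (∀ β, σ.SameCycle β₀ β → c β = 0) ∧ π c = x) ∧
    -- (c) `Λ_σ ≅ (⊕_ō ℤ·e_ō)/⟨Σ_ō g_ō·e_ō⟩` via `e_ō ↦ [chosen representative]`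
    ((∀ y : Λσ, ∃ c : Δ → ℤ, c ∘ σ = c ∧
        q (π fun β => if rep β = β then c β else 0) = y) ∧
     (∀ c : Δ → ℤ, c ∘ σ = c →
        (q (π fun β => if rep β = β then c β else 0) = 0 ↔
          ∃ m : ℤ, ∀ β, c β = m * (nOrb β * g β)))) ∧
    -- (d) the torsion subgroup of `Λ_σ` is cyclic of order `n₀`, and
    -- `Λ_σ/Tor ≅ (⊕_ō ℤ·e_ō)/⟨Σ_ō (g_ō/n₀)·e_ō⟩`
    (IsAddCyclic TorΛσ ∧ Nat.card TorΛσ = n₀ ∧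
     (∀ y : Λσ ⧸ TorΛσ, ∃ c : Δ → ℤ, c ∘ σ = c ∧
        QuotientAddGroup.mk' TorΛσ (q (π fun β => if rep β = β then c β else 0)) = y) ∧
     (∀ c : Δ → ℤ, c ∘ σ = c →
        (QuotientAddGroup.mk' TorΛσ (q (π fun β => if rep β = β then c β else 0)) = 0 ↔
          ∃ m : ℤ, ∀ β, (n₀ : ℤ) * c β = m * (nOrb β * g β)))) := by
  classical
  open St16 in
  -- basic facts
  have hcinv' : ∀ (c : Δ → ℤ), c ∘ σ = c → ∀ β, c (σ β) = c β := by
    intro c hc β; exact congrFun hc β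
  have hginv : ∀ β γ, σ.SameCycle β γ → g β = g γ := fun β γ h =>
    inv_const σ g hgconst h
  have hπv : π v = 0 := (hπker v).2 ⟨1, by simp⟩
  have hvinv : v ∘ σ = v := by
    funext β; simp [hv, hgconst]
  -- sum of g is positive
  have sumg_pos : 0 < ∑ β : Δ, (g β : ℤ) := by
    have : (0:ℤ) < ∑ _β : Δ, 1 := by
      simpa using (Finset.card_pos.2 (Finset.univ_nonempty)).trans_le le_rfl
    calc (0:ℤ) < ∑ _β : Δ, 1 := this
      _ ≤ ∑ β : Δ, (g β : ℤ) := Finset.sum_le_sum (fun β _ => by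
            exact_mod_cast hgpos β)
  -- invariant lifts: if π f is σΛ-fixed then f is σ-invariant
  have inv_lift : ∀ f : Δ → ℤ, σΛ (π f) = π f → f ∘ σ = f := by
    intro f hf
    rw [hσΛ] at hf
    have h0 : π (f ∘ σ.symm - f) = 0 := by rw [map_sub, hf, sub_self]
    obtain ⟨m, hm⟩ := (hπker _).1 h0
    have hsum : ∑ β : Δ, ((f ∘ σ.symm - f) β) = m * ∑ β : Δ, (g β : ℤ) := by
      rw [hm]
      simp [hv, Finset.mul_sum]
    have hsum0 : ∑ β : Δ, ((f ∘ σ.symm - f) β) = 0 := by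
      simp only [Pi.sub_apply, Finset.sum_sub_distrib, Function.comp_apply]
      rw [Equiv.sum_comp σ.symm f, sub_self]
    have hm0 : m = 0 := by
      have := hsum0 ▸ hsum
      rcases mul_eq_zero.1 this.symm with h | h
      · exact h
      · exact absurd h (ne_of_gt sumg_pos)
    have hfs : f ∘ σ.symm = f := by
      have := hm; rw [hm0, zero_smul] at this
      exact sub_eq_zero.1 this
    funext β
    have := congrFun hfs (σ β)
    simpa using this.symm
  -- single basis vector relation in the coinvariants
  have step : ∀ γ : Δ, q (π (Pi.single γ (1:ℤ))) = q (π (Pi.single (σ γ) 1)) := by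
    intro γ
    have hcomp : (Pi.single γ (1:ℤ)) ∘ σ.symm = Pi.single (σ γ) 1 := by
      funext x
      simp only [Function.comp_apply, Pi.single_apply]
      by_cases h : x = σ γ
      · rw [if_pos h, if_pos (by rw [h]; exact σ.symm_apply_apply γ)]
      · rw [if_neg h, if_neg (fun e => h (by rw [← e]; exact (σ.apply_symm_apply x).symm))]
    have h0 : q (π (Pi.single γ 1) - σΛ (π (Pi.single γ 1))) = 0 :=
      (hqker _).2 ⟨π (Pi.single γ 1), rfl⟩
    rw [map_sub, sub_eq_zero] at h0
    rw [h0, hσΛ, hcomp]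
  have stepz : ∀ γ : Δ, ∀ k : ℤ, q (π (Pi.single ((σ ^ k) γ) (1:ℤ))) = q (π (Pi.single γ 1)) := by
    intro γ k
    induction k using Int.induction_on with
    | zero => simp
    | succ n ih =>
        have h2 : (σ ^ ((n : ℤ) + 1)) γ = σ ((σ ^ (n : ℤ)) γ) := by
          rw [add_comm, zpow_add, zpow_one, Equiv.Perm.mul_apply]
        rw [h2, ← step, ih]
    | pred n ih =>
        have h2 : (σ ^ (-(n : ℤ))) γ = σ ((σ ^ (-(n : ℤ) - 1)) γ) := by
          have : (σ ^ (-(n : ℤ))) = σ * σ ^ (-(n : ℤ) - 1) := by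
            rw [← zpow_one_add]; norm_num
          rw [this, Equiv.Perm.mul_apply]
        rw [← ih, h2, step]
  have steprep : ∀ δ : Δ, q (π (Pi.single (rep δ) (1:ℤ))) = q (π (Pi.single δ 1)) := by
    intro δ
    obtain ⟨k, hk⟩ := hrep δ
    rw [← hk]; exact stepz δ k
  -- rep is idempotent
  have hrep2 : ∀ β, rep (rep β) = rep β := fun β => (hrep' β (rep β) (hrep β)).symm
  -- the collapse identity
  have collapse : ∀ f : Δ → ℤ,
      q (π f) = q (π fun β => if rep β = β then S σ f β else 0) := by
    intro f
    let Scol : (Δ → ℤ) →ₗ[ℤ] (Δ → ℤ) :=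
      { toFun := fun f β => if rep β = β then S σ f β else 0
        map_add' := by
          intro f f'; funext β
          by_cases h : rep β = β <;> simp [h, S_add]
        map_smul' := by
          intro z f; funext β
          show (if rep β = β then S σ (z • f) β else 0) = z • (if rep β = β then S σ f β else 0)
          by_cases h : rep β = β
          · rw [if_pos h, if_pos h, S_smul, smul_eq_mul]
          · rw [if_neg h, if_neg h, smul_zero] }
    let T₁ : (Δ → ℤ) →ₗ[ℤ] Λσ := ((q.comp π).toIntLinearMap)
    have hT : T₁ = T₁.comp Scol := by
      apply Module.Basis.ext (Pi.basisFun ℤ Δ)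
      intro δ
      have hb : (Pi.basisFun ℤ Δ) δ = Pi.single δ (1:ℤ) := by
        simp [Pi.basisFun_apply]
      rw [hb]
      have hScol : Scol (Pi.single δ (1:ℤ)) = Pi.single (rep δ) 1 := by
        funext β
        show (if rep β = β then S σ (Pi.single δ (1:ℤ)) β else 0) = _
        rw [S_single]
        by_cases hβ : β = rep δ
        · subst hβ
          rw [if_pos (hrep2 δ), if_pos ((hrep δ).symm), Pi.single_eq_same]
        · rw [Pi.single_eq_of_ne hβ]
          by_cases h1 : rep β = β
          · rw [if_pos h1, if_neg]
            intro hsc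
            exact hβ (by rw [← h1, hrep' β δ hsc])
          · rw [if_neg h1]
      show q (π _) = q (π (Scol _))
      rw [hScol, steprep]
    exact LinearMap.congr_fun hT f
  -- orbit sums of collapsed invariant functions
  have hSh : ∀ c : Δ → ℤ, c ∘ σ = c →
      ∀ β, S σ (fun β' => if rep β' = β' then c β' else 0) β = c β := by
    intro c hc β
    unfold St16.S
    have hcongr : ∀ γ ∈ Finset.univ.filter (fun γ => σ.SameCycle β γ),
        (if rep γ = γ then c γ else 0) = (if γ = rep β then c γ else 0) := by
      intro γ hγ
      simp only [Finset.mem_filter] at hγ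
      by_cases h1 : γ = rep β
      · rw [if_pos h1, if_pos]
        rw [h1, hrep2]
      · rw [if_neg h1, if_neg]
        intro h2
        exact h1 (by rw [← h2, hrep' γ β hγ.2.symm])
    rw [Finset.sum_congr rfl hcongr, Finset.sum_ite_eq' _ (rep β) c,
      if_pos (by simp [hrep β])]
    exact (inv_const σ c (hcinv' c hc) (hrep β)).symm
  -- orbit sums of v
  have hSv : ∀ β, S σ v β = (nOrb β : ℤ) * (g β : ℤ) := by
    intro β
    unfold St16.S
    have : ∀ γ ∈ Finset.univ.filter (fun γ => σ.SameCycle β γ), v γ = (g β : ℤ) := by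
      intro γ hγ
      simp only [Finset.mem_filter] at hγ
      rw [hv]
      exact_mod_cast congrArg _ (hginv β γ hγ.2).symm
    rw [Finset.sum_congr rfl this, Finset.sum_const, hnOrb]
    simp [nsmul_eq_mul]
  -- part (c2): the kernel computation for the coinvariants
  have hc2 : ∀ c : Δ → ℤ, c ∘ σ = c →
      (q (π fun β => if rep β = β then c β else 0) = 0 ↔
        ∃ m : ℤ, ∀ β, c β = m * ((nOrb β : ℤ) * (g β : ℤ))) := by
    intro c hc
    constructor
    · intro h0
      obtain ⟨y, hy⟩ := (hqker _).1 h0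
      obtain ⟨u, rfl⟩ := hπsurj y
      have h1 : π ((fun β => if rep β = β then c β else 0) - (u - u ∘ σ.symm)) = 0 := by
        rw [map_sub, hy, map_sub, hσΛ, sub_self]
      obtain ⟨m, hm⟩ := (hπker _).1 h1
      refine ⟨m, fun β => ?_⟩
      have h2 := congrArg (fun f => S σ f β) hm
      rw [S_sub, S_sub, S_comp_symm, sub_self, sub_zero, hSh c hc, S_smul, hSv] at h2
      exact h2
    · rintro ⟨m, hm⟩
      have hcol : (fun β => if rep β = β then c β else 0)
          = (fun β => if rep β = β then S σ (m • v) β else 0) := by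
        funext β
        by_cases h : rep β = β
        · rw [if_pos h, if_pos h, S_smul, hSv, hm]
        · rw [if_neg h, if_neg h]
      rw [hcol, ← collapse (m • v), map_zsmul, map_zsmul, hπv]
      simp
  -- part (c1): surjectivity
  have hc1 : ∀ y : Λσ, ∃ c : Δ → ℤ, c ∘ σ = c ∧
      q (π fun β => if rep β = β then c β else 0) = y := by
    intro y
    obtain ⟨x, rfl⟩ := hqsurj y
    obtain ⟨f, rfl⟩ := hπsurj x
    exact ⟨S σ f, funext fun β => S_apply_sigma σ f β, (collapse f).symm⟩
  -- ------- part (d) setup -------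
  set w' : Δ → ℕ := fun β => (nOrb β * g β) / n₀ with hw'
  have hn₀dvd : ∀ β, n₀ ∣ nOrb β * g β := fun β =>
    hn₀ ▸ Finset.gcd_dvd (Finset.mem_univ β)
  have nOrbpos : ∀ β, 0 < nOrb β := by
    intro β
    rw [hnOrb]
    exact Finset.card_pos.2 ⟨β, by simp [Equiv.Perm.SameCycle.refl]⟩
  have wpos : ∀ β, 0 < nOrb β * g β := fun β => Nat.mul_pos (nOrbpos β) (hgpos β)
  have hn₀pos : 0 < n₀ := by
    rcases Nat.eq_zero_or_pos n₀ with h | h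
    · exfalso
      obtain ⟨β⟩ := (inferInstance : Nonempty Δ)
      have := (Finset.gcd_eq_zero_iff.1 (hn₀ ▸ h : (Finset.univ.gcd fun β : Δ => nOrb β * g β) = 0)) β (Finset.mem_univ β)
      exact (wpos β).ne' this
    · exact h
  have hw'mul : ∀ β, n₀ * w' β = nOrb β * g β := fun β => Nat.mul_div_cancel' (hn₀dvd β)
  have hw'pos : ∀ β, 0 < w' β := by
    intro β
    rcases Nat.eq_zero_or_pos (w' β) with h | h
    · exfalso
      have h5 := hw'mul β
      rw [h, Nat.mul_zero] at h5
      exact (wpos β).ne' h5.symm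
    · exact h
  have hgcdw' : Finset.univ.gcd w' = 1 := by
    have h1 : (Finset.univ.gcd fun β : Δ => n₀ * w' β) = n₀ := by
      have : (fun β : Δ => n₀ * w' β) = fun β : Δ => nOrb β * g β := funext hw'mul
      rw [this, ← hn₀]
    rw [Finset.gcd_mul_left] at h1
    have h2 : n₀ * Finset.univ.gcd w' = n₀ * 1 := by
      simpa using h1
    exact Nat.eq_of_mul_eq_mul_left hn₀pos h2
  have hcast : ∀ β : Δ, ((nOrb β : ℤ) * (g β : ℤ)) = (n₀ : ℤ) * (w' β : ℤ) := by
    intro β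
    exact_mod_cast congrArg (Nat.cast : ℕ → ℤ) (hw'mul β).symm
  have hnOrbinv : ∀ β, nOrb (σ β) = nOrb β := by
    intro β
    rw [hnOrb, hnOrb]
    congr 1
    ext γ
    simp [Equiv.Perm.sameCycle_apply_left]
  set c' : Δ → ℤ := fun β => (w' β : ℤ) with hc'def
  have hc'inv : c' ∘ σ = c' := by
    funext β
    show ((nOrb (σ β) * g (σ β)) / n₀ : ℕ) = (((nOrb β * g β) / n₀ : ℕ) : ℤ)
    rw [hnOrbinv, hgconst]
  set t : Λσ := q (π fun β => if rep β = β then c' β else 0) with ht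
  have hsmul_c : ∀ (k : ℤ) (c : Δ → ℤ),
      k • q (π fun β => if rep β = β then c β else 0)
        = q (π fun β => if rep β = β then k * c β else 0) := by
    intro k c
    rw [← map_zsmul, ← map_zsmul]
    congr 1
    congr 1
    funext β
    by_cases h : rep β = β <;> simp [h]
  have hkinv : ∀ (k : ℤ) (c : Δ → ℤ), c ∘ σ = c → (fun β => k * c β) ∘ σ = fun β => k * c β := by
    intro k c hc
    funext β
    simp only [Function.comp_apply]
    rw [hcinv' c hc]
  have tsmul : ∀ k : ℤ, k • t = 0 ↔ (n₀ : ℤ) ∣ k := by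
    intro k
    rw [ht, hsmul_c k c']
    rw [hc2 _ (hkinv k c' hc'inv)]
    constructor
    · rintro ⟨m, hm⟩
      obtain ⟨β⟩ := (inferInstance : Nonempty Δ)
      have h1 := hm β
      rw [hcast β] at h1
      have h3 : k * (w' β : ℤ) = m * (n₀:ℤ) * (w' β : ℤ) := by ring_nf; ring_nf at h1; linarith [h1]
      have h4 : k = m * (n₀:ℤ) := by
        have hne : ((w' β : ℤ)) ≠ 0 := by exact_mod_cast (hw'pos β).ne'
        exact mul_right_cancel₀ hne h3
      exact ⟨m, by rw [h4, mul_comm]⟩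
    · rintro ⟨j, rfl⟩
      refine ⟨j, fun β => ?_⟩
      rw [hcast β]
      show (n₀:ℤ) * j * ((w' β : ℕ) : ℤ) = j * ((n₀:ℤ) * (w' β : ℤ))
      ring
  have ht_tor : t ∈ TorΛσ := by
    rw [hTor]
    refine ⟨n₀, hn₀pos, ?_⟩
    have := (tsmul (n₀:ℤ)).2 ⟨1, (mul_one _).symm⟩
    rwa [natCast_zsmul] at this
  -- torsion characterization
  have tor_char : ∀ c : Δ → ℤ, c ∘ σ = c →
      (q (π fun β => if rep β = β then c β else 0) ∈ TorΛσ ↔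
        ∃ m' : ℤ, ∀ β, c β = m' * (w' β : ℤ)) := by
    intro c hc
    constructor
    · intro hz
      obtain ⟨N, hNpos, hN⟩ := (hTor _).1 hz
      have hN' : (N:ℤ) • q (π fun β => if rep β = β then c β else 0) = 0 := by
        rw [natCast_zsmul]; exact hN
      rw [hsmul_c, hc2 _ (hkinv N c hc)] at hN'
      obtain ⟨m, hm⟩ := hN'
      -- N ∣ m * n₀
      have hdvd : (N:ℤ) ∣ m * (n₀:ℤ) := by
        rw [Int.natCast_dvd]
        have key : ∀ β : Δ, N ∣ (m * (n₀:ℤ)).natAbs * w' β := by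
          intro β
          have h1 : (N:ℤ) ∣ (m * (n₀:ℤ)) * (w' β : ℤ) :=
            ⟨c β, by rw [show (m * (n₀:ℤ)) * (w' β : ℤ) = m * ((n₀:ℤ) * (w' β : ℤ)) from by ring, ← hcast β, ← hm β]⟩
          rw [Int.natCast_dvd] at h1
          simpa [Int.natAbs_mul] using h1
        have hg := Finset.dvd_gcd (fun β (_ : β ∈ Finset.univ) => key β)
        rwa [Finset.gcd_mul_left, hgcdw', normalize_eq, mul_one] at hg
      obtain ⟨j, hj⟩ := hdvd
      refine ⟨j, fun β => ?_⟩
      have h3 : (N:ℤ) * c β = (N:ℤ) * (j * (w' β : ℤ)) := by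
        rw [hm β, hcast β, show m * ((n₀:ℤ) * (w' β : ℤ)) = (m * (n₀:ℤ)) * (w' β : ℤ) from by ring, hj]
        ring
      exact mul_left_cancel₀ (by exact_mod_cast hNpos.ne' : (N:ℤ) ≠ 0) h3
    · rintro ⟨m', hm'⟩
      have hzc : q (π fun β => if rep β = β then c β else 0) = m' • t := by
        rw [ht, hsmul_c]
        congr 1; congr 1
        funext β
        by_cases h : rep β = β
        · rw [if_pos h, if_pos h, hm']
        · rw [if_neg h, if_neg h]
      rw [hzc, hTor]
      refine ⟨n₀, hn₀pos, ?_⟩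
      rw [smul_comm]
      have := (tsmul (n₀:ℤ)).2 ⟨1, (mul_one _).symm⟩
      rw [← natCast_zsmul] at *
      rw [this]
      simp
  have hn₀t : (n₀:ℤ) • t = 0 := (tsmul (n₀:ℤ)).2 ⟨1, (mul_one _).symm⟩
  have hscale : ∀ (m' : ℤ) (c : Δ → ℤ), (∀ β, c β = m' * (w' β : ℤ)) →
      q (π fun β => if rep β = β then c β else 0) = m' • t := by
    intro m' c hm'
    rw [ht, hsmul_c]
    congr 1; congr 1
    funext β
    by_cases h : rep β = β
    · rw [if_pos h, if_pos h, hm']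
    · rw [if_neg h, if_neg h]
  have hTorEq : TorΛσ = AddSubgroup.zmultiples t := by
    ext z
    constructor
    · intro hz
      obtain ⟨c, hcinv, hcx⟩ := hc1 z
      obtain ⟨m', hm'⟩ := (tor_char c hcinv).1 (by rw [hcx]; exact hz)
      exact ⟨m', by rw [← hcx]; exact (hscale m' c hm').symm⟩
    · rintro ⟨k, rfl⟩
      rw [hTor]
      exact ⟨n₀, hn₀pos, by
        rw [← natCast_zsmul, smul_comm, hn₀t, smul_zero]⟩
  refine ⟨⟨?_, ?_, ?_⟩, ?_, ⟨hc1, hc2⟩, ?_, ?_, ?_, ?_⟩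
  -- (a1)
  · intro c hc
    rw [hσΛ]
    congr 1
    funext β
    have h := hcinv' c hc (σ.symm β)
    rw [Equiv.apply_symm_apply] at h
    exact h.symm
  -- (a2)
  · intro x hx
    obtain ⟨f, rfl⟩ := hπsurj x
    exact ⟨f, inv_lift f hx, rfl⟩
  -- (a3)
  · intro c _
    exact hπker c
  -- (b)
  · intro β₀ hβ₀ x hx
    obtain ⟨f, rfl⟩ := hπsurj x
    have hfinv : f ∘ σ = f := inv_lift f hx
    have hv0 : v β₀ = 1 := by simp [hv, hβ₀]
    refine ⟨f - (f β₀) • v, ⟨?_, ?_, ?_⟩, ?_⟩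
    · funext β
      simp only [Function.comp_apply, Pi.sub_apply, Pi.smul_apply, smul_eq_mul]
      have hvapp : ∀ β, v (σ β) = v β := fun β => congrFun hvinv β
      rw [hcinv' f hfinv, hvapp]
    · intro β hβ
      have h1 : f β = f β₀ := (inv_const σ f (hcinv' f hfinv) hβ).symm
      have h2 : g β = g β₀ := (hginv β₀ β hβ).symm
      simp [hv, h1, h2, hβ₀]
    · rw [map_sub, map_zsmul, hπv, smul_zero, sub_zero]
    · rintro c ⟨hcinv, hc0, hcx⟩
      have h1 : π (c - (f - (f β₀) • v)) = 0 := by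
        rw [map_sub, hcx, map_sub, map_zsmul, hπv, smul_zero, sub_zero, sub_self]
      obtain ⟨m, hm⟩ := (hπker _).1 h1
      have h2 := congrFun hm β₀
      simp only [Pi.sub_apply, Pi.smul_apply, smul_eq_mul] at h2
      rw [hc0 β₀ (Equiv.Perm.SameCycle.refl σ β₀), hv0] at h2
      have hm0 : m = 0 := by linarith
      rw [hm0, zero_smul] at hm
      exact sub_eq_zero.1 hm
  -- (d1) cyclic
  · constructor
    refine ⟨⟨t, hTorEq ▸ AddSubgroup.mem_zmultiples t⟩, ?_⟩
    intro x
    obtain ⟨c, hcinv, hcx⟩ := hc1 (x : Λσ)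
    obtain ⟨m', hm'⟩ := (tor_char c hcinv).1 (by rw [hcx]; exact x.2)
    refine ⟨m', Subtype.ext ?_⟩
    rw [AddSubgroup.coe_zsmul]
    rw [← hcx]
    exact (hscale m' c hm').symm
  -- (d2) card
  · have hfin : IsOfFinAddOrder t := by
      refine isOfFinAddOrder_iff_nsmul_eq_zero.2 ⟨n₀, hn₀pos, ?_⟩
      rw [← natCast_zsmul]; exact hn₀t
    have hord : addOrderOf t = n₀ := by
      apply Nat.dvd_antisymm
      · apply addOrderOf_dvd_of_nsmul_eq_zero
        rw [← natCast_zsmul]; exact hn₀t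
      · have h1 : ((addOrderOf t : ℤ)) • t = 0 := by
          rw [natCast_zsmul]; exact addOrderOf_nsmul_eq_zero t
        have h2 := (tsmul _).1 h1
        exact_mod_cast h2
    rw [hTorEq, Nat.card_zmultiples, hord]
  -- (d3)
  · intro y
    obtain ⟨z, rfl⟩ := QuotientAddGroup.mk'_surjective TorΛσ y
    obtain ⟨c, hcinv, hcx⟩ := hc1 z
    exact ⟨c, hcinv, by rw [hcx]⟩
  -- (d4)
  · intro c hcinv
    have hmem : QuotientAddGroup.mk' TorΛσ (q (π fun β => if rep β = β then c β else 0)) = 0 ↔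
        q (π fun β => if rep β = β then c β else 0) ∈ TorΛσ :=
      QuotientAddGroup.eq_zero_iff _
    rw [hmem, tor_char c hcinv]
    constructor
    · rintro ⟨m', hm'⟩
      refine ⟨m', fun β => ?_⟩
      rw [hcast β, hm' β]
      ring
    · rintro ⟨m, hm⟩
      refine ⟨m, fun β => ?_⟩
      have h3 := hm β
      rw [hcast β] at h3
      have h4 : (n₀:ℤ) * c β = (n₀:ℤ) * (m * (w' β : ℤ)) := by linarith
      exact mul_left_cancel₀ (by exact_mod_cast hn₀pos.ne' : (n₀:ℤ) ≠ 0) h4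
end
end

section
/- Let Λ be a finitely generated free abelian group, σ an automorphism of Λ of finite order, V = Λ ⊗_ℤ ℝ with the induced automorphism (still denoted σ), T = V/Λ with the induced action, and T_0 the image of V^σ in T (the identity component of T^σ). Then: (a) the connecting homomorphism of the exact sequence 0 → Λ → V → T → 0 induces an isomorphism from T^σ/T_0 onto the torsion subgroup of the coinvariants Λ_σ = Λ/im(id − σ); in particular T^σ/T_0 is a finite group of order equal to the order of Tor(Λ_σ); and (b) the natural map T_0 → T_σ = T/im(id − σ) is surjective with finite kernel, and its kernel has cardinality equal to the index of the image of Λ^σ in Λ_σ/Tor(Λ_σ). -/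
attribute [local instance] Classical.propDecidable

noncomputable section

/-- Let `Λ` be a finitely generated free abelian group, `σ` an
automorphism of `Λ` of finite order, `V = Λ ⊗ ℝ` (a real vector space in which
`Λ` embeds as a lattice, via `ι`, with the induced automorphism `σV`),
`T = V/Λ` (presented by the surjection `p` with kernel `ι(Λ)`, with the induced
endomorphism `σT`), and `T₀` the image in `T` of `V^σ` (the identity component of
`T^σ = Tfix`).  Let `Λσ` (resp. `Tσ`) be the coinvariants of `Λ` (resp. of `T`),
and `TorΛσ` the torsion subgroup of `Λσ`.  Then:
(a) the connecting homomorphism `t = p x ↦ [σV x − x]` induces an isomorphism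
`T^σ/T₀ ≃ Tor(Λσ)`; in particular `T^σ/T₀` is finite of order `#Tor(Λσ)`;
(b) the natural map `T₀ → Tσ` is surjective with finite kernel, whose cardinality
equals the index of the image of `Λ^σ` in `Λσ/Tor(Λσ)`. -/
theorem statement_17 (Λ : Type*) [AddCommGroup Λ] [Module.Free ℤ Λ] [Module.Finite ℤ Λ]
    (σ : Λ ≃+ Λ) (m : ℕ) (hm : 1 ≤ m) (hσm : ∀ x, (⇑σ)^[m] x = x)
    -- `V = Λ ⊗ ℝ`, with `Λ` embedded as a full lattice via `ι`
    (V : Type*) [AddCommGroup V] [Module ℝ V]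
    (ι : Λ →+ V) (hι : Function.Injective ι)
    (hlattice : ∃ (n : ℕ) (b : Module.Basis (Fin n) ℝ V) (bΛ : Module.Basis (Fin n) ℤ Λ),
      ∀ i, ι (bΛ i) = b i)
    (σV : V →ₗ[ℝ] V) (hσV : ∀ a : Λ, σV (ι a) = ι (σ a))
    -- `T = V/Λ`
    (T : Type*) [AddCommGroup T] (p : V →+ T) (hpsurj : Function.Surjective p)
    (hpker : ∀ x : V, p x = 0 ↔ ∃ a : Λ, x = ι a)
    (σT : T →+ T) (hσT : ∀ x : V, σT (p x) = p (σV x))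
    -- `Tfix = T^σ` and `T₀` = image of `V^σ` in `T`
    (Tfix : AddSubgroup T) (hTfix : ∀ t, t ∈ Tfix ↔ σT t = t)
    (T0 : AddSubgroup T) (hT0 : ∀ t, t ∈ T0 ↔ ∃ x : V, σV x = x ∧ p x = t)
    (hT0le : T0 ≤ Tfix)
    -- `Λ^σ`, and the coinvariants `Λσ = Λ/im(id − σ)` and `Tσ = T/im(id − σT)`
    (Λfix : AddSubgroup Λ) (hΛfix : ∀ a, a ∈ Λfix ↔ σ a = a)
    (Λσ : Type*) [AddCommGroup Λσ]
    (qΛ : Λ →+ Λσ) (hqΛsurj : Function.Surjective qΛ)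
    (hqΛker : ∀ a : Λ, qΛ a = 0 ↔ ∃ b : Λ, a = b - σ b)
    (Tσ : Type*) [AddCommGroup Tσ]
    (qT : T →+ Tσ) (hqTsurj : Function.Surjective qT)
    (hqTker : ∀ t : T, qT t = 0 ↔ ∃ s : T, t = s - σT s)
    -- the torsion subgroup of `Λσ`
    (TorΛσ : AddSubgroup Λσ)
    (hTor : ∀ z : Λσ, z ∈ TorΛσ ↔ ∃ n : ℕ, 0 < n ∧ n • z = 0) :
    -- (a)
    ((∃ φ : (Tfix ⧸ T0.addSubgroupOf Tfix) ≃+ TorΛσ,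
        ∀ (x : V) (a : Λ), σV x - x = ι a →
          ∀ hx : p x ∈ Tfix,
            ((φ (QuotientAddGroup.mk (⟨p x, hx⟩ : Tfix)) : Λσ) = qΛ a)) ∧
      Finite (Tfix ⧸ T0.addSubgroupOf Tfix) ∧
      Nat.card (Tfix ⧸ T0.addSubgroupOf Tfix) = Nat.card TorΛσ) ∧
    -- (b)
    ((∀ y : Tσ, ∃ t ∈ T0, qT t = y) ∧
      Finite {t : T // t ∈ T0 ∧ qT t = 0} ∧
      Nat.card {t : T // t ∈ T0 ∧ qT t = 0} =
        (AddSubgroup.map ((QuotientAddGroup.mk' TorΛσ).comp qΛ) Λfix).index) := by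
  obtain ⟨n, b, bΛ, hb⟩ := hlattice
  have hm0 : (m : ℝ) ≠ 0 := Nat.cast_ne_zero.mpr (by omega)
  -- iterates of σV on the lattice
  have hσVk : ∀ (k : ℕ) (a : Λ), (σV ^ k) (ι a) = ι ((⇑σ)^[k] a) := by
    intro k
    induction k with
    | zero => intro a; simp
    | succ k ih =>
      intro a
      rw [pow_succ, Module.End.mul_apply, hσV, ih, Function.iterate_succ_apply]
  have hσVm : ∀ x : V, (σV ^ m) x = x := by
    have hb' : σV ^ m = LinearMap.id := by
      apply b.ext
      intro i
      rw [← hb, hσVk, hσm, hb, LinearMap.id_apply]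
    intro x; rw [hb', LinearMap.id_apply]
  -- reindexing lemma
  have hreindex : ∀ x : V, (∑ k ∈ Finset.range m, (σV ^ k) (σV x)) =
      ∑ k ∈ Finset.range m, (σV ^ k) x := by
    intro x
    obtain ⟨m', rfl⟩ : ∃ m', m = m' + 1 := ⟨m - 1, by omega⟩
    have h1 : ∀ k : ℕ, (σV ^ k) (σV x) = (σV ^ (k + 1)) x := fun k => by
      rw [pow_succ, Module.End.mul_apply]
    calc (∑ k ∈ Finset.range (m' + 1), (σV ^ k) (σV x))
        = ∑ k ∈ Finset.range (m' + 1), (σV ^ (k + 1)) x := by simp_rw [h1]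
      _ = (∑ k ∈ Finset.range m', (σV ^ (k + 1)) x) + (σV ^ (m' + 1)) x :=
          Finset.sum_range_succ _ _
      _ = (∑ k ∈ Finset.range m', (σV ^ (k + 1)) x) + (σV ^ (0:ℕ)) x := by
          rw [hσVm]; simp
      _ = ∑ k ∈ Finset.range (m' + 1), (σV ^ k) x := (Finset.sum_range_succ' (fun k => (σV ^ k) x) m').symm
  -- the averaging projector
  set πL : V →ₗ[ℝ] V := (m : ℝ)⁻¹ • (∑ k ∈ Finset.range m, σV ^ k) with hπLdef
  have hπdef : ∀ x, πL x = (m : ℝ)⁻¹ • ∑ k ∈ Finset.range m, (σV ^ k) x := by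
    intro x; simp [hπLdef, LinearMap.sum_apply]
  have hπσ : ∀ x, πL (σV x) = πL x := fun x => by rw [hπdef, hπdef, hreindex]
  have hσπ : ∀ x, σV (πL x) = πL x := by
    intro x
    have h2 : ∀ k : ℕ, σV ((σV ^ k) x) = (σV ^ k) (σV x) := fun k => by
      rw [← Module.End.mul_apply, ← pow_succ', pow_succ, Module.End.mul_apply]
    rw [hπdef, map_smul, map_sum]
    simp_rw [h2]
    rw [hreindex, ← hπdef]
  have hπfix : ∀ x, σV x = x → πL x = x := by
    intro x hx
    have hk : ∀ k : ℕ, (σV ^ k) x = x := by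
      intro k; induction k with
      | zero => simp
      | succ k ih => rw [pow_succ, Module.End.mul_apply, hx, ih]
    rw [hπdef]
    simp only [hk, Finset.sum_const, Finset.card_range]
    rw [← Nat.cast_smul_eq_nsmul ℝ, smul_smul, inv_mul_cancel₀ hm0, one_smul]
  have hπmul : ∀ x, (m : ℝ) • πL x = ∑ k ∈ Finset.range m, (σV ^ k) x := by
    intro x; rw [hπdef, smul_smul, mul_inv_cancel₀ hm0, one_smul]
  -- the norm map on Λ
  set Nf : Λ → Λ := fun a => ∑ k ∈ Finset.range m, (⇑σ)^[k] a with hNfdef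
  have hιN : ∀ a, ι (Nf a) = (m : ℝ) • πL (ι a) := by
    intro a
    rw [hπmul, hNfdef, map_sum]
    exact Finset.sum_congr rfl fun k _ => (hσVk k a).symm
  have hNfix : ∀ a, Nf a ∈ Λfix := by
    intro a
    rw [hΛfix]
    have h1 : σ (Nf a) = ∑ k ∈ Finset.range m, (⇑σ)^[k] (σ a) := by
      rw [hNfdef, map_sum]
      exact Finset.sum_congr rfl fun k _ => by
        rw [← Function.iterate_succ_apply' σ, Function.iterate_succ_apply]
    have h2 : ι (∑ k ∈ Finset.range m, (⇑σ)^[k] (σ a)) = ι (Nf a) := by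
      rw [map_sum, hNfdef, map_sum]
      calc (∑ k ∈ Finset.range m, ι ((⇑σ)^[k] (σ a)))
          = ∑ k ∈ Finset.range m, (σV ^ k) (σV (ι a)) := by
            exact Finset.sum_congr rfl fun k _ => by rw [hσV, hσVk]
        _ = ∑ k ∈ Finset.range m, (σV ^ k) (ι a) := hreindex _
        _ = ∑ k ∈ Finset.range m, ι ((⇑σ)^[k] a) :=
            Finset.sum_congr rfl fun k _ => (hσVk k a)
    rw [h1, hι h2]
  -- facts about qΛ
  have hqσ : ∀ c, qΛ (σ c) = qΛ c := by
    intro c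
    have h0 : qΛ (c - σ c) = 0 := (hqΛker _).mpr ⟨c, rfl⟩
    rw [map_sub] at h0
    exact (sub_eq_zero.mp h0).symm
  have hqk : ∀ (k : ℕ) (c : Λ), qΛ ((⇑σ)^[k] c) = qΛ c := by
    intro k
    induction k with
    | zero => intro c; simp
    | succ k ih => intro c; rw [Function.iterate_succ_apply' σ, hqσ, ih]
  have hqN : ∀ a, qΛ (Nf a) = m • qΛ a := by
    intro a
    rw [hNfdef, map_sum]
    simp only [hqk]
    rw [Finset.sum_const, Finset.card_range]
  -- telescoping
  have htel : ∀ x : V, ∃ w : V, x - πL x = w - σV w := by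
    intro x
    refine ⟨(m : ℝ)⁻¹ • ∑ k ∈ Finset.range m, ∑ j ∈ Finset.range k, (σV ^ j) x, ?_⟩
    rw [map_smul, ← smul_sub]
    have hS : ((∑ k ∈ Finset.range m, ∑ j ∈ Finset.range k, (σV ^ j) x) -
        σV (∑ k ∈ Finset.range m, ∑ j ∈ Finset.range k, (σV ^ j) x)) =
        (m : ℝ) • x - ∑ k ∈ Finset.range m, (σV ^ k) x := by
      rw [map_sum, ← Finset.sum_sub_distrib]
      have h3 : ∀ k ∈ Finset.range m,
          ((∑ j ∈ Finset.range k, (σV ^ j) x) - σV (∑ j ∈ Finset.range k, (σV ^ j) x)) =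
          x - (σV ^ k) x := by
        intro k _
        rw [map_sum, ← Finset.sum_sub_distrib]
        have h4 : ∀ j ∈ Finset.range k, ((σV ^ j) x - σV ((σV ^ j) x)) =
            (σV ^ j) x - (σV ^ (j + 1)) x := by
          intro j _
          rw [← Module.End.mul_apply, ← pow_succ']
        rw [Finset.sum_congr rfl h4, Finset.sum_range_sub' (fun j => (σV ^ j) x) k]
        simp
      rw [Finset.sum_congr rfl h3, Finset.sum_sub_distrib, Finset.sum_const,
        Finset.card_range, ← Nat.cast_smul_eq_nsmul ℝ]
    rw [hS, smul_sub, smul_smul, inv_mul_cancel₀ hm0, one_smul, ← hπdef]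
  -- facts about qT
  have hqTπ : ∀ x : V, qT (p (πL x)) = qT (p x) := by
    intro x
    obtain ⟨w, hw⟩ := htel x
    have h5 : qT (p x - p (πL x)) = 0 := by
      rw [← map_sub, hw, map_sub, ← hσT]
      exact (hqTker _).mpr ⟨p w, rfl⟩
    rw [map_sub] at h5
    exact (sub_eq_zero.mp h5).symm
  -- ### Part (a): the connecting homomorphism
  have hexists : ∀ t : Tfix, ∃ (x : V) (a : Λ), p x = (t : T) ∧ σV x - x = ι a := by
    intro t
    obtain ⟨x, hx⟩ := hpsurj (t : T)
    have h0 : p (σV x - x) = 0 := by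
      rw [map_sub, ← hσT, hx, (hTfix (t : T)).mp t.2, sub_self]
    obtain ⟨a, ha⟩ := (hpker _).mp h0
    exact ⟨x, a, hx, ha⟩
  choose X A hX hA using hexists
  -- well-definedness of the connecting map
  have hwd : ∀ (t : Tfix) (x : V) (a : Λ), p x = (t : T) → σV x - x = ι a →
      qΛ a = qΛ (A t) := by
    intro t x a hx ha
    have h0 : p (x - X t) = 0 := by rw [map_sub, hx, hX, sub_self]
    obtain ⟨c, hc⟩ := (hpker _).mp h0
    have h1 : ι (a - A t) = ι (σ c - c) := by
      rw [map_sub, map_sub, ← ha, ← hA, ← hσV, ← hc, map_sub]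
      abel
    have h2 : a - A t = σ c - c := hι h1
    have h3 : qΛ (a - A t) = 0 := by
      rw [h2, map_sub, hqσ, sub_self]
    rw [map_sub] at h3
    exact sub_eq_zero.mp h3
  -- the connecting homomorphism δ : Tfix →+ Λσ
  set δ : Tfix →+ Λσ := AddMonoidHom.mk' (fun t => qΛ (A t)) (by
    intro t s
    have hx : p (X t + X s) = ((t + s : Tfix) : T) := by
      rw [map_add, hX, hX]; rfl
    have ha : σV (X t + X s) - (X t + X s) = ι (A t + A s) := by
      rw [map_add, map_add]
      have := hA t; have := hA s
      rw [← hA t, ← hA s]; abel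
    have := hwd (t + s) _ _ hx ha
    rw [map_add] at this
    exact this.symm) with hδdef
  have hδval : ∀ t : Tfix, δ t = qΛ (A t) := fun t => rfl
  -- δ lands in the torsion subgroup
  have hδtor : ∀ t : Tfix, m • δ t = 0 := by
    intro t
    have h1 : ι (Nf (A t)) = 0 := by
      rw [hιN, ← hA t, map_sub, hπσ, sub_self, smul_zero]
    have h2 : Nf (A t) = 0 := hι (by rw [h1, map_zero])
    rw [hδval, ← hqN, h2, map_zero]
  have hδmem : ∀ t : Tfix, δ t ∈ TorΛσ := fun t =>
    (hTor _).mpr ⟨m, by omega, hδtor t⟩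
  set δ' : Tfix →+ TorΛσ := AddMonoidHom.codRestrict δ TorΛσ hδmem with hδ'def
  have hδ'val : ∀ t : Tfix, (δ' t : Λσ) = qΛ (A t) := fun t => rfl
  -- kernel of δ' is T0
  have hker : T0.addSubgroupOf Tfix = δ'.ker := by
    ext t
    rw [AddSubgroup.mem_addSubgroupOf, AddMonoidHom.mem_ker]
    constructor
    · intro ht
      obtain ⟨x, hfix, hpx⟩ := (hT0 _).mp ht
      have : qΛ (0 : Λ) = qΛ (A t) :=
        hwd t x 0 hpx (by rw [hfix, sub_self, map_zero])
      have h0 : δ t = 0 := by rw [hδval, ← this, map_zero]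
      exact Subtype.ext (by rw [hδ'val, ← hδval, h0]; rfl)
    · intro ht
      have h0 : qΛ (A t) = 0 := by
        rw [← hδ'val, ht]; rfl
      obtain ⟨c, hc⟩ := (hqΛker _).mp h0
      rw [hT0]
      refine ⟨X t + ι c, ?_, ?_⟩
      · rw [map_add, hσV, ← sub_eq_zero]
        have : σV (X t) = X t + ι (A t) := by rw [← hA t]; abel
        rw [this, hc, map_sub]
        abel
      · rw [map_add, hX]
        have : p (ι c) = 0 := (hpker _).mpr ⟨c, rfl⟩
        rw [this, add_zero]
  -- δ' is surjective
  have hδsurj : Function.Surjective δ' := by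
    intro z
    obtain ⟨nz, hnz, hnz0⟩ := (hTor (z : Λσ)).mp z.2
    obtain ⟨a, ha⟩ := hqΛsurj (z : Λσ)
    have hnR : (nz : ℝ) ≠ 0 := Nat.cast_ne_zero.mpr (by omega)
    have h0 : qΛ (nz • a) = 0 := by rw [map_nsmul, ha, hnz0]
    obtain ⟨c, hc⟩ := (hqΛker _).mp h0
    set x : V := -((nz : ℝ)⁻¹ • ι c) with hxdef
    have hax : σV x - x = ι a := by
      rw [hxdef, map_neg, map_smul, hσV, ← sub_eq_zero]
      have h1 : ι (σ c) - ι c = -ι (nz • a) := by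
        rw [← map_sub, ← map_neg, hc]; congr 1; abel
      have h2 : ι (nz • a) = (nz : ℝ) • ι a := by
        rw [map_nsmul, Nat.cast_smul_eq_nsmul]
      have : -((nz:ℝ)⁻¹ • ι (σ c)) - -((nz:ℝ)⁻¹ • ι c) - ι a
          = -((nz:ℝ)⁻¹ • (ι (σ c) - ι c)) - ι a := by
        rw [smul_sub]; abel
      rw [this, h1, h2, smul_neg, smul_smul, inv_mul_cancel₀ hnR, one_smul]
      abel
    have hmem : p x ∈ Tfix := by
      rw [hTfix, hσT, ← sub_eq_zero, ← map_sub, hax]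
      exact (hpker _).mpr ⟨a, rfl⟩
    refine ⟨⟨p x, hmem⟩, ?_⟩
    apply Subtype.ext
    rw [hδ'val, ← hwd ⟨p x, hmem⟩ x a rfl hax, ha]
  -- the isomorphism φ
  set φ : (Tfix ⧸ T0.addSubgroupOf Tfix) ≃+ TorΛσ :=
    (QuotientAddGroup.quotientAddEquivOfEq hker).trans
      (QuotientAddGroup.quotientKerEquivOfSurjective δ' hδsurj) with hφdef
  have hφmk : ∀ t : Tfix, φ (QuotientAddGroup.mk t) = δ' t := fun t => rfl
  have hφprop : ∀ (x : V) (a : Λ), σV x - x = ι a →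
      ∀ hx : p x ∈ Tfix, ((φ (QuotientAddGroup.mk (⟨p x, hx⟩ : Tfix)) : Λσ) = qΛ a) := by
    intro x a ha hx
    rw [hφmk, hδ'val, ← hwd ⟨p x, hx⟩ x a rfl ha]
  -- finiteness of TorΛσ
  haveI : Module.Finite ℤ Λσ :=
    Module.Finite.of_surjective qΛ.toIntLinearMap hqΛsurj
  haveI : IsNoetherian ℤ Λσ := isNoetherian_of_isNoetherianRing_of_finite ℤ Λσ
  haveI hFGTor : AddGroup.FG TorΛσ := by
    rw [← Module.Finite.iff_addGroup_fg (G := TorΛσ)]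
    have hfg : (AddSubgroup.toIntSubmodule TorΛσ).FG := IsNoetherian.noetherian _
    exact Module.Finite.iff_fg.mpr hfg
  have hTorFin : Finite TorΛσ := by
    apply AddCommGroup.finite_of_fg_torsion
    intro z
    rw [isOfFinAddOrder_iff_nsmul_eq_zero]
    obtain ⟨nz, hnz, hnz0⟩ := (hTor (z : Λσ)).mp z.2
    exact ⟨nz, hnz, Subtype.ext (by rw [AddSubgroup.coe_nsmul, hnz0]; rfl)⟩
  have hQuotFin : Finite (Tfix ⧸ T0.addSubgroupOf Tfix) := Finite.of_equiv _ φ.toEquiv.symm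
  have hcard_a : Nat.card (Tfix ⧸ T0.addSubgroupOf Tfix) = Nat.card TorΛσ :=
    Nat.card_congr φ.toEquiv
  -- ### Part (b)
  -- surjectivity of T0 → Tσ
  have hbsurj : ∀ y : Tσ, ∃ t ∈ T0, qT t = y := by
    intro y
    obtain ⟨t, ht⟩ := hqTsurj y
    obtain ⟨x, hx⟩ := hpsurj t
    exact ⟨p (πL x), (hT0 _).mpr ⟨πL x, hσπ x, rfl⟩, by rw [hqTπ, hx, ht]⟩
  -- the target quotient
  set ρ : Λσ →+ Λσ ⧸ TorΛσ := QuotientAddGroup.mk' TorΛσ with hρdef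
  set S : AddSubgroup (Λσ ⧸ TorΛσ) := AddSubgroup.map (ρ.comp qΛ) Λfix with hSdef
  set h : Λ →+ (Λσ ⧸ TorΛσ) ⧸ S := (QuotientAddGroup.mk' S).comp (ρ.comp qΛ) with hhdef
  have hval : ∀ a : Λ, h a = QuotientAddGroup.mk (ρ (qΛ a)) := fun a => rfl
  have hsurj : Function.Surjective h := by
    intro y
    obtain ⟨u, hu⟩ := QuotientAddGroup.mk'_surjective S y
    obtain ⟨v, hv⟩ := QuotientAddGroup.mk'_surjective TorΛσ u
    obtain ⟨a, ha⟩ := hqΛsurj v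
    exact ⟨a, by rw [hval, ha, hρdef, hv, ← hu]; rfl⟩
  -- the map g : Λ → T
  set g : Λ → T := fun a => p (πL (ι a)) with hgdef
  have hgsub : ∀ a a', g (a - a') = g a - g a' := by
    intro a a'; rw [hgdef]; simp only [map_sub]
  have hgmem : ∀ a : Λ, g a ∈ T0 ∧ qT (g a) = 0 := by
    intro a
    refine ⟨(hT0 _).mpr ⟨πL (ι a), hσπ _, rfl⟩, ?_⟩
    rw [hgdef]
    have : p (ι a) = 0 := (hpker _).mpr ⟨a, rfl⟩
    rw [hqTπ, this, map_zero]
  -- g hits all of the kernel K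
  have hgsurj : ∀ t : T, t ∈ T0 → qT t = 0 → ∃ a : Λ, g a = t := by
    intro t ht hqt
    obtain ⟨x, hfix, hpx⟩ := (hT0 _).mp ht
    obtain ⟨s, hs⟩ := (hqTker t).mp hqt
    obtain ⟨u, hu⟩ := hpsurj s
    have h0 : p (x - (u - σV u)) = 0 := by
      rw [map_sub, map_sub, ← hσT, hu, hpx, ← hs, sub_self]
    obtain ⟨a, ha⟩ := (hpker _).mp h0
    refine ⟨a, ?_⟩
    have h1 : πL (ι a) = πL x := by
      rw [← ha, map_sub, map_sub, hπσ, sub_self, sub_zero]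
    rw [hgdef]
    simp only
    rw [h1, hπfix x hfix, hpx]
  -- kernels agree
  have hgker : ∀ a : Λ, g a = 0 ↔ h a = 0 := by
    intro a
    constructor
    · intro hga
      obtain ⟨c, hc⟩ := (hpker _).mp hga
      have hcfix : σ c = c := by
        apply hι
        rw [← hσV, ← hc, hσπ, hc]
      have hNa : Nf a = m • c := by
        apply hι
        rw [hιN, hc, map_nsmul, ← Nat.cast_smul_eq_nsmul ℝ]
      have htor : qΛ a - qΛ c ∈ TorΛσ := by
        refine (hTor _).mpr ⟨m, by omega, ?_⟩
        rw [smul_sub, ← hqN, hNa, map_nsmul, sub_self]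
      have hρeq : ρ (qΛ a) = ρ (qΛ c) := by
        rw [← sub_eq_zero, ← map_sub]
        exact (QuotientAddGroup.eq_zero_iff _).mpr htor
      rw [hval, hρeq]
      exact (QuotientAddGroup.eq_zero_iff _).mpr
        ⟨c, (hΛfix c).mpr hcfix, rfl⟩
    · intro hha
      rw [hval] at hha
      obtain ⟨c, hcfix, hceq⟩ := (QuotientAddGroup.eq_zero_iff _).mp hha
      have hρeq : ρ (qΛ (a - c)) = 0 := by
        rw [map_sub, map_sub, ← hceq]
        exact sub_self _
      have htor : qΛ (a - c) ∈ TorΛσ := (QuotientAddGroup.eq_zero_iff _).mp hρeq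
      obtain ⟨nz, hnz, hnz0⟩ := (hTor _).mp htor
      have hq0 : qΛ (nz • (a - c)) = 0 := by rw [map_nsmul, hnz0]
      obtain ⟨d, hd⟩ := (hqΛker _).mp hq0
      have hnR : (nz : ℝ) ≠ 0 := Nat.cast_ne_zero.mpr (by omega)
      have hπ0 : (nz : ℝ) • πL (ι (a - c)) = 0 := by
        rw [Nat.cast_smul_eq_nsmul, ← map_nsmul, ← map_nsmul, hd, map_sub, map_sub,
          ← hσV, hπσ, sub_self]
      have hπ0' : πL (ι (a - c)) = 0 := by
        rcases smul_eq_zero.mp hπ0 with h' | h'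
        · exact absurd h' hnR
        · exact h'
      have hcc : σV (ι c) = ι c := by rw [hσV, (hΛfix c).mp hcfix]
      have : πL (ι a) = ι c := by
        have := hπ0'
        rw [map_sub, map_sub, sub_eq_zero] at this
        rw [this, hπfix _ hcc]
      rw [hgdef]; simp only
      rw [this]
      exact (hpker _).mpr ⟨c, rfl⟩
  have hgiff : ∀ a a' : Λ, g a = g a' ↔ h a = h a' := by
    intro a a'
    rw [← sub_eq_zero (a := g a), ← hgsub, ← sub_eq_zero (a := h a), ← map_sub]
    exact hgker _
  -- the equivalence K ≃ Q
  choose GA hGA using fun k : {t : T // t ∈ T0 ∧ qT t = 0} => hgsurj k.1 k.2.1 k.2.2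
  choose HA hHA using hsurj
  set e : {t : T // t ∈ T0 ∧ qT t = 0} → (Λσ ⧸ TorΛσ) ⧸ S := fun k => h (GA k) with hedef
  set e' : (Λσ ⧸ TorΛσ) ⧸ S → {t : T // t ∈ T0 ∧ qT t = 0} :=
    fun y => ⟨g (HA y), hgmem (HA y)⟩ with he'def
  have hlinv : Function.LeftInverse e' e := by
    intro k
    apply Subtype.ext
    simp only [he'def, hedef]
    have h1 : h (HA (h (GA k))) = h (GA k) := hHA _
    have h2 : g (HA (h (GA k))) = g (GA k) := (hgiff _ _).mpr h1
    rw [h2, hGA]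
  have hrinv : Function.RightInverse e' e := by
    intro y
    simp only [he'def, hedef]
    have h1 : g (GA ⟨g (HA y), hgmem (HA y)⟩) = g (HA y) := hGA _
    have h2 : h (GA ⟨g (HA y), hgmem (HA y)⟩) = h (HA y) := (hgiff _ _).mp h1
    rw [h2, hHA]
  set eqv : {t : T // t ∈ T0 ∧ qT t = 0} ≃ ((Λσ ⧸ TorΛσ) ⧸ S) := ⟨e, e', hlinv, hrinv⟩
  -- finiteness of the quotient
  haveI : AddGroup.FG Λ := Module.Finite.iff_addGroup_fg.mp ‹Module.Finite ℤ Λ›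
  haveI : AddGroup.FG ((Λσ ⧸ TorΛσ) ⧸ S) := AddGroup.fg_of_surjective (f := h) (fun y => ⟨HA y, hHA y⟩)
  have hQfin : Finite ((Λσ ⧸ TorΛσ) ⧸ S) := by
    apply AddCommGroup.finite_of_fg_torsion
    intro y
    rw [isOfFinAddOrder_iff_nsmul_eq_zero]
    refine ⟨m, by omega, ?_⟩
    obtain ⟨a, ha⟩ : ∃ a, h a = y := ⟨HA y, hHA y⟩
    have h1 : m • y = h (m • a) := by rw [← ha, map_nsmul]
    have h2 : h (m • a) = h (Nf a) := by
      rw [hval, hval, map_nsmul, ← hqN]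
    have h3 : h (Nf a) = 0 := by
      rw [hval]
      exact (QuotientAddGroup.eq_zero_iff _).mpr ⟨Nf a, hNfix a, rfl⟩
    rw [h1, h2, h3]
  have hKfin : Finite {t : T // t ∈ T0 ∧ qT t = 0} := Finite.of_equiv _ eqv.symm
  have hcard_b : Nat.card {t : T // t ∈ T0 ∧ qT t = 0} = S.index := by
    rw [AddSubgroup.index_eq_card]
    exact Nat.card_congr eqv
  exact ⟨⟨⟨φ, hφprop⟩, hQuotFin, hcard_a⟩, hbsurj, hKfin, hcard_b⟩
end
end

section
/- Let R be a commutative ring, let F and G be covariant functors from the category of commutative R-algebras to sets, and let φ : F → G be a natural transformation. Assume: (i) G is represented by the polynomial algebra R[x_1, …, x_n], i.e. G is naturally isomorphic to S ↦ Hom_{R-alg}(R[x_1, …, x_n], S); and (ii) for every commutative R-algebra S and every element ξ ∈ G(S), the functor F_{φ,ξ} from commutative S-algebras to sets defined by T ↦ {η ∈ F(T) : φ_T(η) = G(ι_T)(ξ)}, where ι_T : S → T is the structure homomorphism, is represented by the polynomial algebra S[y_1, …, y_m]. Then F is represented by the polynomial algebra R[x_1, …, x_n, y_1, …, y_m]. 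-/
/-!
Let `ξ₀ ∈ G(R[x])` be the universal element of `G`, and let `u ∈ F(R[x][y])` be the universal
element of the fiber functor over `ξ₀`. Then `u` is universal for `F`: an element `η ∈ F(T)`
determines `g : R[x] → T` with `G(g) ξ₀ = φ(η)`, which makes `T` an `R[x]`-algebra with `η` in the
fiber over `ξ₀`; so `η` is the image of `u` under a unique `R[x]`-algebra map `R[x][y] → T`.
Any `R`-algebra map `k` with `F(k) u = η` restricts to `g` on `R[x]` (naturality of `φ`), so it is
this one.
-/

universe u

/-- A (covariant, set-valued) functor on the category of commutative `R`-algebras. -/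
structure AlgebraFunctor (R : Type u) [CommRing R] : Type (u + 1) where
  obj : (S : Type u) → [CommRing S] → [Algebra R S] → Type u
  map : {S T : Type u} → [CommRing S] → [Algebra R S] → [CommRing T] → [Algebra R T] →
    (S →ₐ[R] T) → obj S → obj T
  map_id : ∀ (S : Type u) [CommRing S] [Algebra R S], map (AlgHom.id R S) = id
  map_comp : ∀ {S T U : Type u} [CommRing S] [Algebra R S] [CommRing T] [Algebra R T]
    [CommRing U] [Algebra R U] (f : S →ₐ[R] T) (g : T →ₐ[R] U),
    map (g.comp f) = map g ∘ map f

/-- The functor `F` is represented by the commutative `R`-algebra `A`, i.e. `F` is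
naturally isomorphic to `S ↦ Hom_{R-alg}(A, S)`. -/
def AlgebraFunctor.RepresentedBy {R : Type u} [CommRing R] (F : AlgebraFunctor R)
    (A : Type u) [CommRing A] [Algebra R A] : Prop :=
  ∃ e : (S : Type u) → [CommRing S] → [Algebra R S] → F.obj S ≃ (A →ₐ[R] S),
    ∀ (S T : Type u) [CommRing S] [Algebra R S] [CommRing T] [Algebra R T]
      (f : S →ₐ[R] T) (x : F.obj S), e T (F.map f x) = f.comp (e S x)

namespace AlgebraFunctor

variable {R : Type u} [CommRing R]

def IsUniversal (F : AlgebraFunctor R) (C : Type u) [CommRing C] [Algebra R C] (u : F.obj C) :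
    Prop :=
  ∀ (T : Type u) [CommRing T] [Algebra R T] (η : F.obj T), ∃! f : C →ₐ[R] T, F.map f u = η

theorem map_map (F : AlgebraFunctor R) {S T U : Type u} [CommRing S] [Algebra R S]
    [CommRing T] [Algebra R T] [CommRing U] [Algebra R U] (f : S →ₐ[R] T) (g : T →ₐ[R] U)
    (x : F.obj S) : F.map g (F.map f x) = F.map (g.comp f) x := by
  rw [F.map_comp]
  rfl

theorem RepresentedBy.isUniversal {F : AlgebraFunctor R} {A : Type u} [CommRing A] [Algebra R A]
    {e : (S : Type u) → [CommRing S] → [Algebra R S] → F.obj S ≃ (A →ₐ[R] S)}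
    (he : ∀ (S T : Type u) [CommRing S] [Algebra R S] [CommRing T] [Algebra R T]
      (f : S →ₐ[R] T) (x : F.obj S), e T (F.map f x) = f.comp (e S x)) :
    F.IsUniversal A ((e A).symm (AlgHom.id R A)) := by
  intro T _ _ η
  have map_eq_iff (f : A →ₐ[R] T) : F.map f ((e A).symm (AlgHom.id R A)) = η ↔ f = e T η := by
    rw [← (e T).apply_eq_iff_eq, he, Equiv.apply_symm_apply, AlgHom.comp_id]
  exact ⟨e T η, (map_eq_iff _).2 rfl, fun f hf => (map_eq_iff f).1 hf⟩

theorem representedBy_of_isUniversal {F : AlgebraFunctor R} {C : Type u} [CommRing C]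
    [Algebra R C] {u : F.obj C} (hu : F.IsUniversal C u) : F.RepresentedBy C := by
  have bij (T : Type u) [CommRing T] [Algebra R T] :
      Function.Bijective (fun f : C →ₐ[R] T => F.map f u) :=
    ⟨fun f g hfg => (hu T _).unique hfg rfl, fun η => (hu T η).exists⟩
  refine ⟨fun T _ _ => (Equiv.ofBijective _ (bij T)).symm, fun S T _ _ _ _ f x => ?_⟩
  have map_symm (T : Type u) [CommRing T] [Algebra R T] (η : F.obj T) :
      F.map ((Equiv.ofBijective _ (bij T)).symm η) u = η :=
    Equiv.ofBijective_apply_symm_apply _ (bij T) η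
  apply (bij T).1
  change F.map _ u = F.map _ u
  rw [map_symm, ← map_map, map_symm]

theorem RepresentedBy.of_algEquiv {F : AlgebraFunctor R} {B C : Type u} [CommRing B]
    [Algebra R B] [CommRing C] [Algebra R C] (hB : F.RepresentedBy B) (ψ : C ≃ₐ[R] B) :
    F.RepresentedBy C := by
  obtain ⟨e, he⟩ := hB
  refine ⟨fun S _ _ => (e S).trans (AlgEquiv.arrowCongr ψ.symm AlgEquiv.refl), ?_⟩
  intro S T _ _ _ _ f x
  ext c
  simp only [Equiv.trans_apply, AlgEquiv.arrowCongr_apply, he]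
  rfl

section Fiber

variable {F G : AlgebraFunctor R}
  (φ : (S : Type u) → [CommRing S] → [Algebra R S] → F.obj S → G.obj S)
  {A B : Type u} [CommRing A] [Algebra R A] [CommRing B] [Algebra R B] [Algebra A B]
  [IsScalarTower R A B]

theorem existsUnique_of_fiber_equiv {ξ : G.obj A}
    (e : (T : Type u) → [CommRing T] → [Algebra R T] → [Algebra A T] → [IsScalarTower R A T] →
      {η : F.obj T // φ T η = G.map (IsScalarTower.toAlgHom R A T) ξ} ≃ (B →ₐ[A] T))
    (he : ∀ (T T' : Type u) [CommRing T] [Algebra R T] [Algebra A T] [IsScalarTower R A T]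
      [CommRing T'] [Algebra R T'] [Algebra A T'] [IsScalarTower R A T']
      (f : T →ₐ[A] T') (p : B →ₐ[A] T),
      ((e T').symm (f.comp p)).1 = F.map (f.restrictScalars R) ((e T).symm p).1)
    (T : Type u) [CommRing T] [Algebra R T] [Algebra A T] [IsScalarTower R A T]
    (η : F.obj T) (hη : φ T η = G.map (IsScalarTower.toAlgHom R A T) ξ) :
    ∃! k : B →ₐ[A] T, F.map (k.restrictScalars R) ((e B).symm (AlgHom.id A B)).1 = η := by
  have map_eq (k : B →ₐ[A] T) :
      F.map (k.restrictScalars R) ((e B).symm (AlgHom.id A B)).1 = ((e T).symm k).1 := by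
    rw [← he, AlgHom.comp_id]
  refine ⟨e T ⟨η, hη⟩, ?_, fun k hk => ?_⟩
  · exact (map_eq _).trans (by rw [Equiv.symm_apply_apply])
  · rw [← (e T).apply_symm_apply k]
    exact congrArg (e T) (Subtype.ext ((map_eq k).symm.trans hk))

theorem isUniversal_of_isUniversal_fiber (hφ : ∀ (S T : Type u) [CommRing S] [Algebra R S]
      [CommRing T] [Algebra R T] (f : S →ₐ[R] T) (x : F.obj S), φ T (F.map f x) = G.map f (φ S x))
    {ξ : G.obj A} (hξ : G.IsUniversal A ξ) {u : F.obj B}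
    (hu_mem : φ B u = G.map (IsScalarTower.toAlgHom R A B) ξ)
    (hu : ∀ (T : Type u) [CommRing T] [Algebra R T] [Algebra A T] [IsScalarTower R A T]
      (η : F.obj T), φ T η = G.map (IsScalarTower.toAlgHom R A T) ξ →
        ∃! k : B →ₐ[A] T, F.map (k.restrictScalars R) u = η) :
    F.IsUniversal B u := by
  intro T _ _ η
  obtain ⟨g, hg, hg_unique⟩ := hξ T (φ T η)
  let _ : Algebra A T := g.toAlgebra
  have : IsScalarTower R A T :=
    .of_algebraMap_eq' (RingHom.ext fun r => (g.commutes r).symm)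
  have toAlgHom_eq : IsScalarTower.toAlgHom R A T = g := AlgHom.ext fun _ => rfl
  obtain ⟨k, hk, hk_unique⟩ := hu T η (by rw [toAlgHom_eq, hg])
  refine ⟨k.restrictScalars R, hk, fun k' hk' => ?_⟩
  -- by naturality of `φ`, `k'` restricts to `g` on `A`, i.e. it is `A`-linear
  have hk'_comp : k'.comp (IsScalarTower.toAlgHom R A B) = g := by
    refine hg_unique _ ?_
    change G.map _ ξ = φ T η
    rw [← map_map, ← hu_mem, ← hφ]
    exact congrArg (φ T) hk'
  let kA : B →ₐ[A] T := { k'.toRingHom with commutes' := AlgHom.congr_fun hk'_comp }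
  exact congrArg (AlgHom.restrictScalars R) (hk_unique kA hk')

end Fiber

end AlgebraFunctor

/-- Let `φ : F → G` be a natural transformation of set-valued
functors on commutative `R`-algebras such that (i) `G` is represented by the
polynomial algebra `R[x_1, …, x_n]`, and (ii) for every commutative `R`-algebra
`S` and every `ξ ∈ G(S)`, the fiber functor `F_{φ,ξ} : T ↦ {η ∈ F(T) : φ_T(η) =
G(ι_T)(ξ)}` on commutative `S`-algebras is represented by the polynomial algebra
`S[y_1, …, y_m]`.  Then `F` is represented by `R[x_1, …, x_n, y_1, …, y_m]`. -/
theorem statement_19 (R : Type u) [CommRing R] (F G : AlgebraFunctor R)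
    -- `φ` is a natural transformation `F → G`
    (φ : (S : Type u) → [CommRing S] → [Algebra R S] → F.obj S → G.obj S)
    (hφ : ∀ (S T : Type u) [CommRing S] [Algebra R S] [CommRing T] [Algebra R T]
      (f : S →ₐ[R] T) (x : F.obj S), φ T (F.map f x) = G.map f (φ S x))
    (n m : ℕ)
    -- (i) `G` is represented by `R[x_1, …, x_n]`
    (hG : G.RepresentedBy (MvPolynomial (Fin n) R))
    -- (ii) each fiber functor `F_{φ,ξ}` is represented by `S[y_1, …, y_m]`
    (hii : ∀ (S : Type u) [CommRing S] [Algebra R S] (ξ : G.obj S),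
      ∃ e : (T : Type u) → [CommRing T] → [Algebra R T] → [Algebra S T] →
          [IsScalarTower R S T] →
          {η : F.obj T // φ T η = G.map (IsScalarTower.toAlgHom R S T) ξ} ≃
            (MvPolynomial (Fin m) S →ₐ[S] T),
        ∀ (T T' : Type u) [CommRing T] [Algebra R T] [Algebra S T] [IsScalarTower R S T]
          [CommRing T'] [Algebra R T'] [Algebra S T'] [IsScalarTower R S T']
          (f : T →ₐ[S] T') (p : MvPolynomial (Fin m) S →ₐ[S] T),
          ((e T').symm (f.comp p)).1 =
            F.map (AlgHom.restrictScalars R f) (((e T).symm p).1)) :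
    F.RepresentedBy (MvPolynomial (Fin (n + m)) R) := by
  obtain ⟨eG, heG⟩ := hG
  set A := MvPolynomial (Fin n) R
  set B := MvPolynomial (Fin m) A
  obtain ⟨e, he⟩ := hii A ((eG A).symm (AlgHom.id R A))
  have hF : F.IsUniversal B ((e B).symm (AlgHom.id A B)).1 :=
    AlgebraFunctor.isUniversal_of_isUniversal_fiber φ hφ
      (AlgebraFunctor.RepresentedBy.isUniversal heG) ((e B).symm (AlgHom.id A B)).2
      (AlgebraFunctor.existsUnique_of_fiber_equiv φ e he)
  exact (AlgebraFunctor.representedBy_of_isUniversal hF).of_algEquiv <|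
    (MvPolynomial.renameEquiv R (finSumFinEquiv.symm.trans (Equiv.sumComm _ _))).trans
      (MvPolynomial.sumAlgEquiv R (Fin m) (Fin n))
end
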